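/- arXiv:2311.18143 — 8 statements merged into one kernel-verified Lean document; each statement's English description precedes it below -/
import Mathlib

section
/- Let M be a real symmetric matrix indexed by a finite set X and let K ⊆ X be a nonempty subset. Then M exhibits pretty good fractional revival with respect to K if and only if the partition P_K = (Π_0, Π_1, …, Π_s) is non-degenerate, i.e., there exists (ρ_1,…,ρ_s) ∈ ℝ^s, not constant modulo 1, such that for every ε > 0 there is t > 0 with ‖t·θ_j − ρ_r‖ < ε for all 1 ≤ r ≤ s and all j ∈ Π_r (here ‖x‖ denotes the distance from x to the nearest integer). -/
/-!
Write `M = ∑ θ_j E_j` and `e(x) = exp (2πix)`. Then `exp (2πitM) = ∑ e(tθ_j) E_j`, so the `K × K`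
blocks of `exp (itM)` are the compressions `Vᴴ U(y) V`, by the inclusion `V : ℂ^K → ℂ^X`, of the
unitaries `U(y) = ∑ e(y_j) E_j` at the points `y = tθ mod 1` of the Kronecker flow on the torus
`(ℝ/ℤ)^d`. The torus is compact, so the closure of these blocks consists of the compressions at the
points of the orbit closure. A compression `Vᴴ U V` of a unitary is unitary iff `U` commutes with
`D_K = V Vᴴ`; for `U = U(y)` this means `y_a = y_b` whenever `E_a D_K E_b ≠ 0`, i.e. `y` is
constant on every class `Π_r`. The values of `y` on the classes are then eigenvalues of the
compression, which is scalar if they all agree. So PGFR holds iff the orbit closure contains a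
point taking values `ρ_r` on the classes `Π_r` that are not all equal; this is the approximation
condition in the theorem.
-/

open Matrix Set

/-- Distance from a real number to the nearest integer. -/
noncomputable def znorm (x : ℝ) : ℝ := |x - round x|

/-- The `K × K` submatrix of `exp(i t M)` for a real matrix `M`. -/
noncomputable def subExpUnitary {X : Type*} [Fintype X] [DecidableEq X]
    (M : Matrix X X ℝ) (K : Set X) (t : ℝ) : Matrix K K ℂ :=
  (NormedSpace.exp ((Complex.I * (t : ℂ)) • M.map (Complex.ofReal))).submatrix
    (fun k : K => (k : X)) (fun k : K => (k : X))

/-- `M` exhibits pretty good fractional revival with respect to `K`: the closure of the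
family of `K × K` submatrices of `exp(itM)`, `t ≥ 0`, contains a unitary matrix with at
least two distinct eigenvalues. -/
noncomputable def PGFR {X : Type*} [Fintype X] [DecidableEq X]
    (M : Matrix X X ℝ) (K : Set X) [DecidablePred (· ∈ K)] : Prop :=
  ∃ H ∈ closure {A : Matrix K K ℂ | ∃ t : ℝ, 0 ≤ t ∧ A = subExpUnitary M K t},
    H ∈ Matrix.unitaryGroup K ℂ ∧
    ∃ μ₁ ∈ spectrum ℂ H, ∃ μ₂ ∈ spectrum ℂ H, μ₁ ≠ μ₂


namespace Matrix

section Compression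

variable {𝕜 m n : Type*} [RCLike 𝕜] [Fintype n]

open scoped ComplexOrder in
theorem conjTranspose_mul_mul_eq_zero_iff {P : Matrix n n 𝕜} (hP : IsStarProjection P)
    (V : Matrix n m 𝕜) : Vᴴ * P * V = 0 ↔ P * V = 0 := by
  have h : Vᴴ * P * V = (P * V)ᴴ * (P * V) := by
    rw [conjTranspose_mul, ← star_eq_conjTranspose P, hP.isSelfAdjoint.star_eq,
      Matrix.mul_assoc, Matrix.mul_assoc, ← Matrix.mul_assoc P P, hP.isIdempotentElem.eq]
  rw [h, conjTranspose_mul_self_eq_zero]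

variable [Fintype m] [DecidableEq m] [DecidableEq n]

open scoped ComplexOrder in
theorem mul_eq_of_conjTranspose_mul_mul_mem_unitaryGroup {V : Matrix n m 𝕜} (hV : Vᴴ * V = 1)
    {U : Matrix n n 𝕜} (hU : Uᴴ * U = 1) (h : (Vᴴ * U * V)ᴴ * (Vᴴ * U * V) = 1) :
    U * V = V * Vᴴ * U * V := by
  -- `w = (1 - V Vᴴ) U V` has `wᴴ w = Vᴴ Uᴴ U V - (Vᴴ U V)ᴴ (Vᴴ U V) = 0`
  have hU' : Uᴴ * (U * V) = V := by rw [← Matrix.mul_assoc, hU, Matrix.one_mul]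
  have hV' : Vᴴ * (V * (Vᴴ * (U * V))) = Vᴴ * (U * V) := by
    rw [← Matrix.mul_assoc, hV, Matrix.one_mul]
  simp only [conjTranspose_mul, conjTranspose_conjTranspose, Matrix.mul_assoc] at h
  rw [← sub_eq_zero, ← conjTranspose_mul_self_eq_zero]
  simp only [conjTranspose_sub, conjTranspose_mul, conjTranspose_conjTranspose, Matrix.mul_sub,
    Matrix.sub_mul, Matrix.mul_assoc, hU', hV', h, hV]
  abel

theorem conjTranspose_mul_mul_mem_unitaryGroup_iff {V : Matrix n m 𝕜} (hV : Vᴴ * V = 1)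
    {U : Matrix n n 𝕜} (hU : U ∈ unitaryGroup n 𝕜) :
    Vᴴ * U * V ∈ unitaryGroup m 𝕜 ↔ Commute U (V * Vᴴ) := by
  have hU₁ : Uᴴ * U = 1 := mem_unitaryGroup_iff'.mp hU
  have hU₂ : U * Uᴴ = 1 := mem_unitaryGroup_iff.mp hU
  rw [mem_unitaryGroup_iff', star_eq_conjTranspose]
  constructor
  · intro h
    have hleft : U * V = V * Vᴴ * U * V :=
      mul_eq_of_conjTranspose_mul_mul_mem_unitaryGroup hV hU₁ h
    have hright : Uᴴ * V = V * Vᴴ * Uᴴ * V := by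
      refine mul_eq_of_conjTranspose_mul_mul_mem_unitaryGroup hV
        (by rwa [conjTranspose_conjTranspose]) ?_
      have h' : Vᴴ * Uᴴ * V = (Vᴴ * U * V)ᴴ := by
        simp only [conjTranspose_mul, conjTranspose_conjTranspose, Matrix.mul_assoc]
      rw [h', conjTranspose_conjTranspose]
      exact mul_eq_one_comm.mp h
    have hright' : Vᴴ * U = Vᴴ * U * V * Vᴴ := by
      simpa only [conjTranspose_mul, conjTranspose_conjTranspose, Matrix.mul_assoc]
        using congrArg conjTranspose hright
    calc U * (V * Vᴴ) = V * (Vᴴ * U * V * Vᴴ) := by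
          rw [← Matrix.mul_assoc, hleft]; simp only [Matrix.mul_assoc]
      _ = V * Vᴴ * U := by rw [← hright', Matrix.mul_assoc]
  · intro h
    calc (Vᴴ * U * V)ᴴ * (Vᴴ * U * V) = Vᴴ * Uᴴ * (V * Vᴴ * U) * V := by
          simp only [conjTranspose_mul, conjTranspose_conjTranspose, Matrix.mul_assoc]
      _ = 1 := by
          rw [← h.eq]
          simp only [Matrix.mul_assoc]
          rw [← Matrix.mul_assoc Uᴴ, hU₁, Matrix.one_mul, ← Matrix.mul_assoc Vᴴ, hV, Matrix.one_mul]

end Compression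

theorem map_ofReal_ne_zero_iff {m n : Type*} {A : Matrix m n ℝ} :
    A.map Complex.ofReal ≠ 0 ↔ A ≠ 0 :=
  (map_injective Complex.ofReal_injective).ne_iff' (Matrix.map_zero _ Complex.ofReal_zero)

end Matrix

section Inclusion

variable {X : Type*} [Fintype X] [DecidableEq X]

def inclusionMatrix (α : Type*) [Semiring α] (K : Set X) : Matrix X K α :=
  (1 : Matrix X X α).submatrix id (↑)

variable (α : Type*) [Semiring α] [StarRing α] (K : Set X)

theorem conjTranspose_inclusionMatrix_mul_self :
    (inclusionMatrix α K)ᴴ * inclusionMatrix α K = 1 := by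
  ext i j
  simp [inclusionMatrix, mul_apply, one_apply, Subtype.ext_iff]

theorem conjTranspose_inclusionMatrix_mul_mul (A : Matrix X X α) :
    (inclusionMatrix α K)ᴴ * A * inclusionMatrix α K = A.submatrix Subtype.val Subtype.val := by
  ext i j
  simp [inclusionMatrix, mul_apply, one_apply]

theorem inclusionMatrix_mul_conjTranspose [DecidablePred (· ∈ K)] :
    inclusionMatrix α K * (inclusionMatrix α K)ᴴ =
      Matrix.diagonal fun x => if x ∈ K then 1 else 0 := by
  ext x y
  rw [mul_apply, Matrix.diagonal_apply]
  by_cases hx : x ∈ K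
  · rw [Fintype.sum_eq_single ⟨x, hx⟩ fun k hk => ?_]
    · by_cases hxy : x = y
      · subst hxy; simp [inclusionMatrix, hx, one_apply]
      · simp [inclusionMatrix, one_apply, hxy, Ne.symm hxy]
    · simp [inclusionMatrix, one_apply, Subtype.ext_iff.not.mp hk, Ne.symm]
  · refine (Finset.sum_eq_zero fun k _ => ?_).trans (by simp [hx])
    have : x ≠ k := fun h => hx (h ▸ k.2)
    simp [inclusionMatrix, one_apply, this]

theorem map_ofReal_mul_inclusionMatrix_mul_ne_zero_iff [DecidablePred (· ∈ K)]
    (A B : Matrix X X ℝ) :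
    A.map Complex.ofReal * (inclusionMatrix ℂ K * (inclusionMatrix ℂ K)ᴴ) *
        B.map Complex.ofReal ≠ 0 ↔
      A * Matrix.diagonal (fun x => if x ∈ K then (1 : ℝ) else 0) * B ≠ 0 := by
  have hmul : ∀ A B : Matrix X X ℝ,
      (A * B).map Complex.ofReal = A.map Complex.ofReal * B.map Complex.ofReal :=
    fun A B => Matrix.map_mul (f := Complex.ofRealHom)
  have hD : inclusionMatrix ℂ K * (inclusionMatrix ℂ K)ᴴ =
      (Matrix.diagonal fun x => if x ∈ K then (1 : ℝ) else 0).map Complex.ofReal := by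
    rw [inclusionMatrix_mul_conjTranspose, diagonal_map Complex.ofReal_zero]
    congr 1
    funext x
    split_ifs <;> simp
  rw [hD, ← Matrix.map_ofReal_ne_zero_iff, hmul, hmul]

theorem conjTranspose_inclusionMatrix_mul_map_ofReal_mul_ne_zero_iff (A : Matrix X X ℝ) :
    (inclusionMatrix ℂ K)ᴴ * A.map Complex.ofReal * inclusionMatrix ℂ K ≠ 0 ↔
      A.submatrix ((↑) : K → X) ((↑) : K → X) ≠ 0 := by
  rw [conjTranspose_inclusionMatrix_mul_mul, submatrix_map]
  exact Matrix.map_ofReal_ne_zero_iff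

end Inclusion

theorem spectrum.mem_of_mul_eq_smul {𝕜 A : Type*} [Field 𝕜] [Ring A] [Algebra 𝕜 A] {a b : A}
    {μ : 𝕜} (hb : b ≠ 0) (h : a * b = μ • b) : μ ∈ spectrum 𝕜 a := by
  refine spectrum.mem_iff.mpr fun hu => hb (hu.mul_right_eq_zero.mp ?_)
  rw [sub_mul, Algebra.algebraMap_eq_smul_one, smul_mul_assoc, one_mul, h, sub_self]

theorem spectrum.algebraMap_subset_singleton {𝕜 A : Type*} [Field 𝕜] [Ring A] [Algebra 𝕜 A]
    (k : 𝕜) : spectrum 𝕜 (algebraMap 𝕜 A k) ⊆ {k} := by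
  rcases subsingleton_or_nontrivial A with _ | _
  · simp [spectrum.of_subsingleton]
  · rw [spectrum.scalar_eq]

theorem Circle.star_coe_mul_self (z : Circle) : star (z : ℂ) * z = 1 := by
  rw [Complex.star_def, ← Circle.coe_inv_eq_conj, ← Circle.coe_mul, inv_mul_cancel, Circle.coe_one]

structure IsSpectralResolution {ι n : Type*} [Fintype ι] [Fintype n] [DecidableEq n]
    (F : ι → Matrix n n ℂ) : Prop where
  isHermitian : ∀ i, (F i).IsHermitian
  mul_self : ∀ i, F i * F i = F i
  mul_eq_zero : Pairwise fun i j => F i * F j = 0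
  sum_eq_one : ∑ i, F i = 1

theorem isSpectralResolution_map_ofReal {ι n : Type*} [Fintype ι] [Fintype n] [DecidableEq n]
    {E : ι → Matrix n n ℝ} (hsymm : ∀ i, (E i).IsSymm) (hidem : ∀ i, E i * E i = E i)
    (horth : Pairwise fun i j => E i * E j = 0) (hsum : ∑ i, E i = 1) :
    IsSpectralResolution fun i => (E i).map Complex.ofReal := by
  let f : Matrix n n ℝ →+* Matrix n n ℂ := Complex.ofRealHom.mapMatrix
  refine ⟨fun i => ?_, fun i => ?_, fun i j hij => ?_, ?_⟩
  · ext a b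
    simpa [conjTranspose_apply] using congrFun (congrFun (hsymm i) a) b
  · exact (map_mul f _ _).symm.trans (congrArg f (hidem i))
  · exact (map_mul f _ _).symm.trans ((congrArg f (horth hij)).trans (map_zero f))
  · exact (map_sum f _ _).symm.trans ((congrArg f hsum).trans (map_one f))

namespace IsSpectralResolution

variable {ι m n : Type*} [Fintype ι] [Fintype n] [DecidableEq n]
variable {F : ι → Matrix n n ℂ} (hF : IsSpectralResolution F)
include hF

theorem isStarProjection (i : ι) : IsStarProjection (F i) :=
  isStarProjection_iff'.mpr ⟨hF.mul_self i, hF.isHermitian i⟩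

theorem mul_sum_smul (c : ι → ℂ) (i : ι) : F i * ∑ j, c j • F j = c i • F i := by
  rw [Finset.mul_sum, Finset.sum_eq_single i (fun j _ hji => by
    rw [mul_smul_comm, hF.mul_eq_zero hji.symm, smul_zero]) (by simp), mul_smul_comm, hF.mul_self]

theorem sum_smul_mul (c : ι → ℂ) (i : ι) : (∑ j, c j • F j) * F i = c i • F i := by
  rw [Finset.sum_mul, Finset.sum_eq_single i (fun j _ hji => by
    rw [smul_mul_assoc, hF.mul_eq_zero hji, smul_zero]) (by simp), smul_mul_assoc, hF.mul_self]

theorem eq_sum_sum_mul_mul (A : Matrix n n ℂ) : A = ∑ a, ∑ b, F a * A * F b := by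
  conv_lhs => rw [← Matrix.one_mul A, ← Matrix.mul_one (1 * A), ← hF.sum_eq_one]
  simp only [Finset.sum_mul, Finset.mul_sum]
  exact Finset.sum_comm

noncomputable def toStarAlgHom : (ι → ℂ) →⋆ₐ[ℂ] Matrix n n ℂ where
  toFun c := ∑ i, c i • F i
  map_one' := by simpa using hF.sum_eq_one
  map_mul' c c' := by
    simp only [Finset.sum_mul, smul_mul_assoc, hF.mul_sum_smul, smul_smul, Pi.mul_apply]
  map_zero' := by simp
  map_add' c c' := by simp [add_smul, Finset.sum_add_distrib]
  commutes' z := by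
    simp [Algebra.algebraMap_eq_smul_one, ← Finset.smul_sum, hF.sum_eq_one]
  map_star' c := by
    simp [Matrix.star_eq_conjTranspose, (hF.isHermitian _).eq]

theorem toStarAlgHom_apply (c : ι → ℂ) : hF.toStarAlgHom c = ∑ i, c i • F i := rfl

theorem continuous_toStarAlgHom : Continuous hF.toStarAlgHom := by
  simp_rw [funext hF.toStarAlgHom_apply]
  fun_prop

theorem exp_toStarAlgHom (c : ι → ℂ) :
    NormedSpace.exp (hF.toStarAlgHom c) = hF.toStarAlgHom (fun i => Complex.exp (c i)) := by
  open scoped Norms.Operator in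
  have h := NormedSpace.map_exp hF.toStarAlgHom hF.continuous_toStarAlgHom c
  rw [Pi.exp_def, ← Complex.exp_eq_exp_ℂ] at h
  exact h.symm

theorem toStarAlgHom_mem_unitaryGroup {c : ι → ℂ} (hc : ∀ i, star (c i) * c i = 1) :
    hF.toStarAlgHom c ∈ unitaryGroup n ℂ := by
  rw [mem_unitaryGroup_iff', ← map_star, ← map_mul, show star c * c = 1 from funext hc, map_one]

theorem mul_commutator_mul (D : Matrix n n ℂ) (c : ι → ℂ) (a b : ι) :
    F a * (hF.toStarAlgHom c * D - D * hF.toStarAlgHom c) * F b =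
      (c a - c b) • (F a * D * F b) := by
  simp only [Matrix.mul_sub, Matrix.sub_mul, Matrix.mul_assoc, hF.toStarAlgHom_apply,
    hF.sum_smul_mul]
  simp only [← Matrix.mul_assoc, hF.mul_sum_smul, sub_smul, Matrix.mul_smul, Matrix.smul_mul]

theorem commute_toStarAlgHom_iff (D : Matrix n n ℂ) (c : ι → ℂ) :
    Commute (hF.toStarAlgHom c) D ↔ ∀ a b, F a * D * F b ≠ 0 → c a = c b := by
  constructor
  · intro h a b hab
    have key := hF.mul_commutator_mul D c a b
    rw [h.eq, sub_self, Matrix.mul_zero, Matrix.zero_mul, eq_comm, smul_eq_zero] at key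
    exact sub_eq_zero.mp (key.resolve_right hab)
  · intro h
    rw [Commute, SemiconjBy, ← sub_eq_zero, hF.eq_sum_sum_mul_mul (_ - _)]
    refine Finset.sum_eq_zero fun a _ => Finset.sum_eq_zero fun b _ => ?_
    rw [hF.mul_commutator_mul]
    by_cases hab : F a * D * F b = 0
    · rw [hab, smul_zero]
    · rw [h a b hab, sub_self, zero_smul]

noncomputable def compressedUnitary (V : Matrix n m ℂ) (y : ι → UnitAddCircle) :
    Matrix m m ℂ :=
  Vᴴ * hF.toStarAlgHom (fun j => (y j).toCircle) * V

theorem continuous_compressedUnitary (V : Matrix n m ℂ) :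
    Continuous (hF.compressedUnitary V) :=
  (continuous_const.matrix_mul (hF.continuous_toStarAlgHom.comp (by fun_prop))).matrix_mul
    continuous_const

variable [Fintype m]

theorem conjTranspose_mul_mul_ne_zero_of_mul_mul_ne_zero {V : Matrix n m ℂ} {a b : ι}
    (h : F a * (V * Vᴴ) * F b ≠ 0) : Vᴴ * F a * V ≠ 0 := by
  rw [Ne, conjTranspose_mul_mul_eq_zero_iff (hF.isStarProjection a)]
  intro hV
  rw [← Matrix.mul_assoc, hV, Matrix.zero_mul, Matrix.zero_mul] at h
  exact h rfl

variable [DecidableEq m]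

theorem conjTranspose_mul_toStarAlgHom_mul_eq_smul_one {V : Matrix n m ℂ} (hV : Vᴴ * V = 1)
    {c : ι → ℂ} {γ : ℂ} (hc : ∀ j, Vᴴ * F j * V ≠ 0 → c j = γ) :
    Vᴴ * hF.toStarAlgHom c * V = γ • 1 := by
  calc Vᴴ * hF.toStarAlgHom c * V = ∑ j, c j • (Vᴴ * F j * V) := by
        simp [hF.toStarAlgHom_apply, Matrix.mul_sum, Matrix.sum_mul]
    _ = ∑ j, γ • (Vᴴ * F j * V) := by
        refine Finset.sum_congr rfl fun j _ => ?_
        by_cases hj : Vᴴ * F j * V = 0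
        · rw [hj, smul_zero, smul_zero]
        · rw [hc j hj]
    _ = γ • 1 := by
        rw [← Finset.smul_sum, ← Matrix.sum_mul, ← Matrix.mul_sum, hF.sum_eq_one,
          Matrix.mul_one, hV]

theorem mem_spectrum_conjTranspose_mul_toStarAlgHom_mul {V : Matrix n m ℂ} (hV : Vᴴ * V = 1)
    {c : ι → ℂ} (hc : Commute (hF.toStarAlgHom c) (V * Vᴴ)) {j : ι} (hj : Vᴴ * F j * V ≠ 0) :
    c j ∈ spectrum ℂ (Vᴴ * hF.toStarAlgHom c * V) := by
  classical
  -- the spectral projection of `hF.toStarAlgHom c` for the eigenvalue `c j`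
  set q : ι → ℂ := fun i => if c i = c j then 1 else 0
  set Q := hF.toStarAlgHom q
  have hQ : IsStarProjection Q := by
    refine IsStarProjection.map ?_ hF.toStarAlgHom
    refine isStarProjection_iff'.mpr ⟨funext fun i => ?_, funext fun i => ?_⟩ <;>
      by_cases h : c i = c j <;> simp [q, h]
  have hcQ : hF.toStarAlgHom c * Q = c j • Q := by
    rw [← map_mul, ← map_smul]
    congr 1
    funext i
    by_cases h : c i = c j <;> simp [q, h]
  have hFQ : F j * Q = F j := by
    show F j * hF.toStarAlgHom q = F j
    rw [hF.toStarAlgHom_apply, hF.mul_sum_smul]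
    simp [q]
  refine spectrum.mem_of_mul_eq_smul (b := Vᴴ * Q * V) ?_ ?_
  · rw [Ne, conjTranspose_mul_mul_eq_zero_iff hQ]
    intro hQV
    apply hj
    rw [conjTranspose_mul_mul_eq_zero_iff (hF.isStarProjection j), ← hFQ, Matrix.mul_assoc, hQV,
      Matrix.mul_zero]
  · calc Vᴴ * hF.toStarAlgHom c * V * (Vᴴ * Q * V)
        = Vᴴ * (hF.toStarAlgHom c * (V * Vᴴ)) * Q * V := by simp only [Matrix.mul_assoc]
      _ = (Vᴴ * V) * Vᴴ * (hF.toStarAlgHom c * Q) * V := by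
          rw [hc.eq]; simp only [Matrix.mul_assoc]
      _ = c j • (Vᴴ * Q * V) := by
          rw [hV, hcQ, Matrix.one_mul, Matrix.mul_smul, Matrix.smul_mul]

theorem conjTranspose_mul_toStarAlgHom_mul_mem_unitaryGroup_and_exists_ne_iff
    {V : Matrix n m ℂ} (hV : Vᴴ * V = 1) {c : ι → ℂ} (hc : ∀ i, star (c i) * c i = 1) :
    (Vᴴ * hF.toStarAlgHom c * V ∈ unitaryGroup m ℂ ∧
      ∃ μ₁ ∈ spectrum ℂ (Vᴴ * hF.toStarAlgHom c * V),
        ∃ μ₂ ∈ spectrum ℂ (Vᴴ * hF.toStarAlgHom c * V), μ₁ ≠ μ₂) ↔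
      (∀ a b, F a * (V * Vᴴ) * F b ≠ 0 → c a = c b) ∧
        ∃ a b, Vᴴ * F a * V ≠ 0 ∧ Vᴴ * F b * V ≠ 0 ∧ c a ≠ c b := by
  rw [conjTranspose_mul_mul_mem_unitaryGroup_iff hV (hF.toStarAlgHom_mem_unitaryGroup hc),
    ← hF.commute_toStarAlgHom_iff]
  refine and_congr_right fun hcomm => ⟨?_, ?_⟩
  · rintro ⟨μ₁, hμ₁, μ₂, hμ₂, hne⟩
    by_contra! hconst
    obtain ⟨γ, hγ⟩ : ∃ γ, ∀ j, Vᴴ * F j * V ≠ 0 → c j = γ := by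
      by_cases h : ∃ a, Vᴴ * F a * V ≠ 0
      · obtain ⟨a, ha⟩ := h
        exact ⟨c a, fun j hj => hconst j a hj ha⟩
      · exact ⟨0, fun j hj => (h ⟨j, hj⟩).elim⟩
    rw [hF.conjTranspose_mul_toStarAlgHom_mul_eq_smul_one hV hγ,
      ← Algebra.algebraMap_eq_smul_one] at hμ₁ hμ₂
    exact hne ((spectrum.algebraMap_subset_singleton γ hμ₁).trans
      (spectrum.algebraMap_subset_singleton γ hμ₂).symm)
  · rintro ⟨a, b, ha, hb, hab⟩
    exact ⟨c a, hF.mem_spectrum_conjTranspose_mul_toStarAlgHom_mul hV hcomm ha,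
      c b, hF.mem_spectrum_conjTranspose_mul_toStarAlgHom_mul hV hcomm hb, hab⟩

theorem compressedUnitary_mem_unitaryGroup_and_exists_ne_iff {V : Matrix n m ℂ}
    (hV : Vᴴ * V = 1) (y : ι → UnitAddCircle) :
    (hF.compressedUnitary V y ∈ unitaryGroup m ℂ ∧
      ∃ μ₁ ∈ spectrum ℂ (hF.compressedUnitary V y),
        ∃ μ₂ ∈ spectrum ℂ (hF.compressedUnitary V y), μ₁ ≠ μ₂) ↔
      (∀ a b, F a * (V * Vᴴ) * F b ≠ 0 → y a = y b) ∧
        ∃ a b, Vᴴ * F a * V ≠ 0 ∧ Vᴴ * F b * V ≠ 0 ∧ y a ≠ y b := by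
  have hinj : ∀ a b, ((y a).toCircle : ℂ) = (y b).toCircle ↔ y a = y b := fun a b =>
    Circle.coe_inj.trans (AddCircle.injective_toCircle one_ne_zero).eq_iff
  simpa only [compressedUnitary, ne_eq, hinj] using
    hF.conjTranspose_mul_toStarAlgHom_mul_mem_unitaryGroup_and_exists_ne_iff hV
      (c := fun j => (y j).toCircle) fun j => Circle.star_coe_mul_self _

end IsSpectralResolution

section Torus

theorem UnitAddCircle.dist_coe_coe (a b : ℝ) :
    dist (a : UnitAddCircle) (b : UnitAddCircle) = znorm (a - b) := by
  rw [dist_eq_norm, ← AddCircle.coe_sub, AddCircle.norm_eq]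
  simp [znorm]

theorem UnitAddCircle.coe_eq_coe_iff (a b : ℝ) :
    (a : UnitAddCircle) = b ↔ ∃ n : ℤ, a - b = n := by
  rw [← sub_eq_zero, ← AddCircle.coe_sub, AddCircle.coe_eq_zero_iff]
  simp [eq_comm]

variable {ι : Type*}

def kroneckerFlow (θ : ι → ℝ) (t : ℝ) : ι → UnitAddCircle :=
  fun j => ((t * θ j : ℝ) : UnitAddCircle)

theorem continuous_kroneckerFlow (θ : ι → ℝ) : Continuous (kroneckerFlow θ) := by
  unfold kroneckerFlow
  fun_prop

theorem closure_kroneckerFlow_image_Ici (θ : ι → ℝ) :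
    closure (kroneckerFlow θ '' Ici 0) = closure (kroneckerFlow θ '' Ioi 0) := by
  refine (closure_minimal ?_ isClosed_closure).antisymm
    (closure_mono (image_mono Ioi_subset_Ici_self))
  rw [← closure_Ioi]
  exact image_closure_subset_closure_image (continuous_kroneckerFlow θ)

theorem exists_mem_closure_forall_eq_iff {R Z : Type*} [Finite ι] [Finite R] [MetricSpace Z]
    [CompactSpace Z] (G : Set (ι → Z)) (P : R → Set ι) (ρ : R → Z) :
    (∃ y ∈ closure G, ∀ r, ∀ j ∈ P r, y j = ρ r) ↔
      ∀ ε > 0, ∃ x ∈ G, ∀ r, ∀ j ∈ P r, dist (x j) (ρ r) < ε := by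
  have := Fintype.ofFinite {p : R × ι // p.2 ∈ P p.1}
  -- by compactness, restricting to the constrained coordinates commutes with taking closures
  let res : (ι → Z) → {p : R × ι // p.2 ∈ P p.1} → Z := fun x p => x p.1.2
  have hres : Continuous res := by fun_prop
  have hclosure : res '' closure G = closure (res '' G) :=
    image_closure_of_isCompact isClosed_closure.isCompact hres.continuousOn
  have key : ∀ x : ι → Z, res x = (fun p => ρ p.1.1) ↔ ∀ r, ∀ j ∈ P r, x j = ρ r := by
    simp [res, funext_iff]
  rw [show (∃ y ∈ closure G, ∀ r, ∀ j ∈ P r, y j = ρ r) ↔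
      (fun p => ρ p.1.1) ∈ res '' closure G by simp only [mem_image, key],
    hclosure, Metric.mem_closure_iff]
  refine forall₂_congr fun ε hε => ?_
  simp [res, dist_pi_lt_iff hε, dist_comm]

theorem exists_ne_and_forall_exists_kroneckerFlow_dist_lt_iff {R : Type*} (θ : ι → ℝ)
    (P : R → Set ι) :
    (∃ ρ : R → UnitAddCircle, (∃ r₁ r₂, ρ r₁ ≠ ρ r₂) ∧
      ∀ ε > 0, ∃ x ∈ kroneckerFlow θ '' Ioi 0, ∀ r, ∀ j ∈ P r, dist (x j) (ρ r) < ε) ↔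
    ∃ ρ : R → ℝ, (∃ r₁ r₂, ∀ n : ℤ, ρ r₁ - ρ r₂ ≠ n) ∧
      ∀ ε > 0, ∃ t > 0, ∀ r, ∀ j ∈ P r, znorm (t * θ j - ρ r) < ε := by
  rw [(QuotientAddGroup.mk_surjective.comp_left).exists]
  simp [kroneckerFlow, UnitAddCircle.dist_coe_coe, UnitAddCircle.coe_eq_coe_iff]

end Torus

section Classes

variable {ι R Z : Type*} {rel : ι → ι → Prop} {supp : ι → Prop} {P : R → Set ι}

theorem forall_rel_eq_iff_forall_mem_eq (hrel : ∀ a b, rel a b → supp a)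
    (hsupp : ∀ i, supp i ↔ ∃ r, i ∈ P r)
    (hclass : ∀ r, ∀ i ∈ P r, ∀ j, j ∈ P r ↔ Relation.TransGen rel i j) (y : ι → Z) :
    (∀ a b, rel a b → y a = y b) ↔ ∀ r, ∀ i ∈ P r, ∀ j ∈ P r, y i = y j := by
  constructor
  · intro h r i hi j hj
    have htrans : ∀ {a b}, Relation.TransGen rel a b → y a = y b := fun hab => by
      induction hab with
      | single hab => exact h _ _ hab
      | tail _ hbc ih => exact ih.trans (h _ _ hbc)
    exact htrans ((hclass r i hi j).mp hj)
  · intro h a b hab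
    obtain ⟨r, ha⟩ := (hsupp a).mp (hrel a b hab)
    exact h r a ha b ((hclass r a ha b).mpr (.single hab))

theorem forall_rel_eq_and_exists_ne_iff (hrel : ∀ a b, rel a b → supp a)
    (hsupp : ∀ i, supp i ↔ ∃ r, i ∈ P r)
    (hclass : ∀ r, ∀ i ∈ P r, ∀ j, j ∈ P r ↔ Relation.TransGen rel i j)
    (hne : ∀ r, (P r).Nonempty) (y : ι → Z) :
    ((∀ a b, rel a b → y a = y b) ∧ ∃ a b, supp a ∧ supp b ∧ y a ≠ y b) ↔
      ∃ ρ : R → Z, (∃ r₁ r₂, ρ r₁ ≠ ρ r₂) ∧ ∀ r, ∀ j ∈ P r, y j = ρ r := by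
  rw [forall_rel_eq_iff_forall_mem_eq hrel hsupp hclass]
  constructor
  · rintro ⟨h, a, b, ha, hb, hab⟩
    obtain ⟨ra, ha⟩ := (hsupp a).mp ha
    obtain ⟨rb, hb⟩ := (hsupp b).mp hb
    refine ⟨fun r => y (hne r).some, ⟨ra, rb, fun he => hab ?_⟩,
      fun r j hj => h r j hj _ (hne r).some_mem⟩
    exact (h ra a ha _ (hne ra).some_mem).trans (he.trans (h rb _ (hne rb).some_mem b hb))
  · rintro ⟨ρ, ⟨r₁, r₂, hρ₁₂⟩, hρ⟩
    refine ⟨fun r i hi j hj => (hρ r i hi).trans (hρ r j hj).symm, ?_⟩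
    obtain ⟨a, ha⟩ := hne r₁
    obtain ⟨b, hb⟩ := hne r₂
    exact ⟨a, b, (hsupp a).mpr ⟨r₁, ha⟩, (hsupp b).mpr ⟨r₂, hb⟩, by rwa [hρ r₁ a ha, hρ r₂ b hb]⟩

end Classes

section Revival

variable {X ι : Type*} [Fintype X] [DecidableEq X] [Fintype ι] {M : Matrix X X ℝ} {θ : ι → ℝ}
  {E : ι → Matrix X X ℝ} (hF : IsSpectralResolution fun i => (E i).map Complex.ofReal)
  (hM : M = ∑ i, θ i • E i) (K : Set X)
include hF hM

theorem subExpUnitary_two_pi_mul (t : ℝ) :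
    subExpUnitary M K (2 * Real.pi * t) =
      hF.compressedUnitary (inclusionMatrix ℂ K) (kroneckerFlow θ t) := by
  have hgen : (Complex.I * ((2 * Real.pi * t : ℝ) : ℂ)) • M.map Complex.ofReal =
      hF.toStarAlgHom fun j => Complex.I * ((2 * Real.pi * t : ℝ) : ℂ) * θ j := by
    ext a b
    simp [hF.toStarAlgHom_apply, hM, Matrix.sum_apply, Finset.mul_sum, mul_assoc]
  rw [subExpUnitary, hgen, hF.exp_toStarAlgHom, IsSpectralResolution.compressedUnitary,
    conjTranspose_inclusionMatrix_mul_mul ℂ]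
  congr 3
  funext j
  simp only [kroneckerFlow, AddCircle.toCircle_apply_mk, Circle.coe_exp]
  push_cast
  ring_nf

theorem closure_setOf_subExpUnitary [DecidablePred (· ∈ K)] :
    closure {A | ∃ t : ℝ, 0 ≤ t ∧ A = subExpUnitary M K t} =
      hF.compressedUnitary (inclusionMatrix ℂ K) '' closure (kroneckerFlow θ '' Ioi 0) := by
  have hset : {A | ∃ t : ℝ, 0 ≤ t ∧ A = subExpUnitary M K t} =
      hF.compressedUnitary (inclusionMatrix ℂ K) '' (kroneckerFlow θ '' Ici 0) := by
    ext A
    simp only [mem_ofPred_eq, mem_image, mem_Ici]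
    constructor
    · rintro ⟨t, ht, rfl⟩
      refine ⟨_, ⟨t / (2 * Real.pi), by positivity, rfl⟩, ?_⟩
      rw [← subExpUnitary_two_pi_mul hF hM, mul_div_cancel₀ _ (by positivity)]
    · rintro ⟨_, ⟨t, ht, rfl⟩, rfl⟩
      exact ⟨2 * Real.pi * t, by positivity, (subExpUnitary_two_pi_mul hF hM K t).symm⟩
  rw [hset, ← image_closure_of_isCompact isClosed_closure.isCompact
    (hF.continuous_compressedUnitary _).continuousOn, closure_kroneckerFlow_image_Ici]

end Revival

theorem stmt_0_general {X : Type*} [Fintype X] [DecidableEq X]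
    (M : Matrix X X ℝ)
    (K : Set X) [DecidablePred (· ∈ K)]
    -- spectral decomposition `M = ∑ θ i • E i`
    (d : ℕ) (θ : Fin d → ℝ)
    (E : Fin d → Matrix X X ℝ)
    (hEsymm : ∀ i, (E i).IsSymm)
    (hEidem : ∀ i, E i * E i = E i)
    (hEorth : ∀ i j, i ≠ j → E i * E j = 0)
    (hEsum : ∑ i, E i = 1)
    (hMspec : M = ∑ i, θ i • E i)
    -- the partition `P_K = (Π₀, Π₁, …, Π_s)`
    (s : ℕ) (P : Fin s → Set (Fin d))
    (hPne : ∀ r, (P r).Nonempty)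
    -- `Π₀ = {i : (E i)_{K×K} = 0}` is the complement of the union of the classes
    (hPcover : ∀ i : Fin d,
      (E i).submatrix (fun k : K => (k : X)) (fun k : K => (k : X)) ≠ 0 ↔ ∃ r, i ∈ P r)
    -- each `Π_r`, `1 ≤ r ≤ s`, is an equivalence class of the transitive closure of the
    -- eigenvalue-support relation `Φ_K = {(θ_a, θ_b) : E_a D_K E_b ≠ 0}`
    (hPclass : ∀ r, ∀ i ∈ P r, ∀ j : Fin d,
      (j ∈ P r ↔ Relation.TransGen
        (fun a b : Fin d =>
          E a * Matrix.diagonal (fun x => if x ∈ K then (1 : ℝ) else 0) * E b ≠ 0) i j)) :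
    PGFR M K ↔
      ∃ ρ : Fin s → ℝ,
        (∃ r₁ r₂, ∀ n : ℤ, ρ r₁ - ρ r₂ ≠ (n : ℝ)) ∧
        ∀ ε > (0 : ℝ), ∃ t > (0 : ℝ), ∀ r, ∀ j ∈ P r, znorm (t * θ j - ρ r) < ε := by
  have hF := isSpectralResolution_map_ofReal hEsymm hEidem (fun i j => hEorth i j) hEsum
  have hclasses := forall_rel_eq_and_exists_ne_iff (Z := UnitAddCircle)
    (fun a b h => (conjTranspose_inclusionMatrix_mul_map_ofReal_mul_ne_zero_iff K (E a)).mp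
      (hF.conjTranspose_mul_mul_ne_zero_of_mul_mul_ne_zero
        ((map_ofReal_mul_inclusionMatrix_mul_ne_zero_iff K (E a) (E b)).mpr h)))
    hPcover hPclass hPne
  rw [PGFR, closure_setOf_subExpUnitary hF hMspec, Set.exists_mem_image]
  simp only [hF.compressedUnitary_mem_unitaryGroup_and_exists_ne_iff
      (conjTranspose_inclusionMatrix_mul_self ℂ K), map_ofReal_mul_inclusionMatrix_mul_ne_zero_iff,
    conjTranspose_inclusionMatrix_mul_map_ofReal_mul_ne_zero_iff, hclasses]
  rw [← exists_ne_and_forall_exists_kroneckerFlow_dist_lt_iff]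
  simp only [← exists_mem_closure_forall_eq_iff]
  exact ⟨fun ⟨y, hy, ρ, hρ, hyρ⟩ => ⟨ρ, hρ, y, hy, hyρ⟩,
    fun ⟨ρ, hρ, y, hy, hyρ⟩ => ⟨y, hy, ρ, hρ, hyρ⟩⟩

theorem stmt_0 {X : Type*} [Fintype X] [DecidableEq X] [Nonempty X]
    (M : Matrix X X ℝ) (hM : M.IsSymm)
    (K : Set X) [DecidablePred (· ∈ K)] (hK : K.Nonempty)
    -- spectral decomposition `M = ∑ θ i • E i`
    (d : ℕ) (θ : Fin d → ℝ) (hθ : Function.Injective θ)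
    (E : Fin d → Matrix X X ℝ)
    (hEsymm : ∀ i, (E i).IsSymm)
    (hEidem : ∀ i, E i * E i = E i)
    (hEorth : ∀ i j, i ≠ j → E i * E j = 0)
    (hEnz : ∀ i, E i ≠ 0)
    (hEsum : ∑ i, E i = 1)
    (hMspec : M = ∑ i, θ i • E i)
    -- the partition `P_K = (Π₀, Π₁, …, Π_s)`
    (s : ℕ) (P : Fin s → Set (Fin d))
    (hPne : ∀ r, (P r).Nonempty)
    (hPdisj : ∀ r r', r ≠ r' → Disjoint (P r) (P r'))
    -- `Π₀ = {i : (E i)_{K×K} = 0}` is the complement of the union of the classes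
    (hPcover : ∀ i : Fin d,
      (E i).submatrix (fun k : K => (k : X)) (fun k : K => (k : X)) ≠ 0 ↔ ∃ r, i ∈ P r)
    -- each `Π_r`, `1 ≤ r ≤ s`, is an equivalence class of the transitive closure of the
    -- eigenvalue-support relation `Φ_K = {(θ_a, θ_b) : E_a D_K E_b ≠ 0}`
    (hPclass : ∀ r, ∀ i ∈ P r, ∀ j : Fin d,
      (j ∈ P r ↔ Relation.TransGen
        (fun a b : Fin d =>
          E a * Matrix.diagonal (fun x => if x ∈ K then (1 : ℝ) else 0) * E b ≠ 0) i j)) :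
    PGFR M K ↔
      ∃ ρ : Fin s → ℝ,
        (∃ r₁ r₂, ∀ n : ℤ, ρ r₁ - ρ r₂ ≠ (n : ℝ)) ∧
        ∀ ε > (0 : ℝ), ∃ t > (0 : ℝ), ∀ r, ∀ j ∈ P r, znorm (t * θ j - ρ r) < ε :=
  stmt_0_general M K d θ E hEsymm hEidem hEorth hEsum hMspec s P hPne hPcover hPclass
end

section
/- Let M be a real symmetric primitive matrix (M is entrywise nonnegative and some power of M has all entries strictly positive) indexed by a finite set X, and let K ⊆ X be a nonempty subset. If M exhibits pretty good fractional revival with respect to K, then the closure of { (exp(itM))_{K×K} : t ≥ 0 } intersected with the unitary group of ℂ^K contains a matrix that is not diagonal. -/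
open Matrix Set

/-!
If `H` is a unitary limit of the compressions `exp(itM)_{K×K}`, the rows and columns of the full
unitaries `exp(itM)` indexed by `K` carry asymptotically no mass outside `K`. Hence, along the
approximating times, the `K × K` blocks of `exp(itM) P` and `P exp(itM)` tend to `H P_{K×K}` and
`P_{K×K} H`. For `P = M ^ n`, which commutes with every `exp(itM)`, this shows that `H` commutes
with `(M ^ n)_{K×K}`. When `M ^ n` has no zero entry, a diagonal matrix commuting with it is scalar;
so the non-scalar unitary `H` given by fractional revival cannot be diagonal.
-/

open Filter Topology

namespace Matrix

variable {X ι : Type*} [Fintype X] [DecidableEq X] {l : Filter ι} {U : ι → Matrix X X ℂ}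
  {K : Set X} [DecidablePred (· ∈ K)] {H : Matrix K K ℂ}

theorem sum_norm_sq_row_eq_one_of_mem_unitaryGroup {U : Matrix X X ℂ}
    (hU : U ∈ unitaryGroup X ℂ) (a : X) : ∑ y, ‖U a y‖ ^ 2 = 1 := by
  have h := congrFun₂ (mem_unitaryGroup_iff.mp hU) a a
  simp only [mul_apply, star_apply, one_apply_eq, Complex.star_def, Complex.mul_conj'] at h
  exact_mod_cast h

theorem exp_I_mul_smul_mem_unitaryGroup {A : Matrix X X ℂ} (hA : A.IsHermitian) (t : ℝ) :
    NormedSpace.exp ((Complex.I * t) • A) ∈ unitaryGroup X ℂ := by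
  set B := (Complex.I * t) • A
  have hB : star B = -B := by
    simp only [B, star_smul, star_eq_conjTranspose, hA.eq, star_mul', Complex.star_def,
      Complex.conj_I, Complex.conj_ofReal, neg_mul, neg_smul]
  rw [mem_unitaryGroup_iff, star_eq_conjTranspose, ← exp_conjTranspose, ← star_eq_conjTranspose,
    hB, ← exp_add_of_commute B (-B) (Commute.refl B).neg_right, add_neg_cancel,
    NormedSpace.exp_zero]

theorem tendsto_apply_zero_of_tendsto_submatrix (hU : ∀ i, U i ∈ unitaryGroup X ℂ)
    (hH : H ∈ unitaryGroup K ℂ) (hlim : Tendsto (fun i => (U i).submatrix (↑) (↑)) l (𝓝 H))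
    (k : K) {x : X} (hx : x ∉ K) : Tendsto (fun i => U i k x) l (𝓝 0) := by
  have hbound : ∀ i, ‖U i k x‖ ^ 2 ≤ 1 - ∑ c : K, ‖U i k c‖ ^ 2 := by
    intro i
    have hsub : ∑ y ∈ insert x (Finset.univ.filter (· ∈ K)), ‖U i k y‖ ^ 2 ≤ 1 :=
      (sum_norm_sq_row_eq_one_of_mem_unitaryGroup (hU i) k) ▸
        Finset.sum_le_sum_of_subset_of_nonneg (Finset.subset_univ _) fun _ _ _ => sq_nonneg _
    rw [Finset.sum_insert (by simp [hx]),
      Finset.sum_subtype _ (fun _ => Finset.mem_filter_univ _) fun y => ‖U i k y‖ ^ 2] at hsub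
    linarith
  have hrow : Tendsto (fun i => ∑ c : K, ‖U i k c‖ ^ 2) l (𝓝 1) := by
    rw [← sum_norm_sq_row_eq_one_of_mem_unitaryGroup hH k]
    refine tendsto_finsetSum _ fun c _ => ?_
    exact ((continuous_id.matrix_elem k c).tendsto H |>.comp hlim).norm.pow 2
  have hsq : Tendsto (fun i => ‖U i k x‖ ^ 2) l (𝓝 0) :=
    squeeze_zero (fun _ => sq_nonneg _) hbound (by simpa using hrow.const_sub 1)
  rw [tendsto_zero_iff_norm_tendsto_zero]
  simpa using hsq.sqrt.congr fun i => Real.sqrt_sq (norm_nonneg _)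


theorem tendsto_mul_apply_of_tendsto_submatrix (hU : ∀ i, U i ∈ unitaryGroup X ℂ)
    (hH : H ∈ unitaryGroup K ℂ) (hlim : Tendsto (fun i => (U i).submatrix (↑) (↑)) l (𝓝 H))
    (P : Matrix X X ℂ) (a b : K) :
    Tendsto (fun i => (U i * P) a b) l (𝓝 ((H * (P.submatrix (↑) (↑) : Matrix K K ℂ)) a b)) := by
  have hsplit : ∀ i, (U i * P) a b =
      ∑ c : K, U i a c * P c b + ∑ x : X with x ∉ K, U i a x * P x b := by
    intro i
    rw [mul_apply, ← Finset.sum_filter_add_sum_filter_not Finset.univ (· ∈ K),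
      Finset.sum_subtype _ (fun _ => Finset.mem_filter_univ _) fun x => U i a x * P x b]
  have hinside : Tendsto (fun i => ∑ c : K, U i a c * P c b) l
      (𝓝 ((H * (P.submatrix (↑) (↑) : Matrix K K ℂ)) a b)) :=
    tendsto_finsetSum _ fun c _ =>
      ((continuous_id.matrix_elem a c).tendsto H |>.comp hlim).mul_const _
  have houtside : Tendsto (fun i => ∑ x : X with x ∉ K, U i a x * P x b) l (𝓝 0) := by
    simpa using tendsto_finsetSum _ fun x hx =>
      (tendsto_apply_zero_of_tendsto_submatrix hU hH hlim a (Finset.mem_filter.mp hx).2).mul_const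
        (P x b)
  simpa [hsplit] using hinside.add houtside

theorem tendsto_mul_apply_of_tendsto_submatrix' (hU : ∀ i, U i ∈ unitaryGroup X ℂ)
    (hH : H ∈ unitaryGroup K ℂ) (hlim : Tendsto (fun i => (U i).submatrix (↑) (↑)) l (𝓝 H))
    (P : Matrix X X ℂ) (a b : K) :
    Tendsto (fun i => (P * U i) a b) l (𝓝 (((P.submatrix (↑) (↑) : Matrix K K ℂ) * H) a b)) := by
  have hlim' : Tendsto (fun i => (U i)ᴴ.submatrix (↑) (↑)) l (𝓝 (Hᴴ : Matrix K K ℂ)) := by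
    simpa only [← conjTranspose_submatrix, Function.comp_def, id] using
      (continuous_id.matrix_conjTranspose.tendsto H).comp hlim
  have h := tendsto_mul_apply_of_tendsto_submatrix (fun i => Unitary.star_mem (hU i))
    (Unitary.star_mem hH) hlim' Pᴴ b a
  simpa [star_eq_conjTranspose, ← conjTranspose_mul, ← conjTranspose_submatrix,
    Function.comp_def] using (continuous_star.tendsto _).comp h

theorem commute_submatrix_of_tendsto [l.NeBot] (hU : ∀ i, U i ∈ unitaryGroup X ℂ)
    (hH : H ∈ unitaryGroup K ℂ) (hlim : Tendsto (fun i => (U i).submatrix (↑) (↑)) l (𝓝 H))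
    {P : Matrix X X ℂ} (hP : ∀ i, Commute (U i) P) : Commute H (P.submatrix (↑) (↑)) :=
  (commute_iff_eq _ _).2 <| ext fun a b =>
    tendsto_nhds_unique (tendsto_mul_apply_of_tendsto_submatrix hU hH hlim P a b) <| by
      simpa only [(hP _).eq] using tendsto_mul_apply_of_tendsto_submatrix' hU hH hlim P a b

theorem eq_of_commute_diagonal {n R : Type*} [Fintype n] [DecidableEq n] [CommRing R]
    [NoZeroDivisors R] {d : n → R} {Q : Matrix n n R} (h : Commute (diagonal d) Q) {a b : n}
    (hQ : Q a b ≠ 0) : d a = d b := by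
  have hab := congrFun₂ h.eq a b
  rw [diagonal_mul, mul_diagonal, mul_comm] at hab
  exact mul_left_cancel₀ hQ hab

end Matrix

theorem stmt_1_general {X : Type*} [Fintype X] [DecidableEq X]
    (M : Matrix X X ℝ) (hM : M.IsSymm)
    -- `M` is primitive: entrywise nonnegative, and some power is entrywise positive
    (hprim : ∃ n : ℕ, ∀ x y, 0 < (M ^ n) x y)
    (K : Set X) [DecidablePred (· ∈ K)]
    (hpgfr : PGFR M K) :
    ∃ H ∈ closure {A : Matrix K K ℂ | ∃ t : ℝ, 0 ≤ t ∧ A = subExpUnitary M K t},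
      H ∈ Matrix.unitaryGroup K ℂ ∧ ∃ a b : K, a ≠ b ∧ H a b ≠ 0 := by
  obtain ⟨H, hHcl, hHU, μ₁, hμ₁, μ₂, hμ₂, hμne⟩ := hpgfr
  refine ⟨H, hHcl, hHU, ?_⟩
  by_contra! hdiag
  have hHd : diagonal H.diag = H := (isDiag_iff_diagonal_diag H).1 hdiag
  rw [← hHd, spectrum_diagonal] at hμ₁ hμ₂
  obtain ⟨a, rfl⟩ := hμ₁
  obtain ⟨b, rfl⟩ := hμ₂
  obtain ⟨n, hn⟩ := hprim
  set Mc := M.map Complex.ofReal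
  have hMc : Mc.IsHermitian :=
    (isHermitian_iff_isSymm.2 hM).map _ fun x => (Complex.conj_ofReal x).symm
  have : (comap (subExpUnitary M K) (𝓝 H)).NeBot := comap_neBot_iff.2 fun s hs =>
    let ⟨_, hA, t, _, hAt⟩ := mem_closure_iff_nhds.1 hHcl s hs
    ⟨t, hAt ▸ hA⟩
  have hcomm : Commute H ((Mc ^ n).submatrix (↑) (↑)) :=
    commute_submatrix_of_tendsto (l := comap (subExpUnitary M K) (𝓝 H))
      (exp_I_mul_smul_mem_unitaryGroup hMc) hHU tendsto_comap
      fun t => ((Commute.refl Mc).smul_left _).exp_left.pow_right n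
  rw [← hHd] at hcomm
  refine hμne (eq_of_commute_diagonal hcomm ?_)
  have hpow : Mc ^ n = (M ^ n).map Complex.ofReal := (Matrix.map_pow M Complex.ofRealHom n).symm
  rw [submatrix_apply, hpow, map_apply]
  exact Complex.ofReal_ne_zero.2 (hn a b).ne'

theorem stmt_1 {X : Type*} [Fintype X] [DecidableEq X]
    (M : Matrix X X ℝ) (hM : M.IsSymm)
    -- `M` is primitive: entrywise nonnegative, and some power is entrywise positive
    (hnonneg : ∀ x y, 0 ≤ M x y)
    (hprim : ∃ n : ℕ, ∀ x y, 0 < (M ^ n) x y)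
    (K : Set X) [DecidablePred (· ∈ K)] (hK : K.Nonempty)
    (hpgfr : PGFR M K) :
    ∃ H ∈ closure {A : Matrix K K ℂ | ∃ t : ℝ, 0 ≤ t ∧ A = subExpUnitary M K t},
      H ∈ Matrix.unitaryGroup K ℂ ∧ ∃ a b : K, a ≠ b ∧ H a b ≠ 0 :=
  stmt_1_general M hM hprim K hpgfr
end

section
/- Let θ_1, …, θ_k be real numbers and let P = (Π_1, …, Π_s) be a partition of {1,…,k}. Then the following are equivalent: (i) P is non-degenerate; (ii) there exists a pair of indices 1 ≤ r_1, r_2 ≤ s such that no sequence of integers ℓ_1, …, ℓ_k satisfies all of: (a) Σ_{j=1}^k ℓ_j θ_j = 0, (b) Σ_{j ∈ Π_r} ℓ_j = 0 for all r ≠ r_1, r_2, and (c) Σ_{j ∈ Π_{r_1}} ℓ_j = −1 and Σ_{j ∈ Π_{r_2}} ℓ_j = 1. -/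
open Finset

/-- A partition `(Π_1, …, Π_s)` of `{1,…,k}` is non-degenerate for `θ` if there is a
vector `(ρ_1,…,ρ_s)`, not constant modulo 1, such that for every `ε > 0` there is `t > 0`
with `‖t·θ_j − ρ_r‖ < ε` for all `r` and all `j ∈ Π_r`. -/
noncomputable def NonDegenerate {k s : ℕ} (θ : Fin k → ℝ) (P : Fin s → Finset (Fin k)) : Prop :=
  ∃ ρ : Fin s → ℝ,
    (∃ r₁ r₂, ∀ n : ℤ, ρ r₁ - ρ r₂ ≠ (n : ℝ)) ∧
    ∀ ε > (0 : ℝ), ∃ t > (0 : ℝ), ∀ r, ∀ j ∈ P r, znorm (t * θ j - ρ r) < ε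

/-!
Kronecker's theorem, continuous form: the orbit `t ↦ t • θ`, `t > 0`, of the linear flow on the
torus `(ℝ/ℤ)ᵏ` comes arbitrarily close to `α` iff every integer relation `ℓ ⬝ θ = 0` gives
`ℓ ⬝ α ∈ ℤ`. Necessity is continuity of the character `x ↦ ℓ ⬝ x`. For sufficiency, suppose the
orbit stays `ε`-far from `α`, so that the time averages along it of a bump around `α` vanish. The
hypothesis says exactly that the averages of each character `mFourier n` are asymptotically
unchanged by a shift of the flow by `α - u • θ`; by Stone–Weierstrass and uniform boundedness the
same holds for every continuous function, so the averages of bumps centred at the orbit points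
`u • θ` tend to `0`. But finitely many of these bumps have a sum `≥ ε / 2` along the whole orbit.

For the partition, put `α j = ρ r` for `j ∈ Π r`; then `ℓ ⬝ α = ∑ r, (∑ j ∈ Π r, ℓ j) * ρ r`, so
non-degeneracy asks for a `ρ` that is integral on the group `M ⊆ ℤˢ` of block sums of relations
and not on some `e r₂ - e r₁`. Such a `ρ` exists iff `e r₂ - e r₁ ∉ M`: pull back a character of
`ℤˢ ⧸ M` that does not vanish on its class.
-/

open Filter Topology Complex MeasureTheory UnitAddTorus
open scoped Real

theorem tendsto_zero_of_dense_span {α 𝕜 E F : Type*} [NormedField 𝕜] [SeminormedAddCommGroup E]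
    [NormedSpace 𝕜 E] [SeminormedAddCommGroup F] [NormedSpace 𝕜 F] {l : Filter α}
    (D : α → E →ₗ[𝕜] F) {C : ℝ} (hD : ∀ a x, ‖D a x‖ ≤ C * ‖x‖) {s : Set E}
    (hs : (Submodule.span 𝕜 s).topologicalClosure = ⊤)
    (h : ∀ x ∈ s, Tendsto (D · x) l (𝓝 0)) (x : E) : Tendsto (D · x) l (𝓝 0) := by
  let S : Submodule 𝕜 E :=
    { carrier := {x | Tendsto (D · x) l (𝓝 0)}
      zero_mem' := by simpa using tendsto_const_nhds
      add_mem' := fun hx hy => by simpa using hx.add hy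
      smul_mem' := fun c x hx => by simpa using hx.const_smul c }
  have hS : IsClosed (S : Set E) :=
    (LipschitzWith.uniformEquicontinuous (fun a => D a) _
      fun a => AddMonoidHomClass.lipschitz_of_bound (D a) C (hD a)).equicontinuous
      |>.isClosed_setOfPred_tendsto continuous_const
  have : Submodule.span 𝕜 s ≤ S := Submodule.span_le.mpr h
  exact (hs ▸ Submodule.topologicalClosure_minimal _ this hS) Submodule.mem_top

theorem exists_finset_forall_le_sum_bump {α X : Type*} [PseudoMetricSpace X] [CompactSpace X]
    (φ : α → X) {ε : ℝ} (hε : 0 < ε) :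
    ∃ U : Finset α, ∀ a, ε / 2 ≤ ∑ u ∈ U, max 0 (ε - dist (φ a) (φ u)) := by
  obtain ⟨U, hU⟩ := isClosed_closure.isCompact.elim_finite_subcover (s := closure (Set.range φ))
    (fun u => Metric.ball (φ u) (ε / 2)) (fun _ => Metric.isOpen_ball) fun x hx =>
      Set.mem_iUnion.mpr (Metric.mem_closure_range_iff.mp hx (ε / 2) (by positivity))
  refine ⟨U, fun a => ?_⟩
  obtain ⟨u, hu, hau⟩ := Set.mem_iUnion₂.mp (hU (subset_closure (Set.mem_range_self a)))
  calc ε / 2 ≤ max 0 (ε - dist (φ a) (φ u)) :=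
        le_max_of_le_right (by linarith [Metric.mem_ball.mp hau])
    _ ≤ _ := Finset.single_le_sum (f := fun u => max 0 (ε - dist (φ a) (φ u)))
        (fun _ _ => le_max_left _ _) hu

theorem le_average_of_forall_le {g : ℝ → ℝ} {c T : ℝ} (hg : IntervalIntegrable g volume 0 T)
    (hc : ∀ t, c ≤ g t) (hT : 0 < T) : c ≤ T⁻¹ * ∫ t in (0)..T, g t := by
  have hmono : ∫ _ in (0)..T, c ≤ ∫ t in (0)..T, g t :=
    intervalIntegral.integral_mono_on hT.le intervalIntegrable_const hg fun t _ => hc t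
  rw [intervalIntegral.integral_const, smul_eq_mul, sub_zero] at hmono
  rw [le_inv_mul_iff₀ hT]
  linarith

theorem tendsto_average_exp {b : ℂ} (hb : b ≠ 0) (hre : b.re ≤ 0) :
    Tendsto (fun T : ℝ => (T : ℂ)⁻¹ * ∫ t in (0)..T, exp (b * t)) atTop (𝓝 0) := by
  have hbound : ∀ᶠ T : ℝ in atTop,
      ‖(T : ℂ)⁻¹ * ∫ t in (0)..T, exp (b * t)‖ ≤ 2 / ‖b‖ * T⁻¹ := by
    filter_upwards [eventually_gt_atTop 0] with T hT
    have hexp : ‖exp (b * T)‖ ≤ 1 := by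
      rw [norm_exp, re_mul_ofReal, Real.exp_le_one_iff]
      exact mul_nonpos_of_nonpos_of_nonneg hre hT.le
    rw [integral_exp_mul_complex hb, norm_mul, norm_div, norm_inv, norm_real,
      Real.norm_eq_abs, abs_of_pos hT]
    have hnum : ‖exp (b * T) - exp (b * (0 : ℝ))‖ ≤ 2 := by
      calc _ ≤ ‖exp (b * T)‖ + ‖exp (b * (0 : ℝ))‖ := norm_sub_le _ _
        _ ≤ 2 := by simp only [ofReal_zero, mul_zero, exp_zero, norm_one]; linarith
    calc T⁻¹ * (‖exp (b * T) - exp (b * (0 : ℝ))‖ / ‖b‖) ≤ T⁻¹ * (2 / ‖b‖) := by gcongr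
      _ = 2 / ‖b‖ * T⁻¹ := mul_comm _ _
  exact squeeze_zero_norm' hbound (by simpa using tendsto_inv_atTop_zero.const_mul (2 / ‖b‖))

section Torus

variable {ι : Type*}

def toTorus (x : ι → ℝ) : UnitAddTorus ι := fun i => x i

@[fun_prop]
theorem continuous_toTorus : Continuous (toTorus : (ι → ℝ) → UnitAddTorus ι) :=
  continuous_pi fun i => (AddCircle.continuous_mk' 1).comp (continuous_apply i)

theorem toTorus_sub (x y : ι → ℝ) : toTorus (x - y) = toTorus x - toTorus y := by
  ext i
  simp [toTorus]

theorem continuous_flow (f : C(UnitAddTorus ι, ℂ)) (θ v : ι → ℝ) :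
    Continuous fun t : ℝ => f (toTorus (t • θ - v)) := by
  fun_prop

noncomputable def flowAverage (θ v : ι → ℝ) (T : ℝ) : C(UnitAddTorus ι, ℂ) →ₗ[ℂ] ℂ where
  toFun f := (T : ℂ)⁻¹ * ∫ t in (0)..T, f (toTorus (t • θ - v))
  map_add' f g := by
    simp only [ContinuousMap.add_apply]
    rw [intervalIntegral.integral_add ((continuous_flow f θ v).intervalIntegrable _ _)
      ((continuous_flow g θ v).intervalIntegrable _ _), mul_add]
  map_smul' c f := by
    simp only [ContinuousMap.smul_apply, smul_eq_mul, intervalIntegral.integral_const_mul,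
      RingHom.id_apply]
    ring

theorem flowAverage_apply (θ v : ι → ℝ) (T : ℝ) (f : C(UnitAddTorus ι, ℂ)) :
    flowAverage θ v T f = (T : ℂ)⁻¹ * ∫ t in (0)..T, f (toTorus (t • θ - v)) :=
  rfl

theorem norm_flowAverage_le (θ v : ι → ℝ) (T : ℝ) (f : C(UnitAddTorus ι, ℂ)) :
    ‖flowAverage θ v T f‖ ≤ ‖f‖ := by
  have hint : ‖∫ t in (0)..T, f (toTorus (t • θ - v))‖ ≤ ‖f‖ * |T - 0| :=
    intervalIntegral.norm_integral_le_of_norm_le_const fun t _ => f.norm_coe_le_norm _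
  rw [flowAverage_apply, norm_mul, norm_inv, norm_real, Real.norm_eq_abs]
  rcases eq_or_ne T 0 with rfl | hT
  · simp
  · calc |T|⁻¹ * ‖∫ t in (0)..T, f (toTorus (t • θ - v))‖ ≤ |T|⁻¹ * (‖f‖ * |T - 0|) := by
          gcongr
      _ = ‖f‖ := by
          rw [sub_zero, mul_comm ‖f‖, ← mul_assoc, inv_mul_cancel₀ (abs_ne_zero.mpr hT), one_mul]

variable [Fintype ι]

theorem dist_toTorus_lt_iff {x y : ι → ℝ} {ε : ℝ} (hε : 0 < ε) :
    dist (toTorus x) (toTorus y) < ε ↔ ∀ i, znorm (x i - y i) < ε := by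
  rw [dist_pi_lt_iff hε]
  simp only [toTorus, dist_eq_norm, ← AddCircle.coe_sub, UnitAddCircle.norm_eq]
  rfl

theorem mFourier_toTorus (n : ι → ℤ) (x : ι → ℝ) :
    mFourier n (toTorus x) = exp (2 * π * I * ∑ i, (n i : ℝ) * x i) := by
  simp only [mFourier, ContinuousMap.coe_mk, toTorus, fourier_coe_apply, ← exp_sum]
  push_cast
  rw [Finset.mul_sum]
  refine congrArg exp (Finset.sum_congr rfl fun i _ => ?_)
  ring

theorem flowAverage_mFourier (θ v : ι → ℝ) (T : ℝ) (n : ι → ℤ) :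
    flowAverage θ v T (mFourier n) = exp (-(2 * π * I * (∑ i, (n i : ℝ) * v i : ℝ))) *
      ((T : ℂ)⁻¹ * ∫ t in (0)..T, exp (2 * π * I * (∑ i, (n i : ℝ) * θ i : ℝ) * t)) := by
  have hpoint : ∀ t : ℝ, mFourier n (toTorus (t • θ - v)) =
      exp (-(2 * π * I * (∑ i, (n i : ℝ) * v i : ℝ))) *
        exp (2 * π * I * (∑ i, (n i : ℝ) * θ i : ℝ) * t) := by
    intro t
    rw [mFourier_toTorus, ← exp_add]
    congr 1
    simp only [Pi.sub_apply, Pi.smul_apply, smul_eq_mul, mul_sub, Finset.sum_sub_distrib]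
    push_cast
    simp only [mul_left_comm _ (t : ℂ), ← Finset.mul_sum]
    ring
  simp only [flowAverage_apply, hpoint, intervalIntegral.integral_const_mul]
  ring


theorem sum_zsmul_toTorus (n : ι → ℤ) (x : ι → ℝ) :
    ∑ i, n i • toTorus x i = ((∑ i, (n i : ℝ) * x i : ℝ) : UnitAddCircle) := by
  simp only [toTorus, ← AddCircle.coe_zsmul, zsmul_eq_mul]
  exact (map_sum (QuotientAddGroup.mk' (AddSubgroup.zmultiples (1 : ℝ))) _ _).symm

theorem exists_int_sum_mul_eq_of_mem_closure {θ α : ι → ℝ}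
    (hα : toTorus α ∈ closure (Set.range fun t : ℝ => toTorus (t • θ))) (n : ι → ℤ)
    (hn : ∑ i, (n i : ℝ) * θ i = 0) : ∃ m : ℤ, ∑ i, (n i : ℝ) * α i = m := by
  let L : UnitAddTorus ι → UnitAddCircle := fun x => ∑ i, n i • x i
  have hL : Set.range (fun t : ℝ => toTorus (t • θ)) ⊆ L ⁻¹' {0} := by
    rintro _ ⟨t, rfl⟩
    simp only [Set.mem_preimage, Set.mem_singleton_iff, L, sum_zsmul_toTorus, Pi.smul_apply,
      smul_eq_mul, mul_left_comm _ t, ← Finset.mul_sum, hn, mul_zero, AddCircle.coe_zero]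
  have hclosed : IsClosed (L ⁻¹' {0}) := isClosed_singleton.preimage (by fun_prop)
  have h0 : L (toTorus α) = 0 := closure_minimal hL hclosed hα
  rw [show L (toTorus α) = _ from sum_zsmul_toTorus n α, AddCircle.coe_eq_zero_iff] at h0
  obtain ⟨m, hm⟩ := h0
  exact ⟨m, by simpa using hm.symm⟩

theorem tendsto_flowAverage_sub {θ v w : ι → ℝ}
    (h : ∀ n : ι → ℤ, ∑ i, (n i : ℝ) * θ i = 0 → ∃ m : ℤ, ∑ i, (n i : ℝ) * (v i - w i) = m)
    (f : C(UnitAddTorus ι, ℂ)) :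
    Tendsto (fun T => flowAverage θ v T f - flowAverage θ w T f) atTop (𝓝 0) := by
  refine tendsto_zero_of_dense_span (fun T => flowAverage θ v T - flowAverage θ w T) (C := 2)
    (fun T f => ?_) span_mFourier_closure_eq_top ?_ f
  · calc ‖flowAverage θ v T f - flowAverage θ w T f‖
        ≤ ‖flowAverage θ v T f‖ + ‖flowAverage θ w T f‖ := norm_sub_le _ _
      _ ≤ 2 * ‖f‖ := by linarith [norm_flowAverage_le θ v T f, norm_flowAverage_le θ w T f]
  rintro _ ⟨n, rfl⟩
  simp only [LinearMap.sub_apply, flowAverage_mFourier, ← sub_mul]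
  by_cases hn : ∑ i, (n i : ℝ) * θ i = 0
  · obtain ⟨m, hm⟩ := h n hn
    simp only [mul_sub, Finset.sum_sub_distrib, sub_eq_iff_eq_add'] at hm
    have hvw : exp (-(2 * π * I * (∑ i, (n i : ℝ) * v i : ℝ))) =
        exp (-(2 * π * I * (∑ i, (n i : ℝ) * w i : ℝ))) := by
      rw [exp_eq_exp_iff_exists_int, hm]
      exact ⟨-m, by push_cast; ring⟩
    simp only [hvw, sub_self, zero_mul, tendsto_const_nhds]
  · have hb : 2 * π * I * (∑ i, (n i : ℝ) * θ i : ℝ) ≠ 0 :=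
      mul_ne_zero (by simp [Real.pi_ne_zero]) (ofReal_ne_zero.mpr hn)
    simpa using (tendsto_average_exp hb (by simp)).const_mul _

theorem exists_pos_dist_toTorus_smul_lt {θ α : ι → ℝ}
    (hα : ∀ n : ι → ℤ, ∑ i, (n i : ℝ) * θ i = 0 → ∃ m : ℤ, ∑ i, (n i : ℝ) * α i = m)
    {ε : ℝ} (hε : 0 < ε) : ∃ t > (0 : ℝ), dist (toTorus (t • θ)) (toTorus α) < ε := by
  by_contra! hfar
  let bump : C(UnitAddTorus ι, ℂ) := ⟨fun x => ((max 0 (ε - ‖x‖) : ℝ) : ℂ), by fun_prop⟩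
  have hbump : ∀ (t : ℝ) (v : ι → ℝ),
      bump (toTorus (t • θ - v)) = ((max 0 (ε - dist (toTorus (t • θ)) (toTorus v)) : ℝ) : ℂ) := by
    intro t v
    rw [dist_eq_norm, ← toTorus_sub]
    rfl
  obtain ⟨U, hU⟩ := exists_finset_forall_le_sum_bump (fun t : ℝ => toTorus (t • θ)) hε
  have hzero : ∀ T > 0, flowAverage θ α T bump = 0 := by
    intro T hT
    rw [flowAverage_apply, intervalIntegral.integral_zero_ae, mul_zero]
    refine ae_of_all _ fun t ht => ?_
    rw [Set.uIoc_of_le hT.le] at ht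
    rw [hbump, max_eq_left (by linarith [hfar t ht.1]), ofReal_zero]
  have horbit : ∀ u : ℝ, Tendsto (fun T => flowAverage θ (u • θ) T bump) atTop (𝓝 0) := by
    intro u
    refine (tendsto_flowAverage_sub (θ := θ) (v := u • θ) (w := α) (fun n hn => ?_) bump).congr'
      ?_
    · obtain ⟨m, hm⟩ := hα n hn
      refine ⟨-m, ?_⟩
      simp only [Pi.smul_apply, smul_eq_mul, mul_sub, Finset.sum_sub_distrib, hm,
        mul_left_comm _ u, ← Finset.mul_sum, hn]
      push_cast
      ring
    · filter_upwards [eventually_gt_atTop 0] with T hT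
      rw [hzero T hT, sub_zero]
  have hsum : ∀ T, ∑ u ∈ U, flowAverage θ (u • θ) T bump = ((T⁻¹ * ∫ t in (0)..T,
      ∑ u ∈ U, max 0 (ε - dist (toTorus (t • θ)) (toTorus (u • θ))) : ℝ) : ℂ) := by
    intro T
    simp only [flowAverage_apply, hbump, intervalIntegral.integral_ofReal, ← Finset.mul_sum]
    rw [intervalIntegral.integral_finsetSum fun u _ =>
      (by fun_prop : Continuous _).intervalIntegrable _ _]
    push_cast
    rfl
  have hlow : ∀ᶠ T in atTop, ε / 2 ≤ ‖∑ u ∈ U, flowAverage θ (u • θ) T bump‖ := by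
    filter_upwards [eventually_gt_atTop 0] with T hT
    rw [hsum, norm_real, Real.norm_eq_abs]
    have hcont : Continuous fun t : ℝ =>
        ∑ u ∈ U, max 0 (ε - dist (toTorus (t • θ)) (toTorus (u • θ))) := by
      fun_prop
    exact (le_average_of_forall_le (hcont.intervalIntegrable _ _) hU hT).trans (le_abs_self _)
  have hlim := (tendsto_finsetSum U fun u _ => horbit u).norm
  rw [Finset.sum_const_zero, norm_zero] at hlim
  linarith [ge_of_tendsto hlim hlow]

end Torus

theorem exists_rat_dual_of_notMem {κ : Type*} [Fintype κ] {M : AddSubgroup (κ → ℤ)} {e : κ → ℤ}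
    (he : e ∉ M) : ∃ ρ : κ → ℚ,
      (∀ m ∈ M, ∃ z : ℤ, ∑ r, (m r : ℚ) * ρ r = z) ∧ ∀ z : ℤ, ∑ r, (e r : ℚ) * ρ r ≠ z := by
  classical
  obtain ⟨c, hc⟩ := CharacterModule.exists_character_apply_ne_zero_of_ne_zero
    (a := QuotientAddGroup.mk' M e)
    (by rwa [ne_eq, QuotientAddGroup.mk'_apply, QuotientAddGroup.eq_zero_iff])
  let ψ := c.comp (QuotientAddGroup.mk' M)
  choose ρ hρ using fun r : κ =>
    QuotientAddGroup.mk_surjective (ψ fun j => if r = j then 1 else 0)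
  have hψ : ∀ m, ψ m = ((∑ r, (m r : ℚ) * ρ r : ℚ) : AddCircle (1 : ℚ)) := by
    intro m
    rw [← AddMonoidHom.coe_toIntLinearMap, LinearMap.pi_apply_eq_sum_univ]
    simp only [AddMonoidHom.coe_toIntLinearMap, ← hρ, ← AddCircle.coe_zsmul, zsmul_eq_mul]
    exact (map_sum (QuotientAddGroup.mk' (AddSubgroup.zmultiples (1 : ℚ))) _ _).symm
  refine ⟨ρ, fun m hm => ?_, fun z hz => hc ?_⟩
  · have : ψ m = 0 := by
      change c (QuotientAddGroup.mk' M m) = 0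
      rw [QuotientAddGroup.mk'_apply, (QuotientAddGroup.eq_zero_iff m).mpr hm, map_zero]
    obtain ⟨z, hz⟩ := (AddCircle.coe_eq_zero_iff 1).mp (hψ m ▸ this)
    exact ⟨z, by simpa using hz.symm⟩
  · change ψ e = 0
    rw [hψ, hz, AddCircle.coe_eq_zero_iff]
    exact ⟨z, by simp⟩

section Partition

open Function

variable {ι κ : Type*} {P : κ → Finset ι} {β : ι → κ}

theorem mem_iff_eq_of_pairwise_disjoint (hdisj : Pairwise (Disjoint on P)) (hβ : ∀ j, j ∈ P (β j))
    (j : ι) (r : κ) : j ∈ P r ↔ β j = r := by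
  refine ⟨fun hj => ?_, fun h => h ▸ hβ j⟩
  by_contra hne
  exact Finset.disjoint_left.mp (hdisj hne) (hβ j) hj

theorem sum_mul_comp_eq_sum_blockSum [Fintype ι] [Fintype κ] [DecidableEq κ]
    (hP : ∀ j r, j ∈ P r ↔ β j = r) (ℓ : ι → ℤ) (ρ : κ → ℝ) :
    ∑ j, (ℓ j : ℝ) * ρ (β j) = ∑ r, ((∑ j ∈ P r, ℓ j : ℤ) : ℝ) * ρ r := by
  have hfilter : ∀ r, P r = ({j | β j = r} : Finset ι) := fun r => by ext j; simp [hP]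
  rw [← Finset.sum_fiberwise Finset.univ β]
  refine Finset.sum_congr rfl fun r _ => ?_
  rw [hfilter r, Int.cast_sum, Finset.sum_mul]
  refine Finset.sum_congr rfl fun j hj => ?_
  rw [(Finset.mem_filter.mp hj).2]

theorem eq_single_sub_single_iff [DecidableEq κ] {r₁ r₂ : κ} (hne : r₁ ≠ r₂) (σ : κ → ℤ) :
    σ = Pi.single r₂ 1 - Pi.single r₁ 1 ↔
      (∀ r, r ≠ r₁ → r ≠ r₂ → σ r = 0) ∧ σ r₁ = -1 ∧ σ r₂ = 1 := by
  constructor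
  · rintro rfl
    refine ⟨fun r h₁ h₂ => ?_, ?_, ?_⟩ <;> simp [*, hne.symm]
  · rintro ⟨h0, h₁, h₂⟩
    ext r
    by_cases hr₁ : r = r₁
    · subst hr₁; simp [h₁, hne]
    by_cases hr₂ : r = r₂
    · subst hr₂; simp [h₂, hne.symm]
    simp [h0 r hr₁ hr₂, hr₁, hr₂]

theorem sum_single_sub_single_mul {R : Type*} [CommRing R] [Fintype κ] [DecidableEq κ]
    (r₁ r₂ : κ) (ρ : κ → R) :
    ∑ r, (((Pi.single r₂ 1 - Pi.single r₁ 1 : κ → ℤ) r : ℤ) : R) * ρ r = ρ r₂ - ρ r₁ := by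
  simp [Pi.single_apply, sub_mul, Finset.sum_sub_distrib]

theorem exists_dual_of_not_exists_relation [Fintype ι] [Fintype κ] [DecidableEq κ]
    {θ : ι → ℝ} {r₁ r₂ : κ}
    (h : ¬ ∃ ℓ : ι → ℤ, ∑ j, (ℓ j : ℝ) * θ j = 0 ∧
      (fun r => ∑ j ∈ P r, ℓ j) = Pi.single r₂ 1 - Pi.single r₁ 1) :
    ∃ ρ : κ → ℝ, (∀ n : ℤ, ρ r₁ - ρ r₂ ≠ n) ∧ ∀ ℓ : ι → ℤ, ∑ j, (ℓ j : ℝ) * θ j = 0 →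
      ∃ m : ℤ, ∑ r, ((∑ j ∈ P r, ℓ j : ℤ) : ℝ) * ρ r = m := by
  let blockSum : (ι → ℤ) →+ (κ → ℤ) := AddMonoidHom.mk' (fun ℓ r => ∑ j ∈ P r, ℓ j)
    fun ℓ ℓ' => by ext r; simp [Finset.sum_add_distrib]
  let relation : (ι → ℤ) →+ ℝ := AddMonoidHom.mk' (fun ℓ => ∑ j, (ℓ j : ℝ) * θ j)
    fun ℓ ℓ' => by simp [add_mul, Finset.sum_add_distrib]
  obtain ⟨ρ, hM, he⟩ := exists_rat_dual_of_notMem (M := relation.ker.map blockSum)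
    (e := Pi.single r₂ 1 - Pi.single r₁ 1) fun ⟨ℓ, hℓ, hσ⟩ => h ⟨ℓ, hℓ, hσ⟩
  refine ⟨fun r => ρ r, fun n hn => he (-n) ?_, fun ℓ hℓ => ?_⟩
  · beta_reduce at hn
    have hn' : ρ r₁ - ρ r₂ = n := by exact_mod_cast hn
    rw [sum_single_sub_single_mul]
    push_cast
    linarith
  · obtain ⟨z, hz⟩ := hM _ ⟨ℓ, hℓ, rfl⟩
    have hz' : ∑ r, ((∑ j ∈ P r, ℓ j : ℤ) : ℚ) * ρ r = z := hz
    exact ⟨z, by beta_reduce; exact_mod_cast hz'⟩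

end Partition

theorem nonDegenerate_iff {k s : ℕ} {θ : Fin k → ℝ} {P : Fin s → Finset (Fin k)}
    {β : Fin k → Fin s} (hβ : ∀ j r, j ∈ P r ↔ β j = r) :
    NonDegenerate θ P ↔ ∃ ρ : Fin s → ℝ, (∃ r₁ r₂, ∀ n : ℤ, ρ r₁ - ρ r₂ ≠ n) ∧
      ∀ ℓ : Fin k → ℤ, ∑ j, (ℓ j : ℝ) * θ j = 0 →
        ∃ m : ℤ, ∑ r, ((∑ j ∈ P r, ℓ j : ℤ) : ℝ) * ρ r = m := by
  have happrox : ∀ (ρ : Fin s → ℝ) (t : ℝ) {ε : ℝ}, 0 < ε →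
      ((∀ r, ∀ j ∈ P r, znorm (t * θ j - ρ r) < ε) ↔
        dist (toTorus (t • θ)) (toTorus (ρ ∘ β)) < ε) := by
    intro ρ t ε hε
    rw [dist_toTorus_lt_iff hε]
    refine ⟨fun h j => h _ j ((hβ j _).mpr rfl), fun h r j hj => ?_⟩
    obtain rfl := (hβ j r).mp hj
    exact h j
  refine exists_congr fun ρ => and_congr_right fun _ => ?_
  simp only [← sum_mul_comp_eq_sum_blockSum hβ]
  constructor
  · intro h ℓ hℓ
    refine exists_int_sum_mul_eq_of_mem_closure
      (Metric.mem_closure_range_iff.mpr fun ε hε => ?_) ℓ hℓ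
    obtain ⟨t, -, ht⟩ := h ε hε
    exact ⟨t, by rw [dist_comm]; exact (happrox ρ t hε).mp ht⟩
  · intro h ε hε
    obtain ⟨t, ht0, ht⟩ := exists_pos_dist_toTorus_smul_lt h hε
    exact ⟨t, ht0, (happrox ρ t hε).mpr ht⟩

theorem stmt_2 {k s : ℕ} (θ : Fin k → ℝ) (P : Fin s → Finset (Fin k))
    (hdisj : ∀ r r', r ≠ r' → Disjoint (P r) (P r'))
    (hcover : ∀ j : Fin k, ∃ r, j ∈ P r) :
    NonDegenerate θ P ↔
      ∃ r₁ r₂ : Fin s, r₁ ≠ r₂ ∧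
        ¬ ∃ ℓ : Fin k → ℤ,
          (∑ j, (ℓ j : ℝ) * θ j = 0) ∧
          (∀ r, r ≠ r₁ → r ≠ r₂ → ∑ j ∈ P r, ℓ j = 0) ∧
          (∑ j ∈ P r₁, ℓ j = -1) ∧ (∑ j ∈ P r₂, ℓ j = 1) := by
  choose β hβ using hcover
  rw [nonDegenerate_iff (mem_iff_eq_of_pairwise_disjoint hdisj hβ)]
  constructor
  · rintro ⟨ρ, ⟨r₁, r₂, hρ⟩, hint⟩
    have hne : r₁ ≠ r₂ := fun h => hρ 0 (by simp [h])
    refine ⟨r₁, r₂, hne, fun ⟨ℓ, hℓ, hσ⟩ => ?_⟩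
    obtain ⟨m, hm⟩ := hint ℓ hℓ
    rw [← eq_single_sub_single_iff hne] at hσ
    simp only [fun r => congrFun hσ r, sum_single_sub_single_mul] at hm
    exact hρ (-m) (by push_cast; linarith)
  · rintro ⟨r₁, r₂, hne, h⟩
    simp only [← eq_single_sub_single_iff hne] at h
    obtain ⟨ρ, hρ, hint⟩ := exists_dual_of_not_exists_relation h
    exact ⟨ρ, ⟨r₁, r₂, hρ⟩, hint⟩
end

section
/- Let X be a finite index set, K ⊆ X nonempty, and let M ∈ ℂ^{X×X} and H ∈ ℂ^{K×K} be normal matrices with spectral decompositions M = Σ_{i=1}^d θ_i E_i and H = Σ_{j=1}^r ρ_j F_j (the E_i, F_j self-adjoint projections). The following are equivalent: (1) K is H-cospectral in M; (2) H commutes with (M^k)_{K×K} for all k ≥ 0; (3) H commutes with (E_i)_{K×K} for all i; (4) F_j commutes with (E_i)_{K×K} for all i, j; (5) for any eigenvectors v, w of H belonging to different eigenvalues, ⟨(E_i)_{K×K} v, w⟩ = 0 for all i; (6) for each i there is an orthonormal basis of im E_i which, for each j, contains exactly dim{ E_i v̂ : v ∈ im F_j } vectors ψ whose restriction ψ_K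 is a nonzero element of im F_j, and all remaining basis vectors satisfy ψ_K = 0; (7) for any eigenvectors v, w of H belonging to different eigenvalues, the subspaces span{ M^k v̂ : k ≥ 0 } and span{ M^k ŵ : k ≥ 0 } are orthogonal. -/
/-!
Write `M = ∑ θᵢ Eᵢ` and `H = ∑ ρⱼ Fⱼ`. Since `M ^ k = ∑ θᵢ ^ k Eᵢ` with distinct `θᵢ`, Lagrange
interpolation turns commuting with every `(M ^ k)_{K×K}` into commuting with every
`(Eᵢ)_{K×K}`; in the same way commuting with `H` is commuting with every `Fⱼ`, and the identity
`⟨M ^ a v̂, M ^ b ŵ⟩ = ∑ᵢ conj θᵢ ^ a θᵢ ^ b ⟨(Eᵢ)_{K×K} v, w⟩` makes (5) and (7) equivalent.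
Given (4), `im Eᵢ` is the orthogonal sum of the pieces `Eᵢ (im Fⱼ)^` and of the orthogonal
complement of their sum; vectors of a piece restrict into `im Fⱼ` and vectors of the complement
vanish on `K`, so orthonormal bases of the pieces give (6), and their union over `i` is the
eigenbasis of (1). Conversely, a cospectral eigenbasis `ψₐ` gives
`(M ^ k)_{K×K} = ∑ₐ μₐ ^ k (ψₐ)_K (ψₐ)_K*`, and each rank-one term commutes with the normal
matrix `H` because `(ψₐ)_K` is also an eigenvector of `Hᴴ`.
-/

open Matrix Set

variable {X : Type*}

/-- The standard Hermitian inner product `⟨v,w⟩ = v* w`. -/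
noncomputable def hermInner {n : Type*} [Fintype n] (v w : n → ℂ) : ℂ :=
  ∑ x, star (v x) * w x

/-- Restriction of a vector on `X` to the coordinates in `K`. -/
def restr (K : Set X) (ψ : X → ℂ) : K → ℂ := fun k => ψ k

/-- Extension of a vector on `K` by zeros to all of `X`. -/
def extz (K : Set X) [DecidablePred (· ∈ K)] (v : K → ℂ) : X → ℂ :=
  fun x => if h : x ∈ K then v ⟨x, h⟩ else 0

/-- The `K × K` submatrix of a matrix indexed by `X`. -/
def subK (K : Set X) (A : Matrix X X ℂ) : Matrix K K ℂ :=
  A.submatrix (fun k : K => (k : X)) (fun k : K => (k : X))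

/-- `K` is `H`-cospectral in `M`: `M` has an orthonormal eigenbasis each of whose members
restricts on `K` either to zero or to an eigenvector of `H`. -/
noncomputable def IsHCospectral [Fintype X] [DecidableEq X] (K : Set X) [DecidablePred (· ∈ K)]
    (M : Matrix X X ℂ) (H : Matrix K K ℂ) : Prop :=
  ∃ ψ : X → (X → ℂ),
    (∀ a b, hermInner (ψ a) (ψ b) = if a = b then 1 else 0) ∧
    (∀ a, ∃ μ : ℂ, M.mulVec (ψ a) = μ • ψ a) ∧
    (∀ a, restr K (ψ a) = 0 ∨
      (restr K (ψ a) ≠ 0 ∧ ∃ μ : ℂ, H.mulVec (restr K (ψ a)) = μ • restr K (ψ a)))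

lemma sum_eval_smul_eq_zero_of_forall_sum_pow_smul_eq_zero {𝕜 V ι : Type*} [Field 𝕜]
    [AddCommGroup V] [Module 𝕜 V] [Fintype ι] {θ : ι → 𝕜} {c : ι → V}
    (h : ∀ k : ℕ, ∑ i, θ i ^ k • c i = 0) (p : Polynomial 𝕜) : ∑ i, p.eval (θ i) • c i = 0 := by
  simp only [Polynomial.eval_eq_sum_range, Finset.sum_smul, mul_smul]
  rw [Finset.sum_comm]
  simp [← Finset.smul_sum, h]

lemma eq_zero_of_forall_sum_pow_smul_eq_zero {𝕜 V ι : Type*} [Field 𝕜]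
    [AddCommGroup V] [Module 𝕜 V] [Fintype ι] {θ : ι → 𝕜} (hθ : Function.Injective θ)
    {c : ι → V} (h : ∀ k : ℕ, ∑ i, θ i ^ k • c i = 0) (i : ι) : c i = 0 := by
  classical
  have := sum_eval_smul_eq_zero_of_forall_sum_pow_smul_eq_zero h (Lagrange.basis .univ θ i)
  rwa [Finset.sum_eq_single i (fun j _ hji => by rw [Lagrange.eval_basis_of_ne hji.symm
    (Finset.mem_univ j), zero_smul]) (by simp), Lagrange.eval_basis_self hθ.injOn
    (Finset.mem_univ i), one_smul] at this

lemma commute_of_forall_commute_sum_pow_smul {𝕜 R ι : Type*} [Field 𝕜] [Ring R] [Algebra 𝕜 R]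
    [Fintype ι] {θ : ι → 𝕜} (hθ : Function.Injective θ) {B : R} {C : ι → R}
    (h : ∀ k : ℕ, Commute B (∑ i, θ i ^ k • C i)) (i : ι) : Commute B (C i) := by
  refine sub_eq_zero.mp (eq_zero_of_forall_sum_pow_smul_eq_zero (c := fun i => B * C i - C i * B)
    hθ (fun k => ?_) i)
  simpa [smul_sub, Finset.sum_sub_distrib, Finset.mul_sum, Finset.sum_mul, sub_eq_zero]
    using (h k).eq

section Idempotents

variable {𝕜 R ι : Type*} [CommSemiring 𝕜] [Semiring R] [Algebra 𝕜 R] [Fintype ι] {E : ι → R}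

namespace OrthogonalIdempotents

lemma mul_sum_smul (hE : OrthogonalIdempotents E) (θ : ι → 𝕜) (i : ι) :
    E i * ∑ j, θ j • E j = θ i • E i := by
  classical
  simp [Finset.mul_sum, hE.mul_eq]

lemma sum_smul_mul (hE : OrthogonalIdempotents E) (θ : ι → 𝕜) (i : ι) :
    (∑ j, θ j • E j) * E i = θ i • E i := by
  classical
  simp [Finset.sum_mul, hE.mul_eq]

lemma sum_smul_mul_sum_smul (hE : OrthogonalIdempotents E) (α β : ι → 𝕜) :
    (∑ i, α i • E i) * ∑ i, β i • E i = ∑ i, (α i * β i) • E i := by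
  simp [Finset.sum_mul, hE.mul_sum_smul, smul_smul]

end OrthogonalIdempotents

lemma CompleteOrthogonalIdempotents.sum_smul_pow (hE : CompleteOrthogonalIdempotents E)
    (θ : ι → 𝕜) (k : ℕ) : (∑ i, θ i • E i) ^ k = ∑ i, θ i ^ k • E i := by
  induction k with
  | zero => simp [hE.complete]
  | succ k ih => simp [pow_succ, ih, hE.sum_smul_mul_sum_smul]

end Idempotents

lemma CompleteOrthogonalIdempotents.commute_of_commute_sum_smul {𝕜 R ι : Type*} [Field 𝕜]
    [Ring R] [Algebra 𝕜 R] [Fintype ι] {E : ι → R} (hE : CompleteOrthogonalIdempotents E)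
    {θ : ι → 𝕜} (hθ : Function.Injective θ) {C : R} (h : Commute (∑ i, θ i • E i) C) (i : ι) :
    Commute (E i) C :=
  (commute_of_forall_commute_sum_pow_smul hθ (fun k => by
    rw [← hE.sum_smul_pow]; exact (h.pow_left k).symm) i).symm

lemma Matrix.mulVec_eq_zero_of_sum_smul_mulVec_eq_smul {𝕜 n ι : Type*} [Field 𝕜] [Fintype n]
    [DecidableEq n] [Fintype ι] {E : ι → Matrix n n 𝕜} (hE : OrthogonalIdempotents E)
    {θ : ι → 𝕜} {v : n → 𝕜} {μ : 𝕜} (hv : (∑ j, θ j • E j) *ᵥ v = μ • v) {i : ι}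
    (hi : θ i ≠ μ) : E i *ᵥ v = 0 := by
  have h : θ i • E i *ᵥ v = μ • E i *ᵥ v := by
    rw [← smul_mulVec, ← hE.mul_sum_smul, ← mulVec_mulVec, hv, mulVec_smul]
  exact smul_right_injective _ (sub_ne_zero.mpr hi) (by simpa [sub_smul, sub_eq_zero] using h)

section HermInner

variable {m n : Type*} [Fintype m] [Fintype n]

lemma hermInner_eq_star_dotProduct (v w : n → ℂ) : hermInner v w = star v ⬝ᵥ w := rfl

lemma hermInner_conj_symm (v w : n → ℂ) : hermInner w v = star (hermInner v w) := by
  simp [hermInner, star_sum, mul_comm]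

@[simp] lemma hermInner_zero_left (v : n → ℂ) : hermInner 0 v = 0 := by simp [hermInner]

@[simp] lemma hermInner_zero_right (v : n → ℂ) : hermInner v 0 = 0 := by simp [hermInner]

open scoped ComplexOrder in
lemma hermInner_self_eq_zero {v : n → ℂ} : hermInner v v = 0 ↔ v = 0 := by
  rw [hermInner_eq_star_dotProduct, dotProduct_star_self_eq_zero]

lemma hermInner_mulVec_left (A : Matrix m n ℂ) (v : n → ℂ) (w : m → ℂ) :
    hermInner (A *ᵥ v) w = hermInner v (Aᴴ *ᵥ w) := by
  simp [hermInner_eq_star_dotProduct, star_mulVec, dotProduct_mulVec]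

lemma hermInner_ofLp (x y : EuclideanSpace ℂ n) : hermInner x.ofLp y.ofLp = inner ℂ x y := by
  simp [hermInner_eq_star_dotProduct, EuclideanSpace.inner_eq_star_dotProduct, dotProduct_comm]

end HermInner

lemma Matrix.sum_smul_mulVec_mulVec {𝕜 n ι : Type*} [CommSemiring 𝕜] [Fintype n]
    [DecidableEq n] [Fintype ι] {E : ι → Matrix n n 𝕜} (hE : OrthogonalIdempotents E)
    (θ : ι → 𝕜) (i : ι) (v : n → 𝕜) : (∑ j, θ j • E j) *ᵥ (E i *ᵥ v) = θ i • (E i *ᵥ v) := by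
  rw [mulVec_mulVec, hE.sum_smul_mul, smul_mulVec]

lemma hermInner_eq_zero_of_mem_range_of_mem_range {n ι : Type*} [Fintype n]
    [DecidableEq n] {E : ι → Matrix n n ℂ} (hE : OrthogonalIdempotents E)
    (hEh : ∀ i, (E i).IsHermitian) {i i' : ι} (hii' : i ≠ i') {u u' : n → ℂ}
    (hu : u ∈ LinearMap.range (E i).mulVecLin) (hu' : u' ∈ LinearMap.range (E i').mulVecLin) :
    hermInner u u' = 0 := by
  obtain ⟨y, rfl⟩ := hu
  obtain ⟨y', rfl⟩ := hu'
  rw [mulVecLin_apply, mulVecLin_apply, hermInner_mulVec_left, (hEh i).eq, mulVec_mulVec,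
    hE.ortho hii', zero_mulVec, hermInner_zero_right]

lemma subK_sum_smul_vecMulVec_star (K : Set X) {ι : Type*} [Fintype ι] (c : ι → ℂ) (u : ι → X → ℂ) :
    subK K (∑ a, c a • vecMulVec (u a) (star (u a))) =
      ∑ a, c a • vecMulVec (restr K (u a)) (star (restr K (u a))) := by
  ext k l
  simp [subK, vecMulVec_apply, Matrix.sum_apply, restr]

lemma subK_sum_smul (K : Set X) {ι : Type*} [Fintype ι] (c : ι → ℂ) (A : ι → Matrix X X ℂ) :
    subK K (∑ i, c i • A i) = ∑ i, c i • subK K (A i) := by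
  ext k l
  simp [subK, Matrix.sum_apply]

lemma Matrix.IsHermitian.subK {A : Matrix X X ℂ} (hA : A.IsHermitian) (K : Set X) :
    (subK K A).IsHermitian :=
  hA.submatrix _

section Restriction

variable (K : Set X) [DecidablePred (· ∈ K)]

lemma star_extz (v : K → ℂ) : star (extz K v) = extz K (star v) := by
  ext x
  by_cases hx : x ∈ K <;> simp [extz, hx]

variable [Fintype X]

lemma dotProduct_extz (u : X → ℂ) (v : K → ℂ) : u ⬝ᵥ extz K v = restr K u ⬝ᵥ v := by
  rw [dotProduct, ← Fintype.sum_subtype_add_sum_subtype (· ∈ K), add_eq_left.mpr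
    (Finset.sum_eq_zero fun x _ => by simp [extz, x.2])]
  simp [extz, restr, dotProduct]

lemma restr_mulVec_extz (A : Matrix X X ℂ) (v : K → ℂ) :
    restr K (A *ᵥ extz K v) = subK K A *ᵥ v := by
  ext k
  exact dotProduct_extz K _ v

lemma hermInner_extz_left (v : K → ℂ) (ψ : X → ℂ) :
    hermInner (extz K v) ψ = hermInner v (restr K ψ) := by
  rw [hermInner_eq_star_dotProduct, star_extz, dotProduct_comm, dotProduct_extz,
    dotProduct_comm]
  rfl

end Restriction

section Normal

variable {n : Type*} [Fintype n]

lemma conjTranspose_mulVec_eq_zero_of_commute {B : Matrix n n ℂ} (hB : Commute B Bᴴ)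
    {u : n → ℂ} (hu : B *ᵥ u = 0) : Bᴴ *ᵥ u = 0 := by
  rw [← hermInner_self_eq_zero, hermInner_mulVec_left, conjTranspose_conjTranspose,
    mulVec_mulVec, hB.eq, ← mulVec_mulVec, hu, mulVec_zero, hermInner_zero_right]

variable [DecidableEq n]

lemma conjTranspose_mulVec_eq_star_smul_of_commute {A : Matrix n n ℂ} (hA : Commute A Aᴴ)
    {u : n → ℂ} {μ : ℂ} (hu : A *ᵥ u = μ • u) : Aᴴ *ᵥ u = star μ • u := by
  have hB : Commute (A - μ • 1) (A - μ • 1)ᴴ := by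
    rw [conjTranspose_sub, conjTranspose_smul, conjTranspose_one]
    exact (hA.sub_right ((Commute.one_right A).smul_right _)).sub_left
      ((Commute.one_left _).smul_left _)
  have := conjTranspose_mulVec_eq_zero_of_commute hB (u := u)
    (by simp [sub_mulVec, smul_mulVec, hu])
  simpa [sub_mulVec, smul_mulVec, sub_eq_zero] using this

lemma commute_vecMulVec_star {A : Matrix n n ℂ} (hA : Commute A Aᴴ)
    {u : n → ℂ} {μ : ℂ} (hu : A *ᵥ u = μ • u) : Commute A (vecMulVec u (star u)) := by
  have hu' : star u ᵥ* A = μ • star u := by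
    simpa [star_mulVec] using
      congrArg star (conjTranspose_mulVec_eq_star_smul_of_commute hA hu)
  rw [Commute, SemiconjBy, mul_vecMulVec, vecMulVec_mul, hu, hu', smul_vecMulVec,
    vecMulVec_smul]

lemma pow_mulVec_eq_pow_smul {R : Type*} [CommSemiring R] {A : Matrix n n R} {u : n → R} {μ : R}
    (hu : A *ᵥ u = μ • u) (k : ℕ) : (A ^ k) *ᵥ u = μ ^ k • u := by
  induction k with
  | zero => simp
  | succ k ih => rw [pow_succ', ← mulVec_mulVec, ih, mulVec_smul, hu, smul_smul, pow_succ]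

lemma sum_vecMulVec_star_eq_one {ψ : n → n → ℂ}
    (hψ : ∀ a b, hermInner (ψ a) (ψ b) = if a = b then 1 else 0) :
    ∑ a, vecMulVec (ψ a) (star (ψ a)) = 1 := by
  let P : Matrix n n ℂ := of fun x a => ψ a x
  have hP : Pᴴ * P = 1 := by
    ext a b
    simpa [P, mul_apply, one_apply, hermInner] using hψ a b
  rw [← mul_eq_one_comm.mp hP]
  ext x y
  simp [P, mul_apply, vecMulVec_apply, Matrix.sum_apply]

end Normal

lemma IsHCospectral.commute_subK_pow [Fintype X] [DecidableEq X] {K : Set X}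
    [DecidablePred (· ∈ K)] {M : Matrix X X ℂ} {H : Matrix K K ℂ} (hH : Commute H Hᴴ)
    (h : IsHCospectral K M H) (k : ℕ) : Commute H (subK K (M ^ k)) := by
  obtain ⟨ψ, hψ, hMψ, hHψ⟩ := h
  choose μ hμ using hMψ
  have hexp : M ^ k = ∑ a, μ a ^ k • vecMulVec (ψ a) (star (ψ a)) := by
    rw [← mul_one (M ^ k), ← sum_vecMulVec_star_eq_one hψ, Finset.mul_sum]
    simp [mul_vecMulVec, pow_mulVec_eq_pow_smul (hμ _), smul_vecMulVec]
  have hHeig : ∀ a, ∃ ν, H *ᵥ restr K (ψ a) = ν • restr K (ψ a) := fun a =>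
    (hHψ a).elim (fun h0 => ⟨0, by simp [h0]⟩) And.right
  rw [hexp, subK_sum_smul_vecMulVec_star]
  exact Commute.sum_right _ _ _ fun a _ =>
    (commute_vecMulVec_star hH (hHeig a).choose_spec).smul_right _

section Hermitian

variable {n κ : Type*} [Fintype n] [DecidableEq n] [Fintype κ] {F : κ → Matrix n n ℂ}
  {ρ : κ → ℂ}

lemma hermInner_mulVec_eq_zero_of_commute (hF : CompleteOrthogonalIdempotents F)
    (hFh : ∀ j, (F j).IsHermitian) {C : Matrix n n ℂ} (hC : ∀ j, Commute (F j) C)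
    {v w : n → ℂ} {μ ν : ℂ} (hv : (∑ j, ρ j • F j) *ᵥ v = μ • v)
    (hw : (∑ j, ρ j • F j) *ᵥ w = ν • w) (hμν : μ ≠ ν) : hermInner (C *ᵥ v) w = 0 := by
  have hterm : ∀ j, hermInner (C *ᵥ v) (F j *ᵥ w) = 0 := fun j => by
    by_cases hj : ρ j = μ
    · rw [mulVec_eq_zero_of_sum_smul_mulVec_eq_smul hF.toOrthogonalIdempotents hw
        (hj ▸ hμν), hermInner_zero_right]
    · rw [← (hFh j).eq, ← hermInner_mulVec_left, mulVec_mulVec, (hC j).eq, ← mulVec_mulVec,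
        mulVec_eq_zero_of_sum_smul_mulVec_eq_smul hF.toOrthogonalIdempotents hv hj,
        mulVec_zero, hermInner_zero_left]
  rw [← one_mulVec w, ← hF.complete, sum_mulVec, hermInner_eq_star_dotProduct, dotProduct_sum]
  exact Finset.sum_eq_zero fun j _ => hterm j

lemma commute_of_hermInner_mulVec_eq_zero (hF : CompleteOrthogonalIdempotents F)
    (hFh : ∀ j, (F j).IsHermitian) (hρ : Function.Injective ρ) {C : Matrix n n ℂ}
    (hC : ∀ (v w : n → ℂ) (μ ν : ℂ), v ≠ 0 → w ≠ 0 → (∑ j, ρ j • F j) *ᵥ v = μ • v →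
      (∑ j, ρ j • F j) *ᵥ w = ν • w → μ ≠ ν → hermInner (C *ᵥ v) w = 0) (j : κ) :
    Commute (F j) C := by
  have hcross : ∀ j j', j ≠ j' → F j' * C * F j = 0 := fun j j' hjj' => by
    refine ext_iff_mulVec.mpr fun v => ?_
    rw [← mulVec_mulVec, ← mulVec_mulVec, zero_mulVec]
    generalize hx : F j *ᵥ v = x
    -- `y = F j' C x` has `⟨y, y⟩ = ⟨C x, y⟩`, which vanishes by `hC` unless `x = 0` or `y = 0`
    have hy : hermInner (F j' *ᵥ (C *ᵥ x)) (F j' *ᵥ (C *ᵥ x)) =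
        hermInner (C *ᵥ x) (F j' *ᵥ (C *ᵥ x)) := by
      rw [hermInner_mulVec_left, (hFh j').eq, mulVec_mulVec, (hF.idem j').eq]
    by_contra hy0
    have hx0 : x ≠ 0 := fun hx0 => hy0 (by simp [hx0])
    exact hy0 (hermInner_self_eq_zero.mp (hy ▸ hC _ _ _ _ hx0 hy0
      (hx ▸ sum_smul_mulVec_mulVec hF.toOrthogonalIdempotents ρ j v)
      (sum_smul_mulVec_mulVec hF.toOrthogonalIdempotents ρ j' _) (hρ.ne hjj')))
  calc F j * C = ∑ j', F j * C * F j' := by rw [← Finset.mul_sum, hF.complete, mul_one]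
    _ = F j * C * F j := Finset.sum_eq_single j (fun j' _ h => hcross j' j h) (by simp)
    _ = ∑ j', F j' * C * F j := (Finset.sum_eq_single j (fun j' _ h => hcross j j' h.symm)
          (by simp)).symm
    _ = C * F j := by simp_rw [mul_assoc, ← Finset.sum_mul, hF.complete, one_mul]

end Hermitian

section Krylov

variable [Fintype X] [DecidableEq X] {K : Set X} [DecidablePred (· ∈ K)] {ι : Type*}
  [Fintype ι] {E : ι → Matrix X X ℂ} {θ : ι → ℂ}

lemma hermInner_pow_mulVec_extz (hE : CompleteOrthogonalIdempotents E)
    (hEh : ∀ i, (E i).IsHermitian) (v w : K → ℂ) (a b : ℕ) :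
    hermInner ((∑ i, θ i • E i) ^ a *ᵥ extz K v) ((∑ i, θ i • E i) ^ b *ᵥ extz K w) =
      ∑ i, (star (θ i) ^ a * θ i ^ b) * hermInner (subK K (E i) *ᵥ v) w := by
  have hadj : ((∑ i, θ i • E i) ^ a)ᴴ = ∑ i, star (θ i) ^ a • E i := by
    simp [hE.sum_smul_pow, conjTranspose_sum, (hEh _).eq]
  rw [hermInner_mulVec_left, hadj, mulVec_mulVec, hE.sum_smul_pow,
    hE.sum_smul_mul_sum_smul, hermInner_extz_left, restr_mulVec_extz, subK_sum_smul,
    sum_mulVec, hermInner_eq_star_dotProduct, dotProduct_sum]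
  refine Finset.sum_congr rfl fun i _ => ?_
  rw [smul_mulVec, dotProduct_smul, ← hermInner_eq_star_dotProduct, hermInner_mulVec_left,
    ((hEh i).subK K).eq, smul_eq_mul]

lemma hermInner_pow_mulVec_extz_eq_zero_iff (hE : CompleteOrthogonalIdempotents E)
    (hEh : ∀ i, (E i).IsHermitian) (hθ : Function.Injective θ) (v w : K → ℂ) :
    (∀ a b : ℕ, hermInner ((∑ i, θ i • E i) ^ a *ᵥ extz K v)
      ((∑ i, θ i • E i) ^ b *ᵥ extz K w) = 0) ↔
      ∀ i, hermInner (subK K (E i) *ᵥ v) w = 0 := by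
  simp only [hermInner_pow_mulVec_extz hE hEh]
  refine ⟨fun h => eq_zero_of_forall_sum_pow_smul_eq_zero hθ fun b => ?_, fun h a b => ?_⟩
  · simpa using h 0 b
  · simp [h]

end Krylov

section Orthonormal

variable {𝕜 E : Type*} [RCLike 𝕜] [NormedAddCommGroup E] [InnerProductSpace 𝕜 E]

lemma Submodule.span_range_coe_stdOrthonormalBasis (P : Submodule 𝕜 E) [FiniteDimensional 𝕜 P] :
    Submodule.span 𝕜 (Set.range fun t => (stdOrthonormalBasis 𝕜 P t : E)) = P := by
  rw [show (Set.range fun t => (stdOrthonormalBasis 𝕜 P t : E)) =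
      P.subtype '' Set.range (stdOrthonormalBasis 𝕜 P).toBasis by
    rw [OrthonormalBasis.coe_toBasis, ← Set.range_comp]; rfl,
    Submodule.span_image, Module.Basis.span_eq, Submodule.map_subtype_top]

lemma exists_orthonormal_adapted_of_pairwise_isOrtho [FiniteDimensional 𝕜 E] {ι : Type*}
    [Fintype ι] [DecidableEq ι] {P : ι → Submodule 𝕜 E} (hP : Pairwise (P · ⟂ P ·)) :
    ∃ (n : ℕ) (b : Fin n → E) (J : Fin n → ι), Orthonormal 𝕜 b ∧ (∀ a, b a ∈ P (J a)) ∧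
      Submodule.span 𝕜 (Set.range b) = ⨆ o, P o ∧
      ∀ o, (Finset.univ.filter fun a => J a = o).card = Module.finrank 𝕜 (P o) := by
  let β : (Σ o, Fin (Module.finrank 𝕜 (P o))) → E := fun p => stdOrthonormalBasis 𝕜 (P p.1) p.2
  have hβ : Orthonormal 𝕜 β := (orthogonalFamily_iff_pairwise.mpr hP).orthonormal_sigma_orthonormal
    fun o => (stdOrthonormalBasis 𝕜 (P o)).orthonormal
  let e := (Fintype.equivFin (Σ o, Fin (Module.finrank 𝕜 (P o)))).symm
  refine ⟨_, β ∘ e, Sigma.fst ∘ e, hβ.comp e e.injective,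
    fun a => (stdOrthonormalBasis 𝕜 (P (e a).1) (e a).2).2, ?_, fun o => ?_⟩
  · rw [Set.range_comp, e.range_eq_univ, Set.image_univ, Set.range_sigma_eq_iUnion_range,
      Submodule.span_iUnion]
    exact iSup_congr fun o => (P o).span_range_coe_stdOrthonormalBasis
  · rw [← Fintype.card_subtype]
    exact (Fintype.card_congr ((e.subtypeEquiv (p := fun a => (e a).1 = o) fun a => Iff.rfl).trans
      (Equiv.sigmaSubtype o))).trans (Fintype.card_fin _)

end Orthonormal

section Transfer

variable {n : Type*} [Fintype n]

lemma orthonormal_toLp_iff {α : Type*} [DecidableEq α] {ψ : α → n → ℂ} :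
    Orthonormal ℂ (fun a => WithLp.toLp 2 (ψ a)) ↔
      ∀ a b, hermInner (ψ a) (ψ b) = if a = b then 1 else 0 := by
  simp_rw [orthonormal_iff_ite, ← hermInner_ofLp]

lemma card_eq_of_hermInner_orthonormal {α : Type*} [Fintype α] [DecidableEq α] {ψ : α → n → ℂ}
    (hψ : ∀ a b, hermInner (ψ a) (ψ b) = if a = b then 1 else 0)
    (hspan : Submodule.span ℂ (Set.range ψ) = ⊤) : Fintype.card α = Fintype.card n := by
  have hli : LinearIndependent ℂ ψ :=
    .of_comp (WithLp.linearEquiv 2 ℂ (n → ℂ)).symm.toLinearMap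
      (orthonormal_toLp_iff.mpr hψ).linearIndependent
  rw [linearIndependent_iff_card_eq_finrank_span.mp hli, Set.finrank, hspan, finrank_top,
    Module.finrank_fintype_fun_eq_card]

lemma exists_hermInner_orthonormal_adapted {ι : Type*} [Fintype ι] [DecidableEq ι]
    {P : ι → Submodule ℂ (n → ℂ)}
    (hP : ∀ o o', o ≠ o' → ∀ u ∈ P o, ∀ u' ∈ P o', hermInner u u' = 0) :
    ∃ (m : ℕ) (ψ : Fin m → n → ℂ) (J : Fin m → ι),
      (∀ a b, hermInner (ψ a) (ψ b) = if a = b then 1 else 0) ∧ (∀ a, ψ a ∈ P (J a)) ∧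
      Submodule.span ℂ (Set.range ψ) = ⨆ o, P o ∧
      ∀ o, (Finset.univ.filter fun a => J a = o).card = Module.finrank ℂ (P o) := by
  let L := WithLp.linearEquiv 2 ℂ (n → ℂ)
  obtain ⟨m, b, J, hb, hbP, hspan, hcard⟩ :=
    exists_orthonormal_adapted_of_pairwise_isOrtho (P := fun o => (P o).comap L.toLinearMap)
      fun o o' ho => Submodule.isOrtho_iff_inner_eq.mpr fun u hu u' hu' => by
        rw [← hermInner_ofLp]; exact hP o o' ho _ hu _ hu'
  refine ⟨m, fun a => (b a).ofLp, J, orthonormal_toLp_iff.mp hb, hbP, ?_, fun o => ?_⟩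
  · have := congrArg (Submodule.map L.toLinearMap) hspan
    rwa [Submodule.map_span, ← Set.range_comp, Submodule.map_iSup,
      iSup_congr fun o => Submodule.map_comap_eq_of_surjective L.surjective (P o)] at this
  · rw [hcard, Submodule.comap_equiv_eq_map_symm, LinearEquiv.finrank_map_eq]

lemma exists_hermInner_orthogonal_sup_eq {U V : Submodule ℂ (n → ℂ)} (hUV : U ≤ V) :
    ∃ Z ≤ V, (∀ u ∈ U, ∀ z ∈ Z, hermInner u z = 0) ∧ U ⊔ Z = V := by
  let L := WithLp.linearEquiv 2 ℂ (n → ℂ)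
  let U' := U.comap L.toLinearMap
  refine ⟨(U'ᗮ ⊓ V.comap L.toLinearMap).map L.toLinearMap,
    Submodule.map_le_iff_le_comap.mpr inf_le_right, ?_, ?_⟩
  · rintro u hu _ ⟨z, hz, rfl⟩
    have := Submodule.inner_right_of_mem_orthogonal (K := U') (u := L.symm u)
      (by simpa [U'] using hu) hz.1
    rwa [← hermInner_ofLp] at this
  · have := congrArg (Submodule.map L.toLinearMap)
      (Submodule.sup_orthogonal_inf_of_hasOrthogonalProjection (Submodule.comap_mono hUV
        (f := L.toLinearMap)))
    rwa [Submodule.map_sup, Submodule.map_comap_eq_of_surjective L.surjective,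
      Submodule.map_comap_eq_of_surjective L.surjective] at this

end Transfer

section AdaptedBasis

variable (K : Set X) [DecidablePred (· ∈ K)]

def extzₗ : (K → ℂ) →ₗ[ℂ] (X → ℂ) where
  toFun := extz K
  map_add' v w := by ext x; by_cases hx : x ∈ K <;> simp [extz, hx]
  map_smul' c v := by ext x; by_cases hx : x ∈ K <;> simp [extz, hx]

@[simp] lemma extzₗ_apply (v : K → ℂ) : extzₗ K v = extz K v := rfl

variable [Fintype X]

/-- Statement (6) for a single projection `Q`. -/
def HasAdaptedOrthonormalBasis {κ : Type*} [DecidableEq κ] (F : κ → Matrix K K ℂ)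
    (Q : Matrix X X ℂ) : Prop :=
  ∃ (n : ℕ) (ψ : Fin n → (X → ℂ)) (J : Fin n → Option κ),
    (∀ a b, hermInner (ψ a) (ψ b) = if a = b then 1 else 0) ∧
    (∀ a, ψ a ∈ LinearMap.range Q.mulVecLin) ∧
    Submodule.span ℂ (Set.range ψ) = LinearMap.range Q.mulVecLin ∧
    (∀ a, (J a = none → restr K (ψ a) = 0) ∧
      ∀ j, J a = some j →
        restr K (ψ a) ≠ 0 ∧ restr K (ψ a) ∈ LinearMap.range (F j).mulVecLin) ∧
    (∀ j, (Finset.univ.filter (fun a => J a = some j)).card =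
      Module.finrank ℂ (Submodule.span ℂ
        ((fun v : K → ℂ => Q.mulVec (extz K v)) ''
          (LinearMap.range (F j).mulVecLin : Set (K → ℂ)))))

variable {K} {Q : Matrix X X ℂ}

lemma hermInner_mulVec_extz_of_mem_range (hQ : Q.IsHermitian) (hQidem : IsIdempotentElem Q)
    (v : K → ℂ) {z : X → ℂ} (hz : z ∈ LinearMap.range Q.mulVecLin) :
    hermInner (Q *ᵥ extz K v) z = hermInner v (restr K z) := by
  obtain ⟨y, rfl⟩ := hz
  rw [hermInner_mulVec_left, hQ.eq, mulVecLin_apply, mulVec_mulVec, hQidem.eq,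
    hermInner_extz_left]

lemma restr_ne_zero_of_mem_range (hQ : Q.IsHermitian) (hQidem : IsIdempotentElem Q) {u : X → ℂ}
    (hu : u ∈ LinearMap.range (Q.mulVecLin ∘ₗ extzₗ K)) (hu₀ : u ≠ 0) : restr K u ≠ 0 := by
  obtain ⟨v, rfl⟩ := hu
  simp only [LinearMap.comp_apply, mulVecLin_apply, extzₗ_apply] at hu₀ ⊢
  intro h
  refine hu₀ (hermInner_self_eq_zero.mp ?_)
  rw [hermInner_mulVec_extz_of_mem_range (z := Q *ᵥ extz K v) hQ hQidem v ⟨_, rfl⟩, h,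
    hermInner_zero_right]

lemma restr_mem_range_of_mem_map {G : Matrix K K ℂ} (hC : Commute G (subK K Q)) {u : X → ℂ}
    (hu : u ∈ (LinearMap.range G.mulVecLin).map (Q.mulVecLin ∘ₗ extzₗ K)) :
    restr K u ∈ LinearMap.range G.mulVecLin := by
  obtain ⟨_, ⟨y, rfl⟩, rfl⟩ := hu
  exact ⟨subK K Q *ᵥ y, by simp [extzₗ, restr_mulVec_extz, mulVec_mulVec, hC.eq]⟩

variable [DecidableEq X] {κ : Type*} {F : κ → Matrix K K ℂ}

lemma hermInner_eq_zero_of_mem_map_of_mem_map (hQ : Q.IsHermitian) (hQidem : IsIdempotentElem Q)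
    (hF : OrthogonalIdempotents F) (hFh : ∀ j, (F j).IsHermitian)
    (hC : ∀ j, Commute (F j) (subK K Q)) {j j' : κ} (hjj' : j ≠ j') {u u' : X → ℂ}
    (hu : u ∈ (LinearMap.range (F j).mulVecLin).map (Q.mulVecLin ∘ₗ extzₗ K))
    (hu' : u' ∈ (LinearMap.range (F j').mulVecLin).map (Q.mulVecLin ∘ₗ extzₗ K)) :
    hermInner u u' = 0 := by
  obtain ⟨_, ⟨y, rfl⟩, rfl⟩ := hu
  obtain ⟨y', hy'⟩ := restr_mem_range_of_mem_map (hC j') hu'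
  simp only [LinearMap.comp_apply, mulVecLin_apply, extzₗ_apply]
  rw [hermInner_mulVec_extz_of_mem_range hQ hQidem _
      (LinearMap.map_le_range.trans (LinearMap.range_comp_le_range _ _) hu'),
    ← hy', mulVecLin_apply, hermInner_mulVec_left, (hFh j).eq, mulVec_mulVec,
    hF.ortho hjj', zero_mulVec, hermInner_zero_right]

variable [Fintype κ]

lemma mulVec_extz_mem_iSup_map (hF : CompleteOrthogonalIdempotents F) (v : K → ℂ) :
    Q *ᵥ extz K v ∈ ⨆ j, (LinearMap.range (F j).mulVecLin).map (Q.mulVecLin ∘ₗ extzₗ K) := by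
  rw [show extz K v = extzₗ K (∑ j, F j *ᵥ v) by
    rw [← sum_mulVec, hF.complete, one_mulVec]; rfl, map_sum, mulVec_sum]
  exact Submodule.sum_mem _ fun j _ => Submodule.mem_iSup_of_mem j ⟨F j *ᵥ v, ⟨v, rfl⟩, rfl⟩

variable [DecidableEq κ]

theorem hasAdaptedOrthonormalBasis_of_commute (hQ : Q.IsHermitian) (hQidem : IsIdempotentElem Q)
    (hF : CompleteOrthogonalIdempotents F) (hFh : ∀ j, (F j).IsHermitian)
    (hC : ∀ j, Commute (F j) (subK K Q)) : HasAdaptedOrthonormalBasis K F Q := by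
  let Φ := Q.mulVecLin ∘ₗ extzₗ K
  let W : κ → Submodule ℂ (X → ℂ) := fun j => (LinearMap.range (F j).mulVecLin).map Φ
  have hWQ : ∀ j, W j ≤ LinearMap.range Q.mulVecLin := fun j =>
    LinearMap.map_le_range.trans (LinearMap.range_comp_le_range _ _)
  obtain ⟨Z, hZQ, hWZ, hsup⟩ := exists_hermInner_orthogonal_sup_eq (iSup_le hWQ)
  let P : Option κ → Submodule ℂ (X → ℂ) := fun o => o.elim Z W
  have hP : ∀ o o', o ≠ o' → ∀ u ∈ P o, ∀ u' ∈ P o', hermInner u u' = 0 := by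
    rintro (_ | j) (_ | j') ho u hu u' hu'
    · exact absurd rfl ho
    · rw [hermInner_conj_symm, hWZ _ (Submodule.mem_iSup_of_mem j' hu') _ hu, star_zero]
    · exact hWZ _ (Submodule.mem_iSup_of_mem j hu) _ hu'
    · exact hermInner_eq_zero_of_mem_map_of_mem_map hQ hQidem hF.1 hFh hC
        (fun h => ho (congrArg some h)) hu hu'
  have hPQ : ∀ o, P o ≤ LinearMap.range Q.mulVecLin := fun o => o.rec hZQ hWQ
  obtain ⟨n, ψ, J, hψ, hψP, hspan, hcard⟩ := exists_hermInner_orthonormal_adapted hP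
  rw [iSup_option, sup_comm] at hspan
  have hmem : ∀ a o, J a = o → ψ a ∈ P o := fun a o h => h ▸ hψP a
  refine ⟨n, ψ, J, hψ, fun a => ?_, hspan.trans hsup, fun a => ⟨fun ha => ?_,
    fun j ha => ⟨?_, restr_mem_range_of_mem_map (hC j) (hmem a _ ha)⟩⟩, fun j => ?_⟩
  · exact hPQ _ (hψP a)
  · -- `⟨z_K, z_K⟩ = ⟨Q (z_K)^, z⟩`, and `Q (z_K)^` lies in the sum of the pieces `W j`
    rw [← hermInner_self_eq_zero, ← hermInner_mulVec_extz_of_mem_range hQ hQidem _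
      (hZQ (hmem a _ ha)), hWZ _ (mulVec_extz_mem_iSup_map hF _) _ (hmem a _ ha)]
  · refine restr_ne_zero_of_mem_range hQ hQidem (LinearMap.map_le_range (hmem a _ ha)) ?_
    rintro h
    simpa [h] using hψ a a
  · rw [hcard, show (fun v : K → ℂ => Q *ᵥ extz K v) = Φ from rfl, Submodule.span_image,
      Submodule.span_eq]
    rfl

end AdaptedBasis

section Cospectral

variable [Fintype X] [DecidableEq X] {K : Set X} [DecidablePred (· ∈ K)]
  {ι κ : Type*} [Fintype ι] [Fintype κ] [DecidableEq κ]
  {E : ι → Matrix X X ℂ} {F : κ → Matrix K K ℂ}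

theorem isHCospectral_of_hasAdaptedOrthonormalBasis (hE : CompleteOrthogonalIdempotents E)
    (hEh : ∀ i, (E i).IsHermitian) (hF : OrthogonalIdempotents F) (θ : ι → ℂ) (ρ : κ → ℂ)
    (h : ∀ i, HasAdaptedOrthonormalBasis K F (E i)) :
    IsHCospectral K (∑ i, θ i • E i) (∑ j, ρ j • F j) := by
  classical
  unfold HasAdaptedOrthonormalBasis at h
  choose n ψ J hψ hψE hspan hJ _ using h
  let Ψ : (Σ i, Fin (n i)) → X → ℂ := fun p => ψ p.1 p.2
  have hΨ : ∀ p q, hermInner (Ψ p) (Ψ q) = if p = q then 1 else 0 := by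
    rintro ⟨i, s⟩ ⟨i', t⟩
    rcases eq_or_ne i i' with rfl | hii'
    · simp [Ψ, hψ]
    · rw [if_neg fun h => hii' (congrArg Sigma.fst h)]
      exact hermInner_eq_zero_of_mem_range_of_mem_range hE.toOrthogonalIdempotents hEh hii'
        (hψE i s) (hψE i' t)
  have hΨspan : Submodule.span ℂ (Set.range Ψ) = ⊤ := by
    refine eq_top_iff.mpr fun x _ => ?_
    rw [← one_mulVec x, ← hE.complete, sum_mulVec]
    refine Submodule.sum_mem _ fun i _ => ?_
    have hx : E i *ᵥ x ∈ Submodule.span ℂ (Set.range (ψ i)) := by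
      rw [hspan i]; exact ⟨x, rfl⟩
    exact Submodule.span_mono
      (Set.range_subset_iff.mpr fun s => Set.mem_range_self (f := Ψ) ⟨i, s⟩) hx
  let e := Fintype.equivOfCardEq (card_eq_of_hermInner_orthonormal hΨ hΨspan).symm
  refine ⟨Ψ ∘ e, fun a b => by simpa [e.apply_eq_iff_eq] using hΨ (e a) (e b), fun a => ?_,
    fun a => ?_⟩
  · obtain ⟨y, hy⟩ := hψE (e a).1 (e a).2
    exact ⟨θ (e a).1, by
      simp only [Function.comp_apply, Ψ, ← hy, mulVecLin_apply,
        sum_smul_mulVec_mulVec hE.toOrthogonalIdempotents]⟩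
  · rcases hJa : J (e a).1 (e a).2 with _ | j
    · exact .inl ((hJ _ _).1 hJa)
    · obtain ⟨hne, y, hy⟩ := (hJ _ _).2 j hJa
      exact .inr ⟨hne, ρ j, by
        simp only [Function.comp_apply, Ψ, ← hy, mulVecLin_apply, sum_smul_mulVec_mulVec hF]⟩

end Cospectral

theorem stmt_4_general {X : Type*} [Fintype X] [DecidableEq X]
    (K : Set X) [DecidablePred (· ∈ K)]
    (M : Matrix X X ℂ)
    (H : Matrix K K ℂ) (hHnormal : H * Hᴴ = Hᴴ * H)
    -- spectral decomposition of `M`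
    (d : ℕ) (θ : Fin d → ℂ) (hθ : Function.Injective θ)
    (E : Fin d → Matrix X X ℂ)
    (hEherm : ∀ i, (E i)ᴴ = E i) (hEidem : ∀ i, E i * E i = E i)
    (hEorth : ∀ i i', i ≠ i' → E i * E i' = 0) (hEsum : ∑ i, E i = 1)
    (hMspec : M = ∑ i, θ i • E i)
    -- spectral decomposition of `H`
    (r : ℕ) (ρ : Fin r → ℂ) (hρ : Function.Injective ρ)
    (F : Fin r → Matrix K K ℂ)
    (hFherm : ∀ j, (F j)ᴴ = F j) (hFidem : ∀ j, F j * F j = F j)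
    (hForth : ∀ j j', j ≠ j' → F j * F j' = 0) (hFsum : ∑ j, F j = 1)
    (hHspec : H = ∑ j, ρ j • F j) :
    List.TFAE
      [ -- (1) `K` is `H`-cospectral in `M`
        IsHCospectral K M H,
        -- (2) `H` commutes with `(M^k)_{K×K}` for all `k`
        ∀ k : ℕ, H * subK K (M ^ k) = subK K (M ^ k) * H,
        -- (3) `H` commutes with `(E i)_{K×K}`
        ∀ i, H * subK K (E i) = subK K (E i) * H,
        -- (4) `F j` commutes with `(E i)_{K×K}`
        ∀ i j, F j * subK K (E i) = subK K (E i) * F j,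
        -- (5) eigenvectors of `H` for different eigenvalues are orthogonal through `(E i)_{K×K}`
        ∀ (v w : K → ℂ) (μ ν : ℂ), v ≠ 0 → w ≠ 0 →
          H.mulVec v = μ • v → H.mulVec w = ν • w → μ ≠ ν →
          ∀ i, hermInner ((subK K (E i)).mulVec v) w = 0,
        -- (6) adapted orthonormal bases of the eigenspaces `im (E i)`
        ∀ i, ∃ (n : ℕ) (ψ : Fin n → (X → ℂ)) (J : Fin n → Option (Fin r)),
          (∀ a b, hermInner (ψ a) (ψ b) = if a = b then 1 else 0) ∧
          (∀ a, ψ a ∈ LinearMap.range (E i).mulVecLin) ∧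
          Submodule.span ℂ (Set.range ψ) = LinearMap.range (E i).mulVecLin ∧
          (∀ a, (J a = none → restr K (ψ a) = 0) ∧
            ∀ j, J a = some j →
              restr K (ψ a) ≠ 0 ∧ restr K (ψ a) ∈ LinearMap.range (F j).mulVecLin) ∧
          (∀ j, (Finset.univ.filter (fun a => J a = some j)).card =
            Module.finrank ℂ (Submodule.span ℂ
              ((fun v : K → ℂ => (E i).mulVec (extz K v)) ''
                (LinearMap.range (F j).mulVecLin : Set (K → ℂ))))),
        -- (7) Krylov subspaces of eigenvectors of `H` for different eigenvalues are orthogonal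
        ∀ (v w : K → ℂ) (μ ν : ℂ), v ≠ 0 → w ≠ 0 →
          H.mulVec v = μ • v → H.mulVec w = ν • w → μ ≠ ν →
          ∀ a b : ℕ,
            hermInner ((M ^ a).mulVec (extz K v)) ((M ^ b).mulVec (extz K w)) = 0 ] := by
  have hE : CompleteOrthogonalIdempotents E := ⟨⟨hEidem, hEorth⟩, hEsum⟩
  have hF : CompleteOrthogonalIdempotents F := ⟨⟨hFidem, hForth⟩, hFsum⟩
  subst hMspec hHspec
  tfae_have 1 → 2 := fun h => h.commute_subK_pow hHnormal
  tfae_have 2 → 3 := fun h => commute_of_forall_commute_sum_pow_smul hθ fun k => by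
    rw [← subK_sum_smul, ← hE.sum_smul_pow]
    exact h k
  tfae_have 3 → 4 := fun h i => hF.commute_of_commute_sum_smul hρ (h i)
  tfae_have 4 → 5 := fun h _ _ _ _ _ _ hv hw hμν i =>
    hermInner_mulVec_eq_zero_of_commute hF hFherm (h i) hv hw hμν
  tfae_have 5 → 4 := fun h i => commute_of_hermInner_mulVec_eq_zero hF hFherm hρ
    fun v w μ ν hv₀ hw₀ hv hw hμν => h v w μ ν hv₀ hw₀ hv hw hμν i
  tfae_have 5 ↔ 7 := by simp only [hermInner_pow_mulVec_extz_eq_zero_iff hE hEherm hθ]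
  tfae_have 4 → 6 := fun h i =>
    hasAdaptedOrthonormalBasis_of_commute (hEherm i) (hEidem i) hF hFherm (h i)
  tfae_have 6 → 1 := isHCospectral_of_hasAdaptedOrthonormalBasis hE hEherm hF.1 θ ρ
  tfae_finish

theorem stmt_4 {X : Type*} [Fintype X] [DecidableEq X]
    (K : Set X) [DecidablePred (· ∈ K)] (hK : K.Nonempty)
    (M : Matrix X X ℂ) (hMnormal : M * Mᴴ = Mᴴ * M)
    (H : Matrix K K ℂ) (hHnormal : H * Hᴴ = Hᴴ * H)
    -- spectral decomposition of `M`
    (d : ℕ) (θ : Fin d → ℂ) (hθ : Function.Injective θ)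
    (E : Fin d → Matrix X X ℂ)
    (hEherm : ∀ i, (E i)ᴴ = E i) (hEidem : ∀ i, E i * E i = E i)
    (hEorth : ∀ i i', i ≠ i' → E i * E i' = 0) (hEsum : ∑ i, E i = 1)
    (hMspec : M = ∑ i, θ i • E i)
    -- spectral decomposition of `H`
    (r : ℕ) (ρ : Fin r → ℂ) (hρ : Function.Injective ρ)
    (F : Fin r → Matrix K K ℂ)
    (hFherm : ∀ j, (F j)ᴴ = F j) (hFidem : ∀ j, F j * F j = F j)
    (hForth : ∀ j j', j ≠ j' → F j * F j' = 0) (hFsum : ∑ j, F j = 1)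
    (hHspec : H = ∑ j, ρ j • F j) :
    List.TFAE
      [ -- (1) `K` is `H`-cospectral in `M`
        IsHCospectral K M H,
        -- (2) `H` commutes with `(M^k)_{K×K}` for all `k`
        ∀ k : ℕ, H * subK K (M ^ k) = subK K (M ^ k) * H,
        -- (3) `H` commutes with `(E i)_{K×K}`
        ∀ i, H * subK K (E i) = subK K (E i) * H,
        -- (4) `F j` commutes with `(E i)_{K×K}`
        ∀ i j, F j * subK K (E i) = subK K (E i) * F j,
        -- (5) eigenvectors of `H` for different eigenvalues are orthogonal through `(E i)_{K×K}`
        ∀ (v w : K → ℂ) (μ ν : ℂ), v ≠ 0 → w ≠ 0 →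
          H.mulVec v = μ • v → H.mulVec w = ν • w → μ ≠ ν →
          ∀ i, hermInner ((subK K (E i)).mulVec v) w = 0,
        -- (6) adapted orthonormal bases of the eigenspaces `im (E i)`
        ∀ i, ∃ (n : ℕ) (ψ : Fin n → (X → ℂ)) (J : Fin n → Option (Fin r)),
          (∀ a b, hermInner (ψ a) (ψ b) = if a = b then 1 else 0) ∧
          (∀ a, ψ a ∈ LinearMap.range (E i).mulVecLin) ∧
          Submodule.span ℂ (Set.range ψ) = LinearMap.range (E i).mulVecLin ∧
          (∀ a, (J a = none → restr K (ψ a) = 0) ∧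
            ∀ j, J a = some j →
              restr K (ψ a) ≠ 0 ∧ restr K (ψ a) ∈ LinearMap.range (F j).mulVecLin) ∧
          (∀ j, (Finset.univ.filter (fun a => J a = some j)).card =
            Module.finrank ℂ (Submodule.span ℂ
              ((fun v : K → ℂ => (E i).mulVec (extz K v)) ''
                (LinearMap.range (F j).mulVecLin : Set (K → ℂ))))),
        -- (7) Krylov subspaces of eigenvectors of `H` for different eigenvalues are orthogonal
        ∀ (v w : K → ℂ) (μ ν : ℂ), v ≠ 0 → w ≠ 0 →
          H.mulVec v = μ • v → H.mulVec w = ν • w → μ ≠ ν →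
          ∀ a b : ℕ,
            hermInner ((M ^ a).mulVec (extz K v)) ((M ^ b).mulVec (extz K w)) = 0 ] :=
  stmt_4_general K M H hHnormal d θ hθ E hEherm hEidem hEorth hEsum hMspec r ρ hρ F hFherm hFidem
    hForth hFsum hHspec
end

section
/- Let M ∈ ℂ^{X×X} and H ∈ ℂ^{K×K} be normal matrices with spectral decompositions M = Σ_{i=1}^d θ_i E_i and H = Σ_{j=1}^r ρ_j F_j, and suppose K is H-cospectral in M. Define b_{i,j} = dim{ E_i v̂ : v ∈ im F_j } for 1 ≤ j ≤ r, b_{i,0} = dim{ u ∈ im E_i : u_K = 0 }, and P_j(t) = Π_{i=1}^d (t − θ_i)^{b_{i,j}} for 0 ≤ j ≤ r. Then the characteristic polynomial of M factors as φ(M,t) = Π_{j=0}^r P_j(t). -/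
/-!
Since the `E i` are complete orthogonal idempotents, `φ(M, t) = ∏ i, (t - θ i) ^ rank (E i)`, so it
suffices to show `rank (E i) = b0 i + ∑ j, b i j`. Write `R u = u_K`, whose adjoint is `v ↦ v̂`.
Rank–nullity for `R` on `im E_i` gives `rank (E i) = b0 i + dim R(im E_i)`. Cospectrality makes
`R(im E_i)` invariant under every `F j`: `im E_i` is spanned by the vectors `E_i ψ_a`, each `0` or
`ψ_a`, and each `(ψ_a)_K` is `0` or lies in a single `im F_j`. Hence `R(im E_i)` is the direct sum of
its images `F_j R(im E_i)`, and `F_j R E_i` is the adjoint of `v ↦ E_i (F_j v)^`, whose range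
defines `b i j`; a matrix and its adjoint have the same rank.
-/

open Matrix Set

variable {X : Type*}

theorem linearIndependent_of_hermInner_eq_ite {ι n : Type*} [Fintype ι] [DecidableEq ι]
    [Fintype n] {ψ : ι → n → ℂ} (hψ : ∀ a b, hermInner (ψ a) (ψ b) = if a = b then 1 else 0) :
    LinearIndependent ℂ ψ := by
  rw [Fintype.linearIndependent_iff]
  intro g hg b
  have h := congrArg (star (ψ b) ⬝ᵥ ·) hg
  simp only [dotProduct_sum, dotProduct_smul, dotProduct_zero] at h
  simpa [show ∀ a, star (ψ b) ⬝ᵥ ψ a = if b = a then 1 else 0 from hψ b] using h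

theorem iSupIndep.finrank_iSup {K V ι : Type*} [DivisionRing K] [AddCommGroup V] [Module K V]
    [FiniteDimensional K V] [Fintype ι] [DecidableEq ι] {q : ι → Submodule K V}
    (hq : iSupIndep q) : Module.finrank K ↥(⨆ i, q i) = ∑ i, Module.finrank K (q i) := by
  rw [Submodule.iSup_eq_range_dfinsupp_lsum,
    LinearMap.finrank_range_of_inj hq.dfinsupp_lsum_injective]
  exact Module.finrank_directSum K fun i => q i

theorem Submodule.finrank_map_add_finrank_inf_ker {K V W : Type*} [DivisionRing K]
    [AddCommGroup V] [Module K V] [AddCommGroup W] [Module K W] [FiniteDimensional K V]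
    (f : V →ₗ[K] W) (p : Submodule K V) :
    Module.finrank K (p.map f) + Module.finrank K ↥(p ⊓ LinearMap.ker f) = Module.finrank K p := by
  rw [← LinearMap.finrank_range_add_finrank_ker (f.domRestrict p), LinearMap.range_domRestrict,
    LinearMap.ker_domRestrict, ← Submodule.finrank_map_subtype_eq, Submodule.map_comap_subtype]

theorem Submodule.map_span_le_of_apply_eq_zero_or_eq_self {R M : Type*} [Semiring R]
    [AddCommMonoid M] [Module R M] (f : Module.End R M) {s : Set M}
    (hs : ∀ v ∈ s, f v = 0 ∨ f v = v) : (Submodule.span R s).map f ≤ Submodule.span R s := by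
  rw [Submodule.map_span, Submodule.span_le]
  rintro _ ⟨v, hv, rfl⟩
  rcases hs v hv with h | h <;> rw [h]
  exacts [Submodule.zero_mem _, Submodule.subset_span hv]

theorem LinearMap.charpoly_eq_prod_of_apply_basis {K V ι : Type*} [Field K] [AddCommGroup V]
    [Module K V] [FiniteDimensional K V] [Fintype ι] [DecidableEq ι] (f : Module.End K V)
    (b : Module.Basis ι K V) (μ : ι → K) (hf : ∀ a, f (b a) = μ a • b a) :
    f.charpoly = ∏ a, (Polynomial.X - Polynomial.C (μ a)) := by
  have : LinearMap.toMatrix b b f = Matrix.diagonal μ := by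
    ext a a'
    rw [LinearMap.toMatrix_apply, hf, map_smul, b.repr_self]
    by_cases h : a = a' <;> simp [h, Matrix.diagonal_apply_ne]
  rw [← f.charpoly_toMatrix b, this, Matrix.charpoly_diagonal]

namespace CompleteOrthogonalIdempotents

section Module

variable {K V ι : Type*} [Field K] [AddCommGroup V] [Module K V] [Fintype ι]
  {E : ι → Module.End K V}

theorem apply_of_mem_range [DecidableEq ι] (hE : CompleteOrthogonalIdempotents E) {i : ι}
    {v : V} (hv : v ∈ LinearMap.range (E i)) (j : ι) : E j v = if j = i then v else 0 := by
  obtain ⟨u, rfl⟩ := hv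
  rw [← Module.End.mul_apply, hE.mul_eq]
  split_ifs <;> simp_all

theorem sum_apply (hE : CompleteOrthogonalIdempotents E) (v : V) : ∑ i, E i v = v := by
  rw [← LinearMap.sum_apply, hE.complete, Module.End.one_apply]

theorem iSupIndep_range (hE : CompleteOrthogonalIdempotents E) :
    iSupIndep fun i => LinearMap.range (E i) := by
  classical
  intro i
  rw [Submodule.disjoint_def]
  intro v hv hv'
  have hker : (⨆ j, ⨆ (_ : j ≠ i), LinearMap.range (E j)) ≤ LinearMap.ker (E i) :=
    iSup₂_le fun j hj u hu => by simp [hE.apply_of_mem_range hu i, Ne.symm hj]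
  simpa [hE.apply_of_mem_range hv i] using hker hv'

theorem iSup_range_eq_top (hE : CompleteOrthogonalIdempotents E) :
    ⨆ i, LinearMap.range (E i) = ⊤ :=
  eq_top_iff.mpr fun v _ => hE.sum_apply v ▸
    Submodule.sum_mem _ fun i _ => Submodule.mem_iSup_of_mem i (LinearMap.mem_range_self _ v)

theorem isInternal_range [DecidableEq ι] (hE : CompleteOrthogonalIdempotents E) :
    DirectSum.IsInternal fun i => LinearMap.range (E i) :=
  DirectSum.isInternal_submodule_of_iSupIndep_of_iSup_eq_top hE.iSupIndep_range
    hE.iSup_range_eq_top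

theorem finrank_eq_sum_finrank_map [FiniteDimensional K V] (hE : CompleteOrthogonalIdempotents E)
    {p : Submodule K V} (hp : ∀ i, p.map (E i) ≤ p) :
    Module.finrank K p = ∑ i, Module.finrank K (p.map (E i)) := by
  classical
  have hsup : ⨆ i, p.map (E i) = p :=
    le_antisymm (iSup_le hp) fun v hv => hE.sum_apply v ▸
      Submodule.sum_mem _ fun i _ => Submodule.mem_iSup_of_mem i (Submodule.mem_map_of_mem hv)
  rw [← (hE.iSupIndep_range.mono fun i => LinearMap.map_le_range).finrank_iSup, hsup]

theorem charpoly_sum_smul [FiniteDimensional K V] [DecidableEq ι]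
    (hE : CompleteOrthogonalIdempotents E) (θ : ι → K) :
    (∑ i, θ i • E i).charpoly =
      ∏ i, (Polynomial.X - Polynomial.C (θ i)) ^ Module.finrank K (LinearMap.range (E i)) := by
  let b := hE.isInternal_range.collectedBasis fun i => Module.finBasis K (LinearMap.range (E i))
  have hb : ∀ a, (∑ i, θ i • E i) (b a) = θ a.1 • b a := fun a => by
    have hmem : b a ∈ LinearMap.range (E a.1) := hE.isInternal_range.collectedBasis_mem _ a
    simp [hE.apply_of_mem_range hmem]
  rw [LinearMap.charpoly_eq_prod_of_apply_basis _ b _ hb, Fintype.prod_sigma]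
  simp

theorem apply_eq_zero_or_eq_self_of_apply_eq_smul (hE : CompleteOrthogonalIdempotents E)
    {θ : ι → K} (hθ : Function.Injective θ) {v : V} {μ : K}
    (hv : (∑ i, θ i • E i) v = μ • v) (j : ι) : E j v = 0 ∨ E j v = v := by
  classical
  have hproj : ∀ i, (θ i - μ) • E i v = 0 := by
    intro i
    have : E i ((∑ k, θ k • E k) v) = θ i • E i v := by
      simp only [LinearMap.sum_apply, LinearMap.smul_apply, map_sum, map_smul,
        hE.apply_of_mem_range (LinearMap.mem_range_self _ v) i, smul_ite, smul_zero,
        Finset.sum_ite_eq, Finset.mem_univ, if_true]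
    rw [sub_smul, ← this, hv, map_smul, sub_self]
  rcases smul_eq_zero.mp (hproj j) with hμ | hj
  · have hk : ∀ k ≠ j, E k v = 0 := fun k hk =>
      (smul_eq_zero.mp (hproj k)).resolve_left
        (by rwa [← sub_eq_zero.mp hμ, sub_eq_zero, hθ.eq_iff])
    right
    conv_rhs => rw [← hE.sum_apply v]
    exact (Finset.sum_eq_single j (fun k _ => hk k) (by simp)).symm
  · exact Or.inl hj

end Module

section Matrix

variable {K n ι : Type*} [Field K] [Fintype n] [DecidableEq n] [Fintype ι]
  {E : ι → Matrix n n K}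

theorem mulVecLin (hE : CompleteOrthogonalIdempotents E) :
    CompleteOrthogonalIdempotents fun i => (E i).mulVecLin :=
  hE.map (Matrix.toLinAlgEquiv' : Matrix n n K ≃ₐ[K] Module.End K (n → K)).toRingHom

theorem charpoly_sum_smul_matrix [DecidableEq ι] (hE : CompleteOrthogonalIdempotents E)
    (θ : ι → K) :
    (∑ i, θ i • E i).charpoly = ∏ i, (Polynomial.X - Polynomial.C (θ i)) ^ (E i).rank := by
  rw [← Matrix.charpoly_toLin', map_sum]
  simp only [map_smul, Matrix.toLin'_apply']
  exact hE.mulVecLin.charpoly_sum_smul θ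

theorem mulVec_eq_zero_or_eq_self_of_mulVec_eq_smul (hE : CompleteOrthogonalIdempotents E)
    {θ : ι → K} (hθ : Function.Injective θ) {v : n → K} {μ : K}
    (hv : (∑ i, θ i • E i) *ᵥ v = μ • v) (j : ι) : E j *ᵥ v = 0 ∨ E j *ᵥ v = v :=
  hE.mulVecLin.apply_eq_zero_or_eq_self_of_apply_eq_smul hθ
    (by simpa [Matrix.sum_mulVec, Matrix.smul_mulVec] using hv) j

end Matrix

end CompleteOrthogonalIdempotents

namespace Matrix

open scoped ComplexOrder

variable {𝕜 m n ι : Type*} [RCLike 𝕜] [Fintype m] [Fintype n]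

theorem finrank_map_map_range_conjTranspose {P : Matrix m m 𝕜} (hP : P.IsHermitian)
    (J : Matrix m n 𝕜) {F : Matrix n n 𝕜} (hF : F.IsHermitian) :
    Module.finrank 𝕜 (((LinearMap.range P.mulVecLin).map Jᴴ.mulVecLin).map F.mulVecLin) =
      Module.finrank 𝕜 ((LinearMap.range F.mulVecLin).map (P * J).mulVecLin) := by
  rw [← LinearMap.range_comp, ← LinearMap.range_comp, ← LinearMap.range_comp,
    ← Matrix.mulVecLin_mul, ← Matrix.mulVecLin_mul, ← Matrix.mulVecLin_mul]
  change (F * (Jᴴ * P)).rank = (P * J * F).rank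
  rw [← rank_conjTranspose (P * J * F), conjTranspose_mul, conjTranspose_mul, hP.eq, hF.eq]

theorem rank_eq_finrank_inf_ker_add_sum [DecidableEq n] [Fintype ι] {P : Matrix m m 𝕜}
    (hP : P.IsHermitian) (J : Matrix m n 𝕜) {F : ι → Matrix n n 𝕜}
    (hF : CompleteOrthogonalIdempotents F) (hFh : ∀ j, (F j).IsHermitian)
    (hinv : ∀ j, ((LinearMap.range P.mulVecLin).map Jᴴ.mulVecLin).map (F j).mulVecLin ≤
      (LinearMap.range P.mulVecLin).map Jᴴ.mulVecLin) :
    P.rank = Module.finrank 𝕜 ↥(LinearMap.range P.mulVecLin ⊓ LinearMap.ker Jᴴ.mulVecLin) +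
      ∑ j, Module.finrank 𝕜 ((LinearMap.range (F j).mulVecLin).map (P * J).mulVecLin) := by
  rw [Matrix.rank, ← Submodule.finrank_map_add_finrank_inf_ker Jᴴ.mulVecLin, add_comm,
    hF.mulVecLin.finrank_eq_sum_finrank_map hinv]
  simp only [finrank_map_map_range_conjTranspose hP J (hFh _)]

end Matrix

def extzMatrix [DecidableEq X] (K : Set X) : Matrix X K ℂ :=
  (1 : Matrix X X ℂ).submatrix id Subtype.val

theorem extzMatrix_mulVec [Fintype X] [DecidableEq X] (K : Set X) [DecidablePred (· ∈ K)]
    (v : K → ℂ) : extzMatrix K *ᵥ v = extz K v := by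
  ext x
  by_cases hx : x ∈ K
  all_goals simp only [extzMatrix, extz, hx, Matrix.mulVec, dotProduct, Matrix.submatrix_apply,
    Matrix.one_apply, id, ite_mul, one_mul, zero_mul, dite_true, dite_false]
  · rw [Finset.sum_eq_single_of_mem ⟨x, hx⟩ (Finset.mem_univ _)
      fun k _ hk => if_neg fun h => hk (Subtype.ext h.symm), if_pos rfl]
  · exact Finset.sum_eq_zero fun k _ => if_neg fun (h : x = k) => hx (h ▸ k.2)

theorem conjTranspose_extzMatrix_mulVec [Fintype X] [DecidableEq X] (K : Set X)
    (u : X → ℂ) : (extzMatrix K)ᴴ *ᵥ u = restr K u := by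
  ext k
  simp [extzMatrix, restr, Matrix.mulVec, dotProduct, Matrix.one_apply]

theorem span_image_mulVec_extz [Fintype X] [DecidableEq X] (K : Set X) [DecidablePred (· ∈ K)]
    (A : Matrix X X ℂ) (p : Submodule ℂ (K → ℂ)) :
    Submodule.span ℂ ((fun v : K → ℂ => A *ᵥ extz K v) '' p) =
      p.map (A * extzMatrix K).mulVecLin := by
  have : (fun v : K → ℂ => A *ᵥ extz K v) = (A * extzMatrix K).mulVecLin := by
    ext v : 1
    rw [Matrix.mulVecLin_apply, ← Matrix.mulVec_mulVec, extzMatrix_mulVec]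
  rw [this, ← Submodule.map_coe, Submodule.span_eq]

theorem span_setOf_mem_and_restr_eq_zero [Fintype X] [DecidableEq X] (K : Set X)
    (p : Submodule ℂ (X → ℂ)) :
    Submodule.span ℂ {u | u ∈ p ∧ restr K u = 0} =
      p ⊓ LinearMap.ker (extzMatrix K)ᴴ.mulVecLin := by
  have : {u | u ∈ p ∧ restr K u = 0} = ↑(p ⊓ LinearMap.ker (extzMatrix K)ᴴ.mulVecLin) := by
    ext u
    simp only [Set.mem_ofPred_eq, SetLike.mem_coe, Submodule.mem_inf, LinearMap.mem_ker,
      Matrix.mulVecLin_apply, conjTranspose_extzMatrix_mulVec]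
  rw [this, Submodule.span_eq]

theorem IsHCospectral.map_restr_range_le [Fintype X] [DecidableEq X] {K : Set X}
    [DecidablePred (· ∈ K)] {M : Matrix X X ℂ} {H : Matrix K K ℂ} (hcosp : IsHCospectral K M H)
    {ι κ : Type*} [Fintype ι] [Fintype κ] {θ : ι → ℂ} (hθ : Function.Injective θ)
    {E : ι → Matrix X X ℂ} (hE : CompleteOrthogonalIdempotents E) (hM : M = ∑ i, θ i • E i)
    {ρ : κ → ℂ} (hρ : Function.Injective ρ) {F : κ → Matrix K K ℂ}
    (hF : CompleteOrthogonalIdempotents F) (hH : H = ∑ j, ρ j • F j) (i : ι) (j : κ) :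
    ((LinearMap.range (E i).mulVecLin).map (extzMatrix K)ᴴ.mulVecLin).map (F j).mulVecLin ≤
      (LinearMap.range (E i).mulVecLin).map (extzMatrix K)ᴴ.mulVecLin := by
  obtain ⟨ψ, hON, hMψ, hHψ⟩ := hcosp
  have hspan : Submodule.span ℂ (Set.range ψ) = ⊤ :=
    (linearIndependent_of_hermInner_eq_ite hON).span_eq_top_of_card_eq_finrank'
      (Module.finrank_fintype_fun_eq_card ℂ).symm
  have hrange : (LinearMap.range (E i).mulVecLin).map (extzMatrix K)ᴴ.mulVecLin =
      Submodule.span ℂ (Set.range fun a => restr K (E i *ᵥ ψ a)) := by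
    rw [LinearMap.range_eq_map, ← hspan, Submodule.map_span, Submodule.map_span, ← Set.range_comp,
      ← Set.range_comp]
    simp only [Function.comp_def, Matrix.mulVecLin_apply, conjTranspose_extzMatrix_mulVec]
  rw [hrange]
  refine Submodule.map_span_le_of_apply_eq_zero_or_eq_self _ ?_
  rintro _ ⟨a, rfl⟩
  simp only [Matrix.mulVecLin_apply]
  obtain ⟨μ, hμ⟩ := hMψ a
  rcases hE.mulVec_eq_zero_or_eq_self_of_mulVec_eq_smul hθ (hM ▸ hμ) i with h | h <;>
    rw [h]
  · exact Or.inl (by rw [show restr K 0 = 0 from rfl, Matrix.mulVec_zero])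
  · rcases hHψ a with h0 | ⟨-, ν, hν⟩
    · simp [h0]
    · exact hF.mulVec_eq_zero_or_eq_self_of_mulVec_eq_smul hρ (hH ▸ hν) j

open Polynomial in
theorem stmt_5_general {X : Type*} [Fintype X] [DecidableEq X]
    (K : Set X) [DecidablePred (· ∈ K)]
    (M : Matrix X X ℂ)
    (H : Matrix K K ℂ)
    (d : ℕ) (θ : Fin d → ℂ) (hθ : Function.Injective θ)
    (E : Fin d → Matrix X X ℂ)
    (hEherm : ∀ i, (E i)ᴴ = E i)
    (hEorth : ∀ i i', i ≠ i' → E i * E i' = 0) (hEsum : ∑ i, E i = 1)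
    (hMspec : M = ∑ i, θ i • E i)
    (r : ℕ) (ρ : Fin r → ℂ) (hρ : Function.Injective ρ)
    (F : Fin r → Matrix K K ℂ)
    (hFherm : ∀ j, (F j)ᴴ = F j)
    (hForth : ∀ j j', j ≠ j' → F j * F j' = 0) (hFsum : ∑ j, F j = 1)
    (hHspec : H = ∑ j, ρ j • F j)
    (hcosp : IsHCospectral K M H)
    -- `b i j = dim { E_i v̂ : v ∈ im F_j }` and `b0 i = dim { u ∈ im E_i : u_K = 0 }`
    (b : Fin d → Fin r → ℕ)
    (hb : ∀ i j, b i j = Module.finrank ℂ (Submodule.span ℂ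
      ((fun v : K → ℂ => (E i).mulVec (extz K v)) ''
        (LinearMap.range (F j).mulVecLin : Set (K → ℂ)))))
    (b0 : Fin d → ℕ)
    (hb0 : ∀ i, b0 i = Module.finrank ℂ (Submodule.span ℂ
      {u : X → ℂ | u ∈ LinearMap.range (E i).mulVecLin ∧ restr K u = 0})) :
    M.charpoly =
      (∏ i, (Polynomial.X - Polynomial.C (θ i)) ^ (b0 i)) *
        ∏ j, ∏ i, (Polynomial.X - Polynomial.C (θ i)) ^ (b i j) := by
  have hE : CompleteOrthogonalIdempotents E :=
    CompleteOrthogonalIdempotents.iff_ortho_complete.mpr ⟨hEorth, hEsum⟩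
  have hF : CompleteOrthogonalIdempotents F :=
    CompleteOrthogonalIdempotents.iff_ortho_complete.mpr ⟨hForth, hFsum⟩
  have hrank : ∀ i, (E i).rank = b0 i + ∑ j, b i j := fun i => by
    rw [Matrix.rank_eq_finrank_inf_ker_add_sum (hEherm i) (extzMatrix K) hF hFherm
      (hcosp.map_restr_range_le hθ hE hMspec hρ hF hHspec i), hb0,
      span_setOf_mem_and_restr_eq_zero]
    congr 1
    refine Finset.sum_congr rfl fun j _ => ?_
    rw [hb, span_image_mulVec_extz]
  rw [hMspec, hE.charpoly_sum_smul_matrix θ]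
  simp_rw [hrank, pow_add, ← Finset.prod_pow_eq_pow_sum, Finset.prod_mul_distrib]
  rw [Finset.prod_comm]

open Polynomial in
theorem stmt_5 {X : Type*} [Fintype X] [DecidableEq X]
    (K : Set X) [DecidablePred (· ∈ K)] (hK : K.Nonempty)
    (M : Matrix X X ℂ) (hMnormal : M * Mᴴ = Mᴴ * M)
    (H : Matrix K K ℂ) (hHnormal : H * Hᴴ = Hᴴ * H)
    (d : ℕ) (θ : Fin d → ℂ) (hθ : Function.Injective θ)
    (E : Fin d → Matrix X X ℂ)
    (hEherm : ∀ i, (E i)ᴴ = E i) (hEidem : ∀ i, E i * E i = E i)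
    (hEorth : ∀ i i', i ≠ i' → E i * E i' = 0) (hEsum : ∑ i, E i = 1)
    (hMspec : M = ∑ i, θ i • E i)
    (r : ℕ) (ρ : Fin r → ℂ) (hρ : Function.Injective ρ)
    (F : Fin r → Matrix K K ℂ)
    (hFherm : ∀ j, (F j)ᴴ = F j) (hFidem : ∀ j, F j * F j = F j)
    (hForth : ∀ j j', j ≠ j' → F j * F j' = 0) (hFsum : ∑ j, F j = 1)
    (hHspec : H = ∑ j, ρ j • F j)
    (hcosp : IsHCospectral K M H)
    -- `b i j = dim { E_i v̂ : v ∈ im F_j }` and `b0 i = dim { u ∈ im E_i : u_K = 0 }`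
    (b : Fin d → Fin r → ℕ)
    (hb : ∀ i j, b i j = Module.finrank ℂ (Submodule.span ℂ
      ((fun v : K → ℂ => (E i).mulVec (extz K v)) ''
        (LinearMap.range (F j).mulVecLin : Set (K → ℂ)))))
    (b0 : Fin d → ℕ)
    (hb0 : ∀ i, b0 i = Module.finrank ℂ (Submodule.span ℂ
      {u : X → ℂ | u ∈ LinearMap.range (E i).mulVecLin ∧ restr K u = 0})) :
    M.charpoly =
      (∏ i, (Polynomial.X - Polynomial.C (θ i)) ^ (b0 i)) *
        ∏ j, ∏ i, (Polynomial.X - Polynomial.C (θ i)) ^ (b i j) :=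
  stmt_5_general K M H d θ hθ E hEherm hEorth hEsum hMspec r ρ hρ F hFherm hForth hFsum hHspec hcosp
    b hb b0 hb0
end

section
/- Let M ∈ ℂ^{X×X} and H ∈ ℂ^{K×K} be normal matrices with spectral decompositions M = Σ_i θ_i E_i and H = Σ_{j=1}^{|K|} ρ_j F_j, suppose K is H-cospectral in M, and suppose H has |K| distinct eigenvalues, with v_j a fixed eigenvector spanning im F_j. Define b_{i,j} = dim{ E_i v̂ : v ∈ im F_j } and P_j(t) = Π_i (t − θ_i)^{b_{i,j}}. Then for each 1 ≤ j ≤ |K|, P_j(t) equals the minimal polynomial of M relative to v̂_j, i.e., the monic polynomial p of smallest degree satisfying p(M) v̂_j = 0. -/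
open Matrix Set

variable {X : Type*}

/-- `p` is the minimal polynomial of `N` relative to `w`: the monic polynomial of smallest
degree with `p(N) w = 0`. -/
def IsRelMinpoly {X : Type*} [Fintype X] [DecidableEq X] (N : Matrix X X ℂ) (w : X → ℂ)
    (p : Polynomial ℂ) : Prop :=
  p.Monic ∧ (Polynomial.aeval N p).mulVec w = 0 ∧
    ∀ q : Polynomial ℂ, q.Monic → (Polynomial.aeval N q).mulVec w = 0 →
      p.natDegree ≤ q.natDegree

/-!
Since the `E i` are complete orthogonal idempotents, `q(M) = ∑ q(θ i) • E i`, so `q(M) w = 0`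
exactly when `q` vanishes at every `θ i` with `E i w ≠ 0`; with `θ` injective, the minimal
polynomial of `M` relative to `w` is therefore `∏_{E i w ≠ 0} (t - θ i)`. As `im F_j` is the line
spanned by `v j`, the subspace defining `b i j` is spanned by `E i v̂_j`, so `b i j` is `1` or `0`
according as `E i v̂_j` is nonzero or zero, and `P_j` is that product for `w = v̂_j`.
-/

open Polynomial

namespace CompleteOrthogonalIdempotents

variable {R A ι : Type*} [CommSemiring R] [Semiring A] [Algebra R A] [Fintype ι] {e : ι → A}

theorem mul_sum_smul (he : CompleteOrthogonalIdempotents e) (c : ι → R) (k : ι) :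
    e k * ∑ i, c i • e i = c k • e k := by
  classical
  simp [Finset.mul_sum, he.mul_eq]

theorem pow_sum_smul (he : CompleteOrthogonalIdempotents e) (θ : ι → R) (n : ℕ) :
    (∑ i, θ i • e i) ^ n = ∑ i, θ i ^ n • e i := by
  induction n with
  | zero => simp [he.complete]
  | succ n ih =>
    rw [pow_succ, ih, Finset.sum_mul]
    refine Finset.sum_congr rfl fun i _ => ?_
    rw [smul_mul_assoc, he.mul_sum_smul, smul_smul, pow_succ]

theorem aeval_sum_smul (he : CompleteOrthogonalIdempotents e) (θ : ι → R) (q : R[X]) :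
    aeval (∑ i, θ i • e i) q = ∑ i, q.eval (θ i) • e i := by
  induction q using Polynomial.induction_on' with
  | add p q hp hq => simp [hp, hq, add_smul, Finset.sum_add_distrib]
  | monomial n c =>
    simp [aeval_monomial, Algebra.algebraMap_eq_smul_one, he.pow_sum_smul, Finset.smul_sum,
      smul_smul]

end CompleteOrthogonalIdempotents

theorem finrank_span_image_span_singleton {K V W : Type*} [Field K] [AddCommGroup V]
    [Module K V] [AddCommGroup W] [Module K W] [DecidableEq W] (f : V →ₗ[K] W) (v : V) :
    Module.finrank K (Submodule.span K (f '' Submodule.span K {v})) =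
      if f v = 0 then 0 else 1 := by
  rw [Submodule.span_image, Submodule.span_eq, Submodule.map_span, Set.image_singleton]
  split_ifs with h
  · simp [h]
  · exact finrank_span_singleton h

noncomputable def extzLinearMap (K : Set X) [DecidablePred (· ∈ K)] :
    (K → ℂ) →ₗ[ℂ] (X → ℂ) where
  toFun := extz K
  map_add' u v := by funext x; by_cases h : x ∈ K <;> simp [extz, h]
  map_smul' c u := by funext x; by_cases h : x ∈ K <;> simp [extz, h]

section SpectralDecomposition

variable {R n ι : Type*} [Fintype n] [DecidableEq n] [Fintype ι]

theorem mulVec_aeval_sum_smul_eq_zero_iff [CommRing R] [NoZeroDivisors R]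
    {E : ι → Matrix n n R} (hE : CompleteOrthogonalIdempotents E) (θ : ι → R) (q : R[X])
    (w : n → R) :
    aeval (∑ i, θ i • E i) q *ᵥ w = 0 ↔ ∀ i, E i *ᵥ w ≠ 0 → q.eval (θ i) = 0 := by
  rw [hE.aeval_sum_smul]
  constructor
  · intro h i hi
    have hEi := congrArg (E i *ᵥ ·) h
    simp only [Matrix.mulVec_mulVec, hE.mul_sum_smul, Matrix.mulVec_zero,
      Matrix.smul_mulVec] at hEi
    exact (smul_eq_zero.mp hEi).resolve_right hi
  · intro h
    rw [Matrix.sum_mulVec]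
    refine Finset.sum_eq_zero fun i _ => ?_
    by_cases hi : E i *ᵥ w = 0
    · rw [Matrix.smul_mulVec, hi, smul_zero]
    · rw [h i hi, zero_smul, Matrix.zero_mulVec]

theorem isRelMinpoly_prod_X_sub_C {E : ι → Matrix n n ℂ} (hE : CompleteOrthogonalIdempotents E)
    {θ : ι → ℂ} (hθ : Function.Injective θ) (w : n → ℂ) :
    IsRelMinpoly (∑ i, θ i • E i) w (∏ i with E i *ᵥ w ≠ 0, (Polynomial.X - C (θ i))) := by
  refine ⟨monic_prod_of_monic _ _ fun i _ => monic_X_sub_C (θ i), ?_, fun q hq hqw => ?_⟩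
  · rw [mulVec_aeval_sum_smul_eq_zero_iff hE]
    intro i hi
    rw [eval_prod]
    exact Finset.prod_eq_zero (Finset.mem_filter.mpr ⟨Finset.mem_univ i, hi⟩) (by simp)
  · rw [mulVec_aeval_sum_smul_eq_zero_iff hE] at hqw
    rw [natDegree_prod_of_monic _ _ fun i _ => monic_X_sub_C (θ i)]
    simp only [natDegree_X_sub_C, Finset.sum_const, smul_eq_mul, mul_one]
    rw [← Finset.card_image_of_injective _ hθ]
    refine card_le_degree_of_subset_roots fun x hx => ?_
    obtain ⟨i, hi, rfl⟩ := Finset.mem_image.mp hx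
    exact (mem_roots hq.ne_zero).mpr (hqw i (Finset.mem_filter.mp hi).2)

end SpectralDecomposition

open Polynomial in
theorem stmt_6_general {X : Type*} [Fintype X] [DecidableEq X]
    (K : Set X) [DecidablePred (· ∈ K)]
    (M : Matrix X X ℂ)
    (d : ℕ) (θ : Fin d → ℂ) (hθ : Function.Injective θ)
    (E : Fin d → Matrix X X ℂ)
    (hEorth : ∀ i i', i ≠ i' → E i * E i' = 0) (hEsum : ∑ i, E i = 1)
    (hMspec : M = ∑ i, θ i • E i)
    (r : ℕ)
    (F : Fin r → Matrix K K ℂ)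
    -- `v j` is a fixed eigenvector spanning `im F_j`
    (v : Fin r → (K → ℂ))
    (hv : ∀ j, LinearMap.range (F j).mulVecLin = Submodule.span ℂ {v j})
    (b : Fin d → Fin r → ℕ)
    (hb : ∀ i j, b i j = Module.finrank ℂ (Submodule.span ℂ
      ((fun w : K → ℂ => (E i).mulVec (extz K w)) ''
        (LinearMap.range (F j).mulVecLin : Set (K → ℂ))))) :
    ∀ j, IsRelMinpoly M (extz K (v j))
      (∏ i, (Polynomial.X - Polynomial.C (θ i)) ^ (b i j)) := by
  intro j
  have hE : CompleteOrthogonalIdempotents E :=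
    CompleteOrthogonalIdempotents.iff_ortho_complete.mpr ⟨hEorth, hEsum⟩
  have hbj : ∀ i, b i j = if E i *ᵥ extz K (v j) = 0 then 0 else 1 := fun i => by
    rw [hb, hv]
    exact finrank_span_image_span_singleton ((E i).mulVecLin ∘ₗ extzLinearMap K) (v j)
  rw [hMspec]
  convert isRelMinpoly_prod_X_sub_C hE hθ (extz K (v j)) using 1
  rw [Finset.prod_filter]
  refine Finset.prod_congr rfl fun i _ => ?_
  rw [hbj]
  split_ifs <;> simp_all

open Polynomial in
theorem stmt_6 {X : Type*} [Fintype X] [DecidableEq X]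
    (K : Set X) [DecidablePred (· ∈ K)] (hK : K.Nonempty)
    (M : Matrix X X ℂ) (hMnormal : M * Mᴴ = Mᴴ * M)
    (H : Matrix K K ℂ) (hHnormal : H * Hᴴ = Hᴴ * H)
    (d : ℕ) (θ : Fin d → ℂ) (hθ : Function.Injective θ)
    (E : Fin d → Matrix X X ℂ)
    (hEherm : ∀ i, (E i)ᴴ = E i) (hEidem : ∀ i, E i * E i = E i)
    (hEorth : ∀ i i', i ≠ i' → E i * E i' = 0) (hEsum : ∑ i, E i = 1)
    (hMspec : M = ∑ i, θ i • E i)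
    -- `H` has `|K|` distinct eigenvalues
    (r : ℕ) (hr : r = Fintype.card K) (ρ : Fin r → ℂ) (hρ : Function.Injective ρ)
    (F : Fin r → Matrix K K ℂ)
    (hFherm : ∀ j, (F j)ᴴ = F j) (hFidem : ∀ j, F j * F j = F j)
    (hForth : ∀ j j', j ≠ j' → F j * F j' = 0) (hFsum : ∑ j, F j = 1)
    (hHspec : H = ∑ j, ρ j • F j)
    (hcosp : IsHCospectral K M H)
    -- `v j` is a fixed eigenvector spanning `im F_j`
    (v : Fin r → (K → ℂ)) (hvne : ∀ j, v j ≠ 0)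
    (hv : ∀ j, LinearMap.range (F j).mulVecLin = Submodule.span ℂ {v j})
    (b : Fin d → Fin r → ℕ)
    (hb : ∀ i j, b i j = Module.finrank ℂ (Submodule.span ℂ
      ((fun w : K → ℂ => (E i).mulVec (extz K w)) ''
        (LinearMap.range (F j).mulVecLin : Set (K → ℂ))))) :
    ∀ j, IsRelMinpoly M (extz K (v j))
      (∏ i, (Polynomial.X - Polynomial.C (θ i)) ^ (b i j)) :=
  stmt_6_general K M d θ hθ E hEorth hEsum hMspec r F v hv b hb
end

section
/- Let X = X_1 ∪ X_2 be a finite index set with K = X_1 ∩ X_2. Let M_1 and M_2 be Hermitian matrices in ℂ^{X×X} supported on X_1 and X_2 respectively (i.e., M_i has nonzero entries only in rows and columns indexed by X_i). Let H ∈ ℂ^{K×K} be a normal matrix. If K is H-cospectral in M_1 and K is H-cospectral in M_2, then K is H-cospectral in M = M_1 + M_2. -/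
open Matrix Set

variable {X : Type*}

/-!
Write `R` for the restriction to `K`, so that `R†` is extension by zero, and `E μ` for the
eigenspaces of `H`, which are mutually orthogonal because `H` is normal. Cospectrality of a
Hermitian `M` forces every walk `R Mᵃ R†` to preserve each `E μ`: expanding `R† u` in the
eigenbasis only involves vectors whose restriction lies in `E μ`. Since `M₁` and `M₂` only meet
through `K`, `M₁ M₂ = M₁ R† R M₂`, so the spaces `W μ` spanned by the `Mᵢᵃ R† (E μ)` are invariant
under both `Mᵢ`, are mapped by `R` into `E μ`, and are mutually orthogonal. Together with the
orthogonal complement of their sum, on which `R` vanishes, they split `ℂ^X` into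
`(M₁ + M₂)`-invariant pieces, and an orthonormal eigenbasis of `M₁ + M₂` adapted to this splitting
witnesses cospectrality.
-/

section InnerProductSpace

open Module Module.End LinearMap InnerProductSpace

variable {𝕜 E F : Type*} [RCLike 𝕜]
  [NormedAddCommGroup E] [InnerProductSpace 𝕜 E] [NormedAddCommGroup F] [InnerProductSpace 𝕜 F]

theorem Module.End.eigenspace_le_eigenspace_star [FiniteDimensional 𝕜 F] (H : Module.End 𝕜 F)
    [IsStarNormal H] (μ : 𝕜) : eigenspace H μ ≤ eigenspace (star H) (star μ) := by
  intro v hv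
  set N := H - μ • 1
  have hN : Commute (star N) N := by
    simp only [N, star_sub, star_smul, star_one]
    exact (((star_comm_self (x := H)).sub_right ((Commute.one_right _).smul_right μ)).sub_left
      ((Commute.one_left _).smul_left _))
  have hNv : N v = 0 := by simp [N, mem_eigenspace_iff.mp hv]
  have hNstar : star N v = 0 := by
    rw [← inner_self_eq_zero (𝕜 := 𝕜)]
    calc ⟪star N v, star N v⟫_𝕜 = ⟪(star N * N) v, v⟫_𝕜 := by
          rw [star_eq_adjoint, adjoint_inner_right, ← mul_apply, ← star_eq_adjoint, hN.eq]
      _ = 0 := by simp [hNv]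
  rw [mem_eigenspace_iff]
  simpa [N, sub_eq_zero] using hNstar

theorem Module.End.eigenspace_isOrtho_of_isStarNormal [FiniteDimensional 𝕜 F]
    (H : Module.End 𝕜 F) [IsStarNormal H] {μ ν : 𝕜} (hμν : μ ≠ ν) :
    eigenspace H μ ⟂ eigenspace H ν := by
  rw [Submodule.isOrtho_iff_inner_eq]
  intro u hu v hv
  have hHv : ⟪u, H v⟫_𝕜 = ν * ⟪u, v⟫_𝕜 := by rw [mem_eigenspace_iff.mp hv, inner_smul_right]
  have hHu : ⟪u, H v⟫_𝕜 = μ * ⟪u, v⟫_𝕜 := by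
    rw [← adjoint_inner_left, ← star_eq_adjoint,
      mem_eigenspace_iff.mp (H.eigenspace_le_eigenspace_star μ hu), inner_smul_left]
    simp
  have : (μ - ν) * ⟪u, v⟫_𝕜 = 0 := by linear_combination hHv - hHu
  exact (mul_eq_zero.mp this).resolve_left (sub_ne_zero.mpr hμν)

theorem LinearMap.IsSymmetric.exists_orthonormalBasis_eigenvectors_subordinate
    [FiniteDimensional 𝕜 E] {ι κ : Type*} [Fintype ι] [DecidableEq ι] [Fintype κ]
    {T : Module.End 𝕜 E} (hT : T.IsSymmetric) {V : ι → Submodule 𝕜 E}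
    (hV : OrthogonalFamily 𝕜 (fun i => V i) fun i => (V i).subtypeₗᵢ)
    (hsup : ⨆ i, V i = ⊤) (hinv : ∀ i, ∀ v ∈ V i, T v ∈ V i)
    (hκ : Fintype.card κ = finrank 𝕜 E) :
    ∃ b : OrthonormalBasis κ 𝕜 E, ∀ c, (∃ i, b c ∈ V i) ∧ ∃ t, b c ∈ eigenspace T t := by
  have hTV i := hT.restrict_invariant (hinv i)
  let e i := (hTV i).eigenvectorBasis rfl
  have hint : DirectSum.IsInternal V :=
    (DirectSum.isInternal_submodule_iff_iSupIndep_and_iSup_eq_top V).mpr ⟨hV.independent, hsup⟩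
  let B := hint.collectedOrthonormalBasis hV e
  have hB : ∀ p, B p = (e p.1 p.2 : E) := by
    intro p
    simp [B, DirectSum.IsInternal.collectedOrthonormalBasis,
      DirectSum.IsInternal.collectedBasis_coe]
  let σ : κ ≃ Σ i, Fin (finrank 𝕜 (V i)) :=
    Fintype.equivOfCardEq (by rw [hκ, finrank_eq_card_basis B.toBasis])
  refine ⟨B.reindex σ.symm, fun c => ⟨⟨(σ c).1, ?_⟩, (hTV _).eigenvalues rfl (σ c).2, ?_⟩⟩
  · simp [hB]
  · rw [B.reindex_apply, Equiv.symm_symm, mem_eigenspace_iff, hB]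
    have := congrArg Subtype.val ((hTV (σ c).1).apply_eigenvectorBasis rfl (σ c).2)
    simpa only [LinearMap.coe_restrict_apply, Submodule.coe_smul] using this

/-- `R` plays the role of the restriction to `K`. As `0` lies in every eigenspace, the last
condition says that `R (b c)` is zero or an eigenvector of `H`. -/
def IsCospectral (κ : Type*) [Fintype κ] (R : E →ₗ[𝕜] F) (H : Module.End 𝕜 F)
    (T : Module.End 𝕜 E) : Prop :=
  ∃ b : OrthonormalBasis κ 𝕜 E, ∀ c, (∃ t, b c ∈ eigenspace T t) ∧ ∃ μ, R (b c) ∈ eigenspace H μ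

variable {κ : Type*} [Fintype κ] {R : E →ₗ[𝕜] F} {H : Module.End 𝕜 F} {T : Module.End 𝕜 E}

theorem isCospectral_of_orthogonalFamily [FiniteDimensional 𝕜 E] {ι : Type*} [Finite ι]
    (hT : T.IsSymmetric) {V : ι → Submodule 𝕜 E}
    (hV : OrthogonalFamily 𝕜 (fun i => V i) fun i => (V i).subtypeₗᵢ)
    (hsup : ⨆ i, V i = ⊤) (hinv : ∀ i, ∀ v ∈ V i, T v ∈ V i)
    (hR : ∀ i, ∃ μ, (V i).map R ≤ eigenspace H μ) (hκ : Fintype.card κ = finrank 𝕜 E) :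
    IsCospectral κ R H T := by
  classical
  have := Fintype.ofFinite ι
  obtain ⟨b, hb⟩ := hT.exists_orthonormalBasis_eigenvectors_subordinate hV hsup hinv hκ
  refine ⟨b, fun c => ⟨(hb c).2, ?_⟩⟩
  obtain ⟨i, hi⟩ := (hb c).1
  obtain ⟨μ, hμ⟩ := hR i
  exact ⟨μ, hμ (Submodule.mem_map_of_mem hi)⟩

namespace IsCospectral

theorem card_eq (h : IsCospectral κ R H T) : Fintype.card κ = finrank 𝕜 E := by
  obtain ⟨b, -⟩ := h
  exact (finrank_eq_card_basis b.toBasis).symm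

theorem range_le_iSup_eigenspace (h : IsCospectral κ R H T) :
    LinearMap.range R ≤ ⨆ μ, eigenspace H μ := by
  obtain ⟨b, hb⟩ := h
  rw [range_eq_map, ← b.toBasis.span_eq, Submodule.map_span, Submodule.span_le]
  rintro _ ⟨_, ⟨c, rfl⟩, rfl⟩
  obtain ⟨μ, hμ⟩ := (hb c).2
  exact Submodule.mem_iSup_of_mem μ (by simpa using hμ)

/-- The span of the basis vectors whose restriction lies in `eigenspace H μ` is `T`-invariant,
is mapped by `R` into `eigenspace H μ`, and contains `R.adjoint (eigenspace H μ)`, because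
`⟪b c, R.adjoint u⟫ = ⟪R (b c), u⟫` vanishes for the other basis vectors. -/
theorem map_pow_le_eigenspace [FiniteDimensional 𝕜 E] [FiniteDimensional 𝕜 F] [IsStarNormal H]
    (h : IsCospectral κ R H T) (a : ℕ) (μ : 𝕜) :
    (eigenspace H μ).map (R ∘ₗ (T ^ a) ∘ₗ R.adjoint) ≤ eigenspace H μ := by
  obtain ⟨b, hb⟩ := h
  set W := Submodule.span 𝕜 (b '' {c | R (b c) ∈ eigenspace H μ})
  have hWT : ∀ v ∈ W, T v ∈ W := by
    suffices W ≤ W.comap T from fun v hv => this hv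
    refine Submodule.span_le.mpr ?_
    rintro _ ⟨c, hc, rfl⟩
    obtain ⟨t, ht⟩ := (hb c).1
    rw [SetLike.mem_coe, Submodule.mem_comap, mem_eigenspace_iff.mp ht]
    exact W.smul_mem t (Submodule.subset_span ⟨c, hc, rfl⟩)
  have hWR : W.map R ≤ eigenspace H μ := by
    rw [Submodule.map_span, Submodule.span_le]
    rintro _ ⟨_, ⟨c, hc, rfl⟩, rfl⟩
    exact hc
  have hJW : (eigenspace H μ).map R.adjoint ≤ W := by
    rintro _ ⟨u, hu, rfl⟩
    rw [← b.sum_repr' (R.adjoint u)]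
    refine W.sum_mem fun c _ => ?_
    by_cases hc : R (b c) ∈ eigenspace H μ
    · exact W.smul_mem _ (Submodule.subset_span ⟨c, hc, rfl⟩)
    · obtain ⟨ν, hν⟩ := (hb c).2
      have hμν : ν ≠ μ := by rintro rfl; exact hc hν
      rw [adjoint_inner_right,
        Submodule.isOrtho_iff_inner_eq.mp (H.eigenspace_isOrtho_of_isStarNormal hμν) _ hν _ hu,
        zero_smul]
      exact W.zero_mem
  rintro _ ⟨u, hu, rfl⟩
  exact hWR ⟨_, pow_apply_mem_of_forall_mem a hWT _ (hJW ⟨u, hu, rfl⟩), rfl⟩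

end IsCospectral

/-- The family `W`, completed by the orthogonal complement `Gᗮ` of the span `G` of its members,
decomposes `E` into `T`-invariant pieces; `R` kills `Gᗮ` because `R.adjoint` maps the range of `R`
into `G`. -/
theorem isCospectral_of_invariant_family [FiniteDimensional 𝕜 E] [FiniteDimensional 𝕜 F]
    (hT : T.IsSymmetric) {W : 𝕜 → Submodule 𝕜 E} (hWW : Pairwise fun μ ν => W μ ⟂ W ν)
    (hWT : ∀ μ, ∀ v ∈ W μ, T v ∈ W μ) (hWR : ∀ μ, (W μ).map R ≤ eigenspace H μ)
    (hRW : ∀ μ, (eigenspace H μ).map R.adjoint ≤ W μ)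
    (hR : LinearMap.range R ≤ ⨆ μ, eigenspace H μ) (hκ : Fintype.card κ = finrank 𝕜 E) :
    IsCospectral κ R H T := by
  classical
  let G := ⨆ μ : {μ // H.HasEigenvalue μ}, W μ
  have hWG (μ : {μ // H.HasEigenvalue μ}) : W μ ≤ G :=
    le_iSup (fun μ : {μ // H.HasEigenvalue μ} => W μ) μ
  have hGT : G ≤ G.comap T := iSup_le fun μ v hv => hWG μ (hWT μ v hv)
  have hRG : (⨆ μ, eigenspace H μ).map R.adjoint ≤ G := by
    rw [Submodule.map_iSup]
    refine iSup_le fun μ => ?_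
    by_cases hμ : H.HasEigenvalue μ
    · exact (hRW μ).trans (hWG ⟨μ, hμ⟩)
    · simp [not_not.mp (hasEigenvalue_iff.not.mp hμ)]
  have hGR : ∀ v ∈ Gᗮ, R v = 0 := by
    intro v hv
    have hRv : R.adjoint (R v) ∈ G := hRG ⟨R v, hR ⟨v, rfl⟩, rfl⟩
    rw [← inner_self_eq_zero (𝕜 := 𝕜), ← adjoint_inner_left]
    exact Submodule.inner_right_of_mem_orthogonal hRv hv
  have : Finite {μ // H.HasEigenvalue μ} := (finite_hasEigenvalue H).to_subtype
  refine isCospectral_of_orthogonalFamily hT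
    (V := fun o : Option {μ // H.HasEigenvalue μ} => o.elim Gᗮ fun μ => W μ) ?_ ?_ ?_ ?_ hκ
  · rw [orthogonalFamily_iff_pairwise]
    rintro (_ | μ) (_ | ν) hne
    · exact absurd rfl hne
    · exact (Submodule.isOrtho_orthogonal_left G).mono_right (hWG ν)
    · exact (Submodule.isOrtho_orthogonal_right G).mono_left (hWG μ)
    · exact hWW fun h => hne (congrArg some (Subtype.ext h))
  · rw [iSup_option]
    exact sup_comm G Gᗮ ▸ Submodule.sup_orthogonal_of_hasOrthogonalProjection
  · rintro (_ | μ) v hv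
    · intro w hw
      rw [← hT w v]
      exact hv _ (hGT hw)
    · exact hWT μ v hv
  · rintro (_ | μ)
    · refine ⟨0, ?_⟩
      rintro _ ⟨v, hv, rfl⟩
      rw [hGR v hv]
      exact Submodule.zero_mem _
    · exact ⟨μ, hWR μ⟩

section WalkSpace

variable [FiniteDimensional 𝕜 E] [FiniteDimensional 𝕜 F]

variable (R H) in
noncomputable def walkSpace (T₁ T₂ : Module.End 𝕜 E) (μ : 𝕜) : Submodule 𝕜 E :=
  ⨆ a : ℕ, ((eigenspace H μ).map ((T₁ ^ a) ∘ₗ R.adjoint) ⊔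
    (eigenspace H μ).map ((T₂ ^ a) ∘ₗ R.adjoint))

variable {T₁ T₂ : Module.End 𝕜 E} {μ : 𝕜}

theorem walkSpace_comm : walkSpace R H T₁ T₂ μ = walkSpace R H T₂ T₁ μ := by
  simp only [walkSpace, sup_comm]

theorem map_adjoint_le_walkSpace : (eigenspace H μ).map R.adjoint ≤ walkSpace R H T₁ T₂ μ :=
  le_of_eq_of_le (by simp [Module.End.one_eq_id]) ((le_iSup _ 0).trans' le_sup_left)

theorem map_walkSpace_le_eigenspace
    (h₁ : ∀ a, (eigenspace H μ).map (R ∘ₗ (T₁ ^ a) ∘ₗ R.adjoint) ≤ eigenspace H μ)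
    (h₂ : ∀ a, (eigenspace H μ).map (R ∘ₗ (T₂ ^ a) ∘ₗ R.adjoint) ≤ eigenspace H μ) :
    (walkSpace R H T₁ T₂ μ).map R ≤ eigenspace H μ := by
  rw [walkSpace, Submodule.map_iSup]
  refine iSup_le fun a => ?_
  rw [Submodule.map_sup, ← Submodule.map_comp, ← Submodule.map_comp]
  exact sup_le (h₁ a) (h₂ a)

/-- The only case needing the hypotheses: `T₁ (T₂ ^ (c + 1) (R.adjoint u))` equals
`T₁ (R.adjoint u')` with `u' = R (T₂ ^ (c + 1) (R.adjoint u))`, again in `eigenspace H μ`. -/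
theorem map_walkSpace_le_walkSpace (h₁₂ : T₁ ∘ₗ T₂ = T₁ ∘ₗ R.adjoint ∘ₗ R ∘ₗ T₂)
    (h₂ : ∀ a, (eigenspace H μ).map (R ∘ₗ (T₂ ^ a) ∘ₗ R.adjoint) ≤ eigenspace H μ) :
    (walkSpace R H T₁ T₂ μ).map T₁ ≤ walkSpace R H T₁ T₂ μ := by
  have hstep : (eigenspace H μ).map ((T₁ ^ 1) ∘ₗ R.adjoint) ≤ walkSpace R H T₁ T₂ μ :=
    (le_iSup _ 1).trans' le_sup_left
  conv_lhs => rw [walkSpace, Submodule.map_iSup]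
  refine iSup_le fun a => ?_
  rw [Submodule.map_sup, ← Submodule.map_comp, ← Submodule.map_comp]
  refine sup_le ?_ ?_
  · refine le_of_eq_of_le ?_ ((le_iSup _ (a + 1)).trans' le_sup_left)
    rw [pow_succ', Module.End.mul_eq_comp, LinearMap.comp_assoc]
  · cases a with
    | zero => simpa [Module.End.one_eq_id] using hstep
    | succ c =>
      have hfac : T₁ ∘ₗ (T₂ ^ (c + 1)) ∘ₗ R.adjoint
          = ((T₁ ^ 1) ∘ₗ R.adjoint) ∘ₗ (R ∘ₗ (T₂ ^ (c + 1)) ∘ₗ R.adjoint) := by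
        ext v
        simpa [pow_succ', Module.End.mul_apply] using
          LinearMap.congr_fun h₁₂ ((T₂ ^ c) (R.adjoint v))
      rw [hfac, Submodule.map_comp]
      exact (Submodule.map_mono (h₂ _)).trans hstep

theorem isOrtho_map_pow_comp_adjoint [IsStarNormal H] {T : Module.End 𝕜 E} (hT : T.IsSymmetric)
    {W : Submodule 𝕜 E} (hWT : ∀ v ∈ W, T v ∈ W) {ν : 𝕜} (hWR : W.map R ≤ eigenspace H ν)
    (hμν : μ ≠ ν) (a : ℕ) : (eigenspace H μ).map ((T ^ a) ∘ₗ R.adjoint) ⟂ W := by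
  rw [Submodule.isOrtho_iff_inner_eq]
  rintro _ ⟨u, hu, rfl⟩ w hw
  calc ⟪(T ^ a) (R.adjoint u), w⟫_𝕜 = ⟪u, R ((T ^ a) w)⟫_𝕜 := by
        rw [hT.pow a, adjoint_inner_left]
    _ = 0 := Submodule.isOrtho_iff_inner_eq.mp (H.eigenspace_isOrtho_of_isStarNormal hμν)
        _ hu _ (hWR ⟨_, pow_apply_mem_of_forall_mem a hWT w hw, rfl⟩)

theorem IsCospectral.add [IsStarNormal H] (hT₁ : T₁.IsSymmetric) (hT₂ : T₂.IsSymmetric)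
    (h₁ : IsCospectral κ R H T₁) (h₂ : IsCospectral κ R H T₂)
    (h₁₂ : T₁ ∘ₗ T₂ = T₁ ∘ₗ R.adjoint ∘ₗ R ∘ₗ T₂)
    (h₂₁ : T₂ ∘ₗ T₁ = T₂ ∘ₗ R.adjoint ∘ₗ R ∘ₗ T₁) :
    IsCospectral κ R H (T₁ + T₂) := by
  set W := walkSpace R H T₁ T₂
  have hW₁ μ : ∀ v ∈ W μ, T₁ v ∈ W μ := fun v hv =>
    map_walkSpace_le_walkSpace h₁₂ (h₂.map_pow_le_eigenspace · μ) ⟨v, hv, rfl⟩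
  have hW₂ μ : ∀ v ∈ W μ, T₂ v ∈ W μ := by
    simp only [W, walkSpace_comm (T₁ := T₁)]
    exact fun v hv => map_walkSpace_le_walkSpace h₂₁ (h₁.map_pow_le_eigenspace · μ) ⟨v, hv, rfl⟩
  have hWR μ : (W μ).map R ≤ eigenspace H μ :=
    map_walkSpace_le_eigenspace (h₁.map_pow_le_eigenspace · μ) (h₂.map_pow_le_eigenspace · μ)
  refine isCospectral_of_invariant_family (hT₁.add hT₂) (W := W) (fun μ ν hμν => ?_)
    (fun μ v hv => (W μ).add_mem (hW₁ μ v hv) (hW₂ μ v hv)) hWR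
    (fun _ => map_adjoint_le_walkSpace) h₁.range_le_iSup_eigenspace h₁.card_eq
  simp only [W, walkSpace, Submodule.isOrtho_iSup_left, Submodule.isOrtho_sup_left]
  exact fun a => ⟨isOrtho_map_pow_comp_adjoint hT₁ (hW₁ ν) (hWR ν) hμν a,
    isOrtho_map_pow_comp_adjoint hT₂ (hW₂ ν) (hWR ν) hμν a⟩

end WalkSpace

end InnerProductSpace

section Coordinates

open InnerProductSpace

variable [Fintype X] [DecidableEq X] (K : Set X)

theorem hermInner_eq_inner {n : Type*} [Fintype n] (v w : n → ℂ) :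
    hermInner v w = ⟪WithLp.toLp 2 v, WithLp.toLp 2 w⟫_ℂ := by
  simp [hermInner, EuclideanSpace.inner_toLp_toLp, dotProduct, mul_comm]

/-- Restriction to the coordinates in `K`, written as a matrix so that
`toEuclideanLin_conjTranspose_eq_adjoint` computes its adjoint. -/
noncomputable def restrictₗ : EuclideanSpace ℂ X →ₗ[ℂ] EuclideanSpace ℂ K :=
  toEuclideanLin ((1 : Matrix X X ℂ).submatrix (↑) id)

theorem restrictₗ_toLp (ψ : X → ℂ) :
    restrictₗ K (WithLp.toLp 2 ψ) = WithLp.toLp 2 (restr K ψ) := by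
  ext k
  simp [restrictₗ, restr, Matrix.toLpLin_apply, mulVec, dotProduct, one_apply]

theorem exists_mem_eigenspace_toEuclideanLin_iff {n : Type*} [Fintype n] [DecidableEq n]
    (H : Matrix n n ℂ) (v : n → ℂ) :
    (∃ μ, WithLp.toLp 2 v ∈ Module.End.eigenspace (toEuclideanLin H) μ) ↔
      v = 0 ∨ (v ≠ 0 ∧ ∃ μ : ℂ, H *ᵥ v = μ • v) := by
  simp only [Module.End.mem_eigenspace_iff, Matrix.toLpLin_apply, ← WithLp.toLp_smul,
    (WithLp.toLp_injective 2).eq_iff]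
  constructor
  · rintro ⟨μ, hμ⟩
    by_cases hv : v = 0
    · exact Or.inl hv
    · exact Or.inr ⟨hv, μ, hμ⟩
  · rintro (hv | ⟨-, μ, hμ⟩)
    · exact ⟨0, by simp [hv]⟩
    · exact ⟨μ, hμ⟩

theorem isHCospectral_iff [DecidablePred (· ∈ K)] (M : Matrix X X ℂ) (H : Matrix K K ℂ) :
    IsHCospectral K M H ↔ IsCospectral X (restrictₗ K) (toEuclideanLin H) (toEuclideanLin M) := by
  constructor
  · rintro ⟨ψ, horth, heig, hres⟩
    have hON : Orthonormal ℂ fun a => WithLp.toLp 2 (ψ a) :=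
      orthonormal_iff_ite.mpr fun a b => (hermInner_eq_inner _ _).symm.trans (horth a b)
    refine ⟨OrthonormalBasis.mk hON
      (hON.linearIndependent.span_eq_top_of_card_eq_finrank' (by simp)).ge, fun c => ⟨?_, ?_⟩⟩
    · obtain ⟨t, ht⟩ := heig c
      refine ⟨t, ?_⟩
      simpa [Module.End.mem_eigenspace_iff, Matrix.toLpLin_apply] using
        congrArg (WithLp.toLp 2) ht
    · simpa [restrictₗ_toLp] using (exists_mem_eigenspace_toEuclideanLin_iff H _).mpr (hres c)
  · rintro ⟨b, hb⟩
    refine ⟨fun a => (b a).ofLp, fun a c => ?_, fun c => ?_, fun c => ?_⟩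
    · simpa [hermInner_eq_inner] using orthonormal_iff_ite.mp b.orthonormal a c
    · obtain ⟨t, ht⟩ := (hb c).1
      exact ⟨t, congrArg WithLp.ofLp (Module.End.mem_eigenspace_iff.mp ht)⟩
    · rw [← exists_mem_eigenspace_toEuclideanLin_iff, ← restrictₗ_toLp]
      simpa using (hb c).2

theorem toEuclideanLin_comp_factors_through_restrictₗ [DecidablePred (· ∈ K)]
    {A B : Matrix X X ℂ} {X₁ X₂ : Set X} (hA : ∀ x z, z ∉ X₁ → A x z = 0)
    (hB : ∀ z y, z ∉ X₂ → B z y = 0) (hK : X₁ ∩ X₂ ⊆ K) :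
    toEuclideanLin A ∘ₗ toEuclideanLin B =
      toEuclideanLin A ∘ₗ (restrictₗ K).adjoint ∘ₗ restrictₗ K ∘ₗ toEuclideanLin B := by
  have hAB : A * B = A.submatrix id ((↑) : K → X) * B.submatrix (↑) id := by
    ext x y
    have hout : ∀ z ∉ K.toFinset, A x z * B z y = 0 := fun z hz => by
      by_cases h₁ : z ∈ X₁
      · rw [hB z y fun h₂ => by simp_all [hK ⟨h₁, h₂⟩], mul_zero]
      · rw [hA x z h₁, zero_mul]
    rw [mul_apply, ← Finset.sum_subset (Finset.subset_univ _) fun z _ => hout z,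
      ← Finset.sum_set_coe]
    rfl
  rw [restrictₗ, ← toEuclideanLin_conjTranspose_eq_adjoint, ← toLpLin_mul, ← toLpLin_mul,
    ← toLpLin_mul, ← toLpLin_mul, conjTranspose_submatrix, conjTranspose_one, ← Matrix.mul_assoc,
    hAB]
  congr 2
  · exact (mul_submatrix_one (Equiv.refl X) _ A).symm
  · exact (one_submatrix_mul _ (Equiv.refl X) B).symm

theorem isStarNormal_toEuclideanLin {n : Type*} [Fintype n] [DecidableEq n] {H : Matrix n n ℂ}
    (hH : H * Hᴴ = Hᴴ * H) : IsStarNormal (toEuclideanLin H) := by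
  rw [isStarNormal_iff, LinearMap.star_eq_adjoint, ← toEuclideanLin_conjTranspose_eq_adjoint,
    Commute, SemiconjBy, Module.End.mul_eq_comp, Module.End.mul_eq_comp, ← toLpLin_mul,
    ← toLpLin_mul, hH]

end Coordinates

theorem stmt_8_general {X : Type*} [Fintype X] [DecidableEq X]
    (X₁ X₂ : Set X)
    (K : Set X) [DecidablePred (· ∈ K)] (hK : K = X₁ ∩ X₂)
    (M₁ M₂ : Matrix X X ℂ)
    (hM₁herm : M₁ᴴ = M₁) (hM₂herm : M₂ᴴ = M₂)
    -- `M₁` is supported on `X₁`, `M₂` is supported on `X₂`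
    (hsupp₁ : ∀ x y, (x ∉ X₁ ∨ y ∉ X₁) → M₁ x y = 0)
    (hsupp₂ : ∀ x y, (x ∉ X₂ ∨ y ∉ X₂) → M₂ x y = 0)
    (H : Matrix K K ℂ) (hHnormal : H * Hᴴ = Hᴴ * H)
    (hcosp₁ : IsHCospectral K M₁ H) (hcosp₂ : IsHCospectral K M₂ H) :
    IsHCospectral K (M₁ + M₂) H := by
  have := isStarNormal_toEuclideanLin hHnormal
  rw [isHCospectral_iff] at hcosp₁ hcosp₂ ⊢
  rw [map_add]
  refine hcosp₁.add (isSymmetric_toEuclideanLin_iff.mpr hM₁herm)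
    (isSymmetric_toEuclideanLin_iff.mpr hM₂herm) hcosp₂ ?_ ?_
  · exact toEuclideanLin_comp_factors_through_restrictₗ K (fun x z hz => hsupp₁ x z (Or.inr hz))
      (fun z y hz => hsupp₂ z y (Or.inl hz)) hK.ge
  · exact toEuclideanLin_comp_factors_through_restrictₗ K (fun x z hz => hsupp₂ x z (Or.inr hz))
      (fun z y hz => hsupp₁ z y (Or.inl hz)) (by rw [hK, Set.inter_comm])

theorem stmt_8 {X : Type*} [Fintype X] [DecidableEq X]
    (X₁ X₂ : Set X) (hcover : X₁ ∪ X₂ = Set.univ)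
    (K : Set X) [DecidablePred (· ∈ K)] (hK : K = X₁ ∩ X₂)
    (M₁ M₂ : Matrix X X ℂ)
    (hM₁herm : M₁ᴴ = M₁) (hM₂herm : M₂ᴴ = M₂)
    -- `M₁` is supported on `X₁`, `M₂` is supported on `X₂`
    (hsupp₁ : ∀ x y, (x ∉ X₁ ∨ y ∉ X₁) → M₁ x y = 0)
    (hsupp₂ : ∀ x y, (x ∉ X₂ ∨ y ∉ X₂) → M₂ x y = 0)
    (H : Matrix K K ℂ) (hHnormal : H * Hᴴ = Hᴴ * H)
    (hcosp₁ : IsHCospectral K M₁ H) (hcosp₂ : IsHCospectral K M₂ H) :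
    IsHCospectral K (M₁ + M₂) H :=
  stmt_8_general X₁ X₂ K hK M₁ M₂ hM₁herm hM₂herm hsupp₁ hsupp₂ H hHnormal hcosp₁ hcosp₂
end

section
/- Let k ≥ 1 and m be integers, and let M be the (2k+2)×(2k+2) adjacency matrix of the graph S_{k,m}: vertices 0, 1, …, 2k+1, with M_{i,i+1} = M_{i+1,i} = 1 for 0 ≤ i ≤ 2k, M_{k,k} = m, and all other entries 0. Let u = 0 and v = 2k+1. Then for all integers j ≥ 0: (M^j)_{u,u} − (M^j)_{v,v} = m·(M^j)_{u,v}. -/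
/-!
Let `J` be the permutation matrix of the reflection `i ↦ 2k+1-i` and `Λ` the diagonal matrix
with entry `m` at the vertices `k+1, …, 2k+1` of the far half of the path. The reflection moves
the loop from `k` to `k+1`, and subtracting `m Λ` corrects for this: `Z = J - m Λ` commutes with
the adjacency matrix `M`, hence with every power `M ^ j`. Comparing the `(u, v)` entries of
`M ^ j * Z` and `Z * M ^ j` gives `(M^j)_{uu} - m (M^j)_{uv} = (M^j)_{vv}`.
-/

open Matrix

namespace Matrix

variable {R : Type*} [Ring R] {n : ℕ}

def reflectionTwist (c : Fin n → R) : Matrix (Fin n) (Fin n) R :=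
  Fin.revPerm.permMatrix R - diagonal c

theorem mul_reflectionTwist_apply (A : Matrix (Fin n) (Fin n) R) (c : Fin n → R)
    (i j : Fin n) : (A * reflectionTwist c) i j = A i j.rev - A i j * c j := by
  rw [reflectionTwist, mul_sub, PEquiv.mul_toMatrix_toPEquiv, Fin.revPerm_symm, sub_apply,
    mul_diagonal, submatrix_apply, id, Fin.revPerm_apply]

theorem reflectionTwist_mul_apply (A : Matrix (Fin n) (Fin n) R) (c : Fin n → R)
    (i j : Fin n) : (reflectionTwist c * A) i j = A i.rev j - c i * A i j := by
  rw [reflectionTwist, sub_mul, PEquiv.toMatrix_toPEquiv_mul, sub_apply,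
    diagonal_mul, submatrix_apply, id, Fin.revPerm_apply]

end Matrix

/-- The adjacency matrix of `S_{k,m}`. -/
def pathWithLoop (k : ℕ) (m : ℝ) : Matrix (Fin (2 * k + 2)) (Fin (2 * k + 2)) ℝ :=
  of fun i j => (if (i : ℕ) + 1 = (j : ℕ) ∨ (j : ℕ) + 1 = (i : ℕ) then 1 else 0) +
    (if (i : ℕ) = k ∧ (j : ℕ) = k then m else 0)

theorem commute_pathWithLoop_reflectionTwist (k : ℕ) (m : ℝ) :
    Commute (pathWithLoop k m) (reflectionTwist fun i => if k < (i : ℕ) then m else 0) := by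
  ext i j
  rw [mul_reflectionTwist_apply, reflectionTwist_mul_apply]
  simp only [pathWithLoop, of_apply, Fin.val_rev]
  split_ifs <;> first | omega | ring

theorem stmt_12_general (k : ℕ) (m : ℤ)
    (M : Matrix (Fin (2 * k + 2)) (Fin (2 * k + 2)) ℝ)
    -- `M` is the adjacency matrix of `S_{k,m}`: a path on vertices `0,…,2k+1`
    -- with a loop of weight `m` at vertex `k`
    (hM : ∀ i j : Fin (2 * k + 2), M i j =
      (if (i : ℕ) + 1 = (j : ℕ) ∨ (j : ℕ) + 1 = (i : ℕ) then 1 else 0) +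
      (if (i : ℕ) = k ∧ (j : ℕ) = k then (m : ℝ) else 0))
    (u v : Fin (2 * k + 2)) (hu : (u : ℕ) = 0) (hv : (v : ℕ) = 2 * k + 1) :
    ∀ j : ℕ, (M ^ j) u u - (M ^ j) v v = (m : ℝ) * (M ^ j) u v := by
  obtain rfl : M = pathWithLoop k m := Matrix.ext hM
  intro j
  have hcomm := congrFun₂ ((commute_pathWithLoop_reflectionTwist k m).pow_left j).eq u v
  have hvu : v.rev = u := Fin.ext (by rw [Fin.val_rev]; omega)
  have huv : u.rev = v := Fin.ext (by rw [Fin.val_rev]; omega)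
  rw [mul_reflectionTwist_apply, reflectionTwist_mul_apply, hvu, huv,
    if_pos (by omega : k < (v : ℕ)), if_neg (by omega : ¬k < (u : ℕ))] at hcomm
  linarith

theorem stmt_12 (k : ℕ) (hk : 1 ≤ k) (m : ℤ)
    (M : Matrix (Fin (2 * k + 2)) (Fin (2 * k + 2)) ℝ)
    -- `M` is the adjacency matrix of `S_{k,m}`: a path on vertices `0,…,2k+1`
    -- with a loop of weight `m` at vertex `k`
    (hM : ∀ i j : Fin (2 * k + 2), M i j =
      (if (i : ℕ) + 1 = (j : ℕ) ∨ (j : ℕ) + 1 = (i : ℕ) then 1 else 0) +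
      (if (i : ℕ) = k ∧ (j : ℕ) = k then (m : ℝ) else 0))
    (u v : Fin (2 * k + 2)) (hu : (u : ℕ) = 0) (hv : (v : ℕ) = 2 * k + 1) :
    ∀ j : ℕ, (M ^ j) u u - (M ^ j) v v = (m : ℝ) * (M ^ j) u v :=
  stmt_12_general k m M hM u v hu hv
end
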